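/- arXiv:1902.10530 — 8 statements merged into one kernel-verified Lean document; each statement's English description precedes it below -/
import Mathlib

section
/- For every integer n > 2 the missing mass M_n is sub-Gaussian on the left tail with variance factor v_n⁻ := 2·E[K_{n+2,2}]/((n+2)(n+1)): for every λ ≤ 0, log E[ e^{λ(M_n − E[M_n])} ] ≤ λ² v_n⁻ / 2. -/
open MeasureTheory ProbabilityTheory

lemma exp_quad_bound_aux {x : ℝ} (hx : x ≤ 0) : Real.exp x ≤ 1 + x + x ^ 2 / 2 := by
  set f : ℝ → ℝ := fun y => 1 + y + y ^ 2 / 2 - Real.exp y with hf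
  have hderiv : ∀ y : ℝ, HasDerivAt f (1 + y - Real.exp y) y := by
    intro y
    have h1 : HasDerivAt (fun y : ℝ => 1 + y + y ^ 2 / 2) (1 + y) y := by
      have := (((hasDerivAt_id y).const_add (1 : ℝ)).add ((hasDerivAt_pow 2 y).div_const 2))
      refine this.congr_deriv ?_
      push_cast
      ring
    exact h1.sub (Real.hasDerivAt_exp y)
  have hanti : Antitone f :=
    antitone_of_deriv_nonpos (fun y => (hderiv y).differentiableAt)
      (fun y => by rw [(hderiv y).deriv]; nlinarith [Real.add_one_le_exp y])
  have h0 : f 0 = 0 := by simp [hf]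
  have hfx := hanti hx
  rw [h0] at hfx
  simp only [hf] at hfx
  linarith

lemma mgf_term_bound_aux {lam pp qq : ℝ} (hlam : lam ≤ 0) (hpp : 0 ≤ pp) (hq0 : 0 ≤ qq) :
    1 + (Real.exp (lam * pp) - 1) * qq ≤
      Real.exp (lam * (pp * qq) + lam ^ 2 * (pp ^ 2 * qq) / 2) := by
  have hx : lam * pp ≤ 0 := mul_nonpos_of_nonpos_of_nonneg hlam hpp
  have h1 : Real.exp (lam * pp) - 1 ≤ lam * pp + (lam * pp) ^ 2 / 2 := by
    have := exp_quad_bound_aux hx; linarith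
  have h2 : 1 + (Real.exp (lam * pp) - 1) * qq ≤
      1 + (lam * pp + (lam * pp) ^ 2 / 2) * qq := by nlinarith
  refine h2.trans ?_
  have h3 := Real.add_one_le_exp ((lam * pp + (lam * pp) ^ 2 / 2) * qq)
  have h4 : (lam * pp + (lam * pp) ^ 2 / 2) * qq =
      lam * (pp * qq) + lam ^ 2 * (pp ^ 2 * qq) / 2 := by ring
  rw [h4] at h3
  linarith

/-- In the Bernoulli product model (independent counts
`X_{n,j} ~ Binomial(n, p_j)`), for `n > 2` the missing mass
`M_n = Σ_j p_j 1{X_{n,j}=0}` is sub-Gaussian on the left tail with variance factor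
`v_n⁻ = 2 E[K_{n+2,2}]/((n+2)(n+1))`: for every `λ ≤ 0`,
`log E[exp(λ(M_n - E[M_n]))] ≤ λ² v_n⁻ / 2`. -/
theorem missing_mass_subGaussian_left_tail
    {Ω : Type*} [MeasurableSpace Ω] (P : Measure Ω) [IsProbabilityMeasure P]
    (p : ℕ → ℝ) (hp : ∀ j, p j ∈ Set.Icc (0 : ℝ) 1) (hsum : Summable p)
    (n : ℕ) (hn : 2 < n)
    (X : ℕ → Ω → ℕ) (hXmeas : ∀ j, Measurable (X j))
    (hindep : iIndepFun X P)
    (hbin : ∀ j k, P {ω | X j ω = k} =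
      ENNReal.ofReal ((n.choose k : ℝ) * p j ^ k * (1 - p j) ^ (n - k)))
    (M : Ω → ℝ) (hM : ∀ ω, M ω = ∑' j, if X j ω = 0 then p j else 0)
    (EM : ℝ) (hEM : EM = ∑' j, p j * (1 - p j) ^ n)
    (EK : ℝ) (hEK : EK = ∑' j, (((n + 2).choose 2 : ℕ) : ℝ) * p j ^ 2 * (1 - p j) ^ n)
    (v : ℝ) (hv : v = 2 * EK / (((n : ℝ) + 2) * ((n : ℝ) + 1))) :
    ∀ lam : ℝ, lam ≤ 0 →
      Real.log (∫ ω, Real.exp (lam * (M ω - EM)) ∂P) ≤ lam ^ 2 * v / 2 := by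
  intro lam hlam
  have hp0 : ∀ j, 0 ≤ p j := fun j => (hp j).1
  have hp1 : ∀ j, p j ≤ 1 := fun j => (hp j).2
  have hq0 : ∀ j, 0 ≤ (1 - p j) ^ n := fun j => pow_nonneg (by linarith [hp1 j]) n
  have hq1 : ∀ j, (1 - p j) ^ n ≤ 1 := fun j =>
    pow_le_one₀ (by linarith [hp1 j]) (by linarith [hp0 j])
  set Y : ℕ → Ω → ℝ := fun j ω => if X j ω = 0 then p j else 0 with hY
  have hY0 : ∀ j ω, 0 ≤ Y j ω := by
    intro j ω; by_cases h : X j ω = 0 <;> simp [hY, h, hp0 j]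
  have hYle : ∀ j ω, Y j ω ≤ p j := by
    intro j ω; by_cases h : X j ω = 0 <;> simp [hY, h, hp0 j]
  have hYmeas : ∀ j, Measurable (Y j) := fun j =>
    (measurable_from_top (f := fun k : ℕ => if k = 0 then p j else 0)).comp (hXmeas j)
  have hYindep : iIndepFun Y P :=
    hindep.comp (fun j k => if k = 0 then p j else 0) (fun j => measurable_from_top)
  have hAmeas : ∀ j, MeasurableSet (X j ⁻¹' {0}) := fun j =>
    (hXmeas j) (measurableSet_singleton 0)
  have hPA : ∀ j, P (X j ⁻¹' {0}) = ENNReal.ofReal ((1 - p j) ^ n) := by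
    intro j
    have h := hbin j 0
    simp at h
    exact h
  have hfun : ∀ j, (fun ω => Real.exp (lam * Y j ω)) =
      fun ω => Set.indicator (X j ⁻¹' {0}) (fun _ => Real.exp (lam * p j) - 1) ω + 1 := by
    intro j
    funext ω
    by_cases h : X j ω = 0
    · simp [hY, h, Set.indicator_of_mem, Set.mem_preimage]
    · simp [hY, h]
  have hint : ∀ j, Integrable (fun ω => Real.exp (lam * Y j ω)) P := by
    intro j
    rw [hfun j]
    exact ((integrable_const _).indicator (hAmeas j)).add (integrable_const 1)
  have hmgf : ∀ j, mgf (Y j) P lam = 1 + (Real.exp (lam * p j) - 1) * (1 - p j) ^ n := by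
    intro j
    have : mgf (Y j) P lam = ∫ ω, Real.exp (lam * Y j ω) ∂P := rfl
    rw [this, hfun j,
      integral_add ((integrable_const _).indicator (hAmeas j)) (integrable_const 1),
      integral_indicator_const _ (hAmeas j), integral_const]
    simp only [measureReal_def, hPA j, smul_eq_mul, measure_univ, ENNReal.toReal_one, one_mul,
      ENNReal.toReal_ofReal (hq0 j)]
    ring
  have hmgf_le : ∀ j, mgf (Y j) P lam ≤
      Real.exp (lam * (p j * (1 - p j) ^ n) + lam ^ 2 * (p j ^ 2 * (1 - p j) ^ n) / 2) := by
    intro j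
    rw [hmgf j]
    exact mgf_term_bound_aux hlam (hp0 j) (hq0 j)
  have hsum_pq : Summable (fun j => p j * (1 - p j) ^ n) :=
    Summable.of_nonneg_of_le (fun j => mul_nonneg (hp0 j) (hq0 j))
      (fun j => mul_le_of_le_one_right (hp0 j) (hq1 j)) hsum
  have hsum_p2q : Summable (fun j => p j ^ 2 * (1 - p j) ^ n) :=
    Summable.of_nonneg_of_le (fun j => mul_nonneg (sq_nonneg _) (hq0 j))
      (fun j => by nlinarith [hp0 j, hp1 j, hq0 j, hq1 j]) hsum
  have hsumY : ∀ ω, Summable (fun j => Y j ω) := fun ω =>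
    Summable.of_nonneg_of_le (fun j => hY0 j ω) (fun j => hYle j ω) hsum
  have hchoose : (((n + 2).choose 2 : ℕ) : ℝ) * 2 = ((n : ℝ) + 2) * ((n : ℝ) + 1) := by
    have h2 : (n + 2).choose 2 * 2 = (n + 2) * (n + 1) := by
      rw [Nat.choose_two_right]
      have h3 : n + 2 - 1 = n + 1 := by omega
      rw [h3, Nat.div_mul_cancel]
      have := (Nat.even_mul_succ_self (n + 1)).two_dvd
      rwa [Nat.mul_comm] at this
    have := congrArg (fun m : ℕ => (m : ℝ)) h2
    push_cast at this
    linarith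
  have hvs : v = ∑' j, p j ^ 2 * (1 - p j) ^ n := by
    have hEK' : EK = (((n + 2).choose 2 : ℕ) : ℝ) * ∑' j, p j ^ 2 * (1 - p j) ^ n := by
      rw [hEK, ← tsum_mul_left]
      congr 1; funext j; ring
    rw [hv, hEK', ← hchoose]
    have hpos : (((n + 2).choose 2 : ℕ) : ℝ) ≠ 0 := by
      have : 0 < (n + 2).choose 2 := Nat.choose_pos (by omega)
      positivity
    field_simp
  have hv0 : 0 ≤ v := by
    rw [hvs]
    exact tsum_nonneg fun j => mul_nonneg (sq_nonneg _) (hq0 j)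
  have key : ∀ F : Finset ℕ,
      (∫ ω, Real.exp (lam * (M ω - EM)) ∂P) ≤
        Real.exp (lam * ((∑ j ∈ F, p j * (1 - p j) ^ n) - EM) + lam ^ 2 * v / 2) := by
    intro F
    have hgint : Integrable
        (fun ω => Real.exp (lam * ((∑ j ∈ F, Y j) ω)) * Real.exp (-(lam * EM))) P :=
      (hYindep.integrable_exp_mul_sum hYmeas (fun j _ => hint j)).mul_const _
    have hmono : ∫ ω, Real.exp (lam * (M ω - EM)) ∂P ≤
        ∫ ω, Real.exp (lam * ((∑ j ∈ F, Y j) ω)) * Real.exp (-(lam * EM)) ∂P := by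
      refine integral_mono_of_nonneg (Filter.Eventually.of_forall fun ω => (Real.exp_pos _).le)
        hgint (Filter.Eventually.of_forall fun ω => ?_)
      dsimp only
      rw [← Real.exp_add]
      apply Real.exp_le_exp.mpr
      have hSM : (∑ j ∈ F, Y j) ω ≤ M ω := by
        rw [hM ω, Finset.sum_apply]
        exact Summable.sum_le_tsum F (fun j _ => hY0 j ω) (hsumY ω)
      nlinarith [mul_le_mul_of_nonpos_left hSM hlam]
    have hprod : ∫ ω, Real.exp (lam * ((∑ j ∈ F, Y j) ω)) * Real.exp (-(lam * EM)) ∂P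
        = (∏ j ∈ F, mgf (Y j) P lam) * Real.exp (-(lam * EM)) := by
      rw [integral_mul_const]
      have h0 : ∫ ω, Real.exp (lam * ((∑ j ∈ F, Y j) ω)) ∂P = mgf (∑ j ∈ F, Y j) P lam := rfl
      rw [h0, hYindep.mgf_sum hYmeas F]
    have hprodle : (∏ j ∈ F, mgf (Y j) P lam) ≤
        ∏ j ∈ F, Real.exp (lam * (p j * (1 - p j) ^ n) +
          lam ^ 2 * (p j ^ 2 * (1 - p j) ^ n) / 2) :=
      Finset.prod_le_prod (fun j _ => mgf_nonneg) (fun j _ => hmgf_le j)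
    calc ∫ ω, Real.exp (lam * (M ω - EM)) ∂P
        ≤ ∫ ω, Real.exp (lam * ((∑ j ∈ F, Y j) ω)) * Real.exp (-(lam * EM)) ∂P := hmono
      _ = (∏ j ∈ F, mgf (Y j) P lam) * Real.exp (-(lam * EM)) := hprod
      _ ≤ (∏ j ∈ F, Real.exp (lam * (p j * (1 - p j) ^ n) +
            lam ^ 2 * (p j ^ 2 * (1 - p j) ^ n) / 2)) * Real.exp (-(lam * EM)) :=
          mul_le_mul_of_nonneg_right hprodle (Real.exp_pos _).le
      _ = Real.exp ((∑ j ∈ F, (lam * (p j * (1 - p j) ^ n) +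
            lam ^ 2 * (p j ^ 2 * (1 - p j) ^ n) / 2)) + -(lam * EM)) := by
          rw [← Real.exp_sum, ← Real.exp_add]
      _ ≤ Real.exp (lam * ((∑ j ∈ F, p j * (1 - p j) ^ n) - EM) + lam ^ 2 * v / 2) := by
          apply Real.exp_le_exp.mpr
          rw [Finset.sum_add_distrib]
          have h1 : ∑ j ∈ F, lam * (p j * (1 - p j) ^ n)
              = lam * ∑ j ∈ F, p j * (1 - p j) ^ n := by rw [Finset.mul_sum]
          have h2 : ∑ j ∈ F, lam ^ 2 * (p j ^ 2 * (1 - p j) ^ n) / 2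
              = lam ^ 2 / 2 * ∑ j ∈ F, p j ^ 2 * (1 - p j) ^ n := by
            rw [Finset.mul_sum]
            exact Finset.sum_congr rfl fun j _ => by ring
          have h3 : ∑ j ∈ F, p j ^ 2 * (1 - p j) ^ n ≤ v := by
            rw [hvs]
            exact Summable.sum_le_tsum F (fun j _ => mul_nonneg (sq_nonneg _) (hq0 j)) hsum_p2q
          nlinarith [sq_nonneg lam]
  have h1 : Filter.Tendsto (fun F : Finset ℕ => ∑ j ∈ F, p j * (1 - p j) ^ n)
      Filter.atTop (nhds EM) := by
    rw [hEM]; exact hsum_pq.hasSum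
  have h2 : Filter.Tendsto (fun F : Finset ℕ =>
      Real.exp (lam * ((∑ j ∈ F, p j * (1 - p j) ^ n) - EM) + lam ^ 2 * v / 2))
      Filter.atTop (nhds (Real.exp (lam * (EM - EM) + lam ^ 2 * v / 2))) :=
    (Real.continuous_exp.tendsto _).comp
      (((h1.sub_const EM).const_mul lam).add_const (lam ^ 2 * v / 2))
  have hle : ∫ ω, Real.exp (lam * (M ω - EM)) ∂P ≤ Real.exp (lam ^ 2 * v / 2) := by
    have := ge_of_tendsto' h2 key
    simpa using this
  have hI0 : 0 ≤ ∫ ω, Real.exp (lam * (M ω - EM)) ∂P :=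
    integral_nonneg fun ω => (Real.exp_pos _).le
  rcases eq_or_lt_of_le hI0 with h | h
  · rw [← h, Real.log_zero]
    nlinarith [sq_nonneg lam]
  · rw [Real.log_le_iff_le_exp h]
    exact hle
end

section
/- For every integer n > 2 the missing mass M_n is sub-Gamma on the right tail with variance factor v_n⁺ := 2·E[K_n]/(n² − 2n) and scale parameter 1/n: for every λ with 0 ≤ λ < n, log E[ e^{λ(M_n − E[M_n])} ] ≤ λ² v_n⁺ / (2(1 − λ/n)). -/
open MeasureTheory ProbabilityTheory

private lemma aux_exp_tsum (x : ℝ) : Real.exp x = ∑' k : ℕ, x ^ k / (Nat.factorial k) := by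
  rw [Real.exp_eq_exp_ℝ, NormedSpace.exp_eq_tsum_div]

private lemma aux_pow_div_factorial_le {x : ℝ} (hx : 0 ≤ x) {k : ℕ} (hk : 1 ≤ k) :
    x ^ k / (Nat.factorial k) ≤ Real.exp x - 1 := by
  have h := Real.sum_le_exp_of_nonneg hx (k + 1)
  have hsub : ({0, k} : Finset ℕ) ⊆ Finset.range (k + 1) := by
    intro i hi
    simp only [Finset.mem_insert, Finset.mem_singleton] at hi
    rcases hi with rfl | rfl <;> simp [Nat.lt_succ_iff]
  have hpair : ∑ i ∈ ({0, k} : Finset ℕ), x ^ i / (Nat.factorial i)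
      ≤ ∑ i ∈ Finset.range (k + 1), x ^ i / (Nat.factorial i) :=
    Finset.sum_le_sum_of_subset_of_nonneg hsub fun i _ _ => by positivity
  rw [Finset.sum_pair (by omega : (0:ℕ) ≠ k)] at hpair
  simp only [pow_zero, Nat.factorial_zero, Nat.cast_one, div_one] at hpair
  linarith

private lemma aux_exp_tail_le {x t : ℝ} (hx : 0 ≤ x) (ht0 : 0 ≤ t) (ht1 : t < 1) :
    Real.exp (t * x) - 1 - t * x ≤ (Real.exp x - 1) * (t ^ 2 / (1 - t)) := by
  have hsumm : Summable (fun k : ℕ => (t * x) ^ k / (Nat.factorial k)) :=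
    Real.summable_pow_div_factorial _
  have hLHS : Real.exp (t * x) - 1 - t * x
      = ∑' k : ℕ, (t * x) ^ (k + 2) / (Nat.factorial (k + 2)) := by
    have h2 := Summable.sum_add_tsum_nat_add (f := fun k : ℕ => (t * x) ^ k / (Nat.factorial k)) 2 hsumm
    have hr2 : ∑ i ∈ Finset.range 2, (t * x) ^ i / (Nat.factorial i) = 1 + t * x := by
      simp [Finset.sum_range_succ]
    rw [aux_exp_tsum (t * x), ← h2, hr2]; ring
  rw [hLHS]
  have hgs : Summable (fun k : ℕ => (Real.exp x - 1) * t ^ 2 * t ^ k) :=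
    (summable_geometric_of_lt_one ht0 ht1).mul_left _
  have hsum2 : Summable (fun k : ℕ => (t * x) ^ (k + 2) / (Nat.factorial (k + 2))) :=
    (summable_nat_add_iff 2).mpr hsumm
  have hle : ∀ k : ℕ, (t * x) ^ (k + 2) / (Nat.factorial (k + 2))
      ≤ (Real.exp x - 1) * t ^ 2 * t ^ k := by
    intro k
    have h2 : x ^ (k + 2) / (Nat.factorial (k + 2)) ≤ Real.exp x - 1 :=
      aux_pow_div_factorial_le hx (by omega)
    calc (t * x) ^ (k + 2) / (Nat.factorial (k + 2))
        = t ^ (k + 2) * (x ^ (k + 2) / (Nat.factorial (k + 2))) := by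
          rw [mul_pow]; ring
      _ ≤ t ^ (k + 2) * (Real.exp x - 1) :=
          mul_le_mul_of_nonneg_left h2 (pow_nonneg ht0 _)
      _ = (Real.exp x - 1) * t ^ 2 * t ^ k := by ring
  calc ∑' k : ℕ, (t * x) ^ (k + 2) / (Nat.factorial (k + 2))
      ≤ ∑' k : ℕ, (Real.exp x - 1) * t ^ 2 * t ^ k := Summable.tsum_le_tsum hle hsum2 hgs
    _ = (Real.exp x - 1) * t ^ 2 * (1 - t)⁻¹ := by
        rw [tsum_mul_left, tsum_geometric_of_lt_one ht0 ht1]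
    _ = (Real.exp x - 1) * (t ^ 2 / (1 - t)) := by ring

private lemma aux_pointwise {p : ℝ} (hp0 : 0 ≤ p) (hp1 : p ≤ 1) {n : ℕ} (hn : 0 < n)
    {lam : ℝ} (h0 : 0 ≤ lam) (h1 : lam < n) :
    (1 - p) ^ n * (Real.exp (lam * p) - 1 - lam * p)
      ≤ (1 - (1 - p) ^ n) * (lam ^ 2 / (n * ((n : ℝ) - lam))) := by
  have hnpos : (0 : ℝ) < n := by exact_mod_cast hn
  have htx : (lam / n) * ((n : ℝ) * p) = lam * p := by field_simp
  have ht0 : 0 ≤ lam / n := div_nonneg h0 hnpos.le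
  have ht1 : lam / n < 1 := (div_lt_one hnpos).mpr h1
  have hx0 : (0 : ℝ) ≤ (n : ℝ) * p := mul_nonneg hnpos.le hp0
  have hqe : (1 - p) ^ n ≤ Real.exp (-((n : ℝ) * p)) := by
    have h2 : 1 - p ≤ Real.exp (-p) := by linarith [Real.add_one_le_exp (-p)]
    calc (1 - p) ^ n ≤ (Real.exp (-p)) ^ n := pow_le_pow_left₀ (by linarith) h2 n
      _ = Real.exp (-((n : ℝ) * p)) := by rw [← Real.exp_nat_mul]; ring_nf
  have hnn : 0 ≤ Real.exp (lam * p) - 1 - lam * p := by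
    have := Real.add_one_le_exp (lam * p); linarith
  have key := aux_exp_tail_le hx0 ht0 ht1
  rw [htx] at key
  have c0 : 0 ≤ (lam / n) ^ 2 / (1 - lam / n) :=
    div_nonneg (sq_nonneg _) (by linarith)
  have step1 : (1 - p) ^ n * (Real.exp (lam * p) - 1 - lam * p)
      ≤ Real.exp (-((n : ℝ) * p)) *
        ((Real.exp ((n : ℝ) * p) - 1) * ((lam / n) ^ 2 / (1 - lam / n))) :=
    calc (1 - p) ^ n * (Real.exp (lam * p) - 1 - lam * p)
        ≤ Real.exp (-((n : ℝ) * p)) * (Real.exp (lam * p) - 1 - lam * p) :=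
          mul_le_mul_of_nonneg_right hqe hnn
      _ ≤ _ := mul_le_mul_of_nonneg_left key (Real.exp_pos _).le
  have e1 : Real.exp (-((n : ℝ) * p)) *
        ((Real.exp ((n : ℝ) * p) - 1) * ((lam / n) ^ 2 / (1 - lam / n)))
      = (1 - Real.exp (-((n : ℝ) * p))) * ((lam / n) ^ 2 / (1 - lam / n)) := by
    have hEne : Real.exp ((n : ℝ) * p) ≠ 0 := (Real.exp_pos _).ne'
    rw [Real.exp_neg]
    field_simp
  have e2 : (lam / n) ^ 2 / (1 - lam / n) = lam ^ 2 / (n * ((n : ℝ) - lam)) := by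
    have hne1 : (n : ℝ) ≠ 0 := hnpos.ne'
    have hne2 : (n : ℝ) - lam ≠ 0 := by linarith
    field_simp
  have hmono : (1 - Real.exp (-((n : ℝ) * p))) * ((lam / n) ^ 2 / (1 - lam / n))
      ≤ (1 - (1 - p) ^ n) * ((lam / n) ^ 2 / (1 - lam / n)) :=
    mul_le_mul_of_nonneg_right (by linarith) c0
  calc (1 - p) ^ n * (Real.exp (lam * p) - 1 - lam * p)
      ≤ (1 - (1 - p) ^ n) * ((lam / n) ^ 2 / (1 - lam / n)) := by
        rw [← e1] at hmono; exact step1.trans hmono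
    _ = (1 - (1 - p) ^ n) * (lam ^ 2 / (n * ((n : ℝ) - lam))) := by rw [e2]
set_option maxHeartbeats 1000000 in
/-- In the Bernoulli product model (independent counts
`X_{n,j} ~ Binomial(n, p_j)`), for `n > 2` the missing mass
`M_n = Σ_j p_j 1{X_{n,j}=0}` is sub-Gamma on the right tail with variance factor
`v_n⁺ = 2 E[K_n]/(n² - 2n)` and scale parameter `1/n`: for every `0 ≤ λ < n`,
`log E[exp(λ(M_n - E[M_n]))] ≤ λ² v_n⁺ / (2(1 - λ/n))`. -/
theorem missing_mass_subGamma_right_tail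
    {Ω : Type*} [MeasurableSpace Ω] (P : Measure Ω) [IsProbabilityMeasure P]
    (p : ℕ → ℝ) (hp : ∀ j, p j ∈ Set.Icc (0 : ℝ) 1) (hsum : Summable p)
    (n : ℕ) (hn : 2 < n)
    (X : ℕ → Ω → ℕ) (hXmeas : ∀ j, Measurable (X j))
    (hindep : iIndepFun X P)
    (hbin : ∀ j k, P {ω | X j ω = k} =
      ENNReal.ofReal ((n.choose k : ℝ) * p j ^ k * (1 - p j) ^ (n - k)))
    (M : Ω → ℝ) (hM : ∀ ω, M ω = ∑' j, if X j ω = 0 then p j else 0)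
    (EM : ℝ) (hEM : EM = ∑' j, p j * (1 - p j) ^ n)
    (EK : ℝ) (hEK : EK = ∑' j, (1 - (1 - p j) ^ n))
    (v : ℝ) (hv : v = 2 * EK / ((n : ℝ) ^ 2 - 2 * (n : ℝ))) :
    ∀ lam : ℝ, 0 ≤ lam → lam < (n : ℝ) →
      Real.log (∫ ω, Real.exp (lam * (M ω - EM)) ∂P) ≤
        lam ^ 2 * v / (2 * (1 - lam / (n : ℝ))) := by
  intro lam hlam0 hlamn
  classical
  have hp0 : ∀ j, 0 ≤ p j := fun j => (hp j).1
  have hp1 : ∀ j, p j ≤ 1 := fun j => (hp j).2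
  have hnpos : (0 : ℝ) < n := by
    have : (2 : ℝ) < n := by exact_mod_cast hn
    linarith
  have hn2 : (2 : ℝ) < n := by exact_mod_cast hn
  have hq0 : ∀ j, 0 ≤ (1 - p j) ^ n := fun j => pow_nonneg (by linarith [hp1 j]) n
  have hq1 : ∀ j, (1 - p j) ^ n ≤ 1 := fun j =>
    pow_le_one₀ (by linarith [hp1 j]) (by linarith [hp0 j])
  -- the events and indicator variables
  have hAmeas : ∀ j, MeasurableSet {ω | X j ω = 0} := fun j =>
    (hXmeas j) (measurableSet_singleton 0)
  have hPA : ∀ j, P {ω | X j ω = 0} = ENNReal.ofReal ((1 - p j) ^ n) := fun j => by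
    simpa using hbin j 0
  set Z : ℕ → Ω → ℝ := fun j => (fun k : ℕ => if k = 0 then p j else 0) ∘ X j with hZdef
  have hZeq : ∀ j ω, Z j ω = if X j ω = 0 then p j else 0 := fun j ω => rfl
  have hZmeas : ∀ j, Measurable (Z j) := fun j =>
    (Measurable.ite (by simpa using measurableSet_singleton (0 : ℕ))
      measurable_const measurable_const).comp (hXmeas j)
  have hZ0 : ∀ j ω, 0 ≤ Z j ω := fun j ω => by
    rw [hZeq]; split <;> simp [hp0 j]
  have hZle : ∀ j ω, Z j ω ≤ p j := fun j ω => by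
    rw [hZeq]; split <;> simp [hp0 j]
  have hZsum : ∀ ω, Summable fun j => Z j ω := fun ω =>
    Summable.of_nonneg_of_le (fun j => hZ0 j ω) (fun j => hZle j ω) hsum
  have hMZ : ∀ ω, M ω = ∑' j, Z j ω := fun ω => by
    rw [hM ω]; exact (tsum_congr fun j => (hZeq j ω)).symm
  have hZindep : iIndepFun Z P :=
    hindep.comp _ fun j =>
      Measurable.ite (by simpa using measurableSet_singleton (0 : ℕ))
        measurable_const measurable_const
  -- single mgf
  have h_mgf_single : ∀ j, mgf (Z j) P lam
      = 1 + (1 - p j) ^ n * (Real.exp (lam * p j) - 1) := by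
    intro j
    have hfun : (fun ω => Real.exp (lam * Z j ω))
        = fun ω => 1 + Set.indicator {ω | X j ω = 0}
            (fun _ => Real.exp (lam * p j) - 1) ω := by
      funext ω
      by_cases h : X j ω = 0
      · have hmem : ω ∈ {ω | X j ω = 0} := h
        rw [Set.indicator_of_mem hmem, hZeq, if_pos h]; ring
      · have hmem : ω ∉ {ω | X j ω = 0} := h
        rw [Set.indicator_of_notMem hmem, hZeq, if_neg h]; simp
    have : mgf (Z j) P lam = ∫ ω, Real.exp (lam * Z j ω) ∂P := rfl
    rw [this, hfun,
      integral_add (integrable_const 1) ((integrable_const _).indicator (hAmeas j)),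
      integral_const, integral_indicator_const _ (hAmeas j), measureReal_def, measureReal_def, hPA j,
      ENNReal.toReal_ofReal (hq0 j)]
    simp [mul_comm]
  -- finite products
  have h_prod : ∀ N : ℕ, ∫ ω, Real.exp (lam * ∑ j ∈ Finset.range N, Z j ω) ∂P
      = ∏ j ∈ Finset.range N, (1 + (1 - p j) ^ n * (Real.exp (lam * p j) - 1)) := by
    intro N
    calc ∫ ω, Real.exp (lam * ∑ j ∈ Finset.range N, Z j ω) ∂P
        = mgf (∑ j ∈ Finset.range N, Z j) P lam := by
          simp only [mgf, Finset.sum_apply]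
      _ = ∏ j ∈ Finset.range N, mgf (Z j) P lam :=
          hZindep.mgf_sum hZmeas _
      _ = ∏ j ∈ Finset.range N, (1 + (1 - p j) ^ n * (Real.exp (lam * p j) - 1)) :=
          Finset.prod_congr rfl fun j _ => h_mgf_single j
  -- the series g
  set g : ℕ → ℝ := fun j => (1 - p j) ^ n * (Real.exp (lam * p j) - 1) with hgdef
  have hg0 : ∀ j, 0 ≤ g j := fun j =>
    mul_nonneg (hq0 j) (by linarith [Real.one_le_exp (mul_nonneg hlam0 (hp0 j))])
  have hgle : ∀ j, g j ≤ (lam * Real.exp lam) * p j := by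
    intro j
    have hy0 : 0 ≤ lam * p j := mul_nonneg hlam0 (hp0 j)
    have h2 : 1 - lam * p j ≤ Real.exp (-(lam * p j)) := by
      linarith [Real.add_one_le_exp (-(lam * p j))]
    have h3 : Real.exp (-(lam * p j)) * Real.exp (lam * p j) = 1 := by
      rw [← Real.exp_add]; simp
    have h1 : Real.exp (lam * p j) - 1 ≤ (lam * p j) * Real.exp (lam * p j) := by
      nlinarith [Real.exp_pos (lam * p j)]
    have h4 : Real.exp (lam * p j) ≤ Real.exp lam :=
      Real.exp_le_exp.mpr (by nlinarith [hp0 j, hp1 j])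
    calc g j ≤ 1 * (Real.exp (lam * p j) - 1) := by
          apply mul_le_mul_of_nonneg_right (hq1 j)
          linarith [Real.one_le_exp hy0]
      _ = Real.exp (lam * p j) - 1 := one_mul _
      _ ≤ (lam * p j) * Real.exp (lam * p j) := h1
      _ ≤ (lam * Real.exp lam) * p j := by nlinarith [Real.exp_pos (lam * p j), hp0 j]
  have hgsum : Summable g :=
    Summable.of_nonneg_of_le hg0 hgle (hsum.mul_left _)
  -- summability of p * q
  have hpqsum : Summable fun j => p j * (1 - p j) ^ n :=
    Summable.of_nonneg_of_le (fun j => mul_nonneg (hp0 j) (hq0 j))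
      (fun j => by nlinarith [hq1 j, hp0 j, hq0 j]) hsum
  -- measurability of M
  have hMmeas : Measurable M := by
    apply measurable_of_tendsto_metrizable
      (f := fun N ω => ∑ j ∈ Finset.range N, Z j ω)
      (fun N => Finset.measurable_sum _ fun j _ => hZmeas j)
    rw [tendsto_pi_nhds]
    intro ω
    rw [hMZ ω]
    exact (hZsum ω).hasSum.tendsto_sum_nat
  set T : ℝ := ∑' j, p j with hT
  have hSNle : ∀ (N : ℕ) ω, ∑ j ∈ Finset.range N, Z j ω ≤ T := fun N ω =>
    (Summable.sum_le_tsum (Finset.range N) (fun j _ => hZ0 j ω) (hZsum ω)).trans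
      (Summable.tsum_le_tsum (fun j => hZle j ω) (hZsum ω) hsum)
  have hMle : ∀ ω, M ω ≤ T := fun ω => by
    rw [hMZ ω]; exact Summable.tsum_le_tsum (fun j => hZle j ω) (hZsum ω) hsum
  have hM0 : ∀ ω, 0 ≤ M ω := fun ω => by
    rw [hMZ ω]; exact tsum_nonneg fun j => hZ0 j ω
  -- integrability of the target
  have hFmeas : Measurable fun ω => Real.exp (lam * (M ω - EM)) :=
    ((hMmeas.sub measurable_const).const_mul lam).exp
  have hFbound : ∀ ω, ‖Real.exp (lam * (M ω - EM))‖ ≤ Real.exp (lam * (T - EM)) := by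
    intro ω
    rw [Real.norm_eq_abs, abs_of_pos (Real.exp_pos _)]
    exact Real.exp_le_exp.mpr
      (mul_le_mul_of_nonneg_left (by linarith [hMle ω]) hlam0)
  have hFint : Integrable (fun ω => Real.exp (lam * (M ω - EM))) P :=
    (integrable_const (Real.exp (lam * (T - EM)))).mono'
      hFmeas.aestronglyMeasurable (Filter.Eventually.of_forall hFbound)
  -- the approximating sequence
  set f : ℕ → Ω → ℝ :=
    fun N ω => Real.exp (lam * (∑ j ∈ Finset.range N, Z j ω - EM)) with hfdef
  have hfmeas : ∀ N, Measurable (f N) := fun N =>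
    (((Finset.measurable_sum _ fun j _ => hZmeas j).sub measurable_const).const_mul
      lam).exp
  have hfint : ∀ N, Integrable (f N) P := fun N =>
    (integrable_const (Real.exp (lam * (T - EM)))).mono'
      (hfmeas N).aestronglyMeasurable
      (Filter.Eventually.of_forall fun ω => by
        rw [Real.norm_eq_abs, abs_of_pos (Real.exp_pos _)]
        exact Real.exp_le_exp.mpr
          (mul_le_mul_of_nonneg_left (by linarith [hSNle N ω]) hlam0))
  have hfmono : ∀ ω, Monotone fun N => f N ω := by
    intro ω N N' hNN'
    apply Real.exp_le_exp.mpr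
    apply mul_le_mul_of_nonneg_left _ hlam0
    apply sub_le_sub_right
    exact Finset.sum_le_sum_of_subset_of_nonneg
      (Finset.range_subset_range.mpr hNN') fun j _ _ => hZ0 j ω
  have hftend : ∀ ω, Filter.Tendsto (fun N => f N ω) Filter.atTop
      (nhds (Real.exp (lam * (M ω - EM)))) := by
    intro ω
    have h1 : Filter.Tendsto (fun N => ∑ j ∈ Finset.range N, Z j ω)
        Filter.atTop (nhds (M ω)) := by
      rw [hMZ ω]; exact (hZsum ω).hasSum.tendsto_sum_nat
    have h2 : Continuous fun y : ℝ => Real.exp (lam * (y - EM)) := by continuity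
    exact (h2.tendsto (M ω)).comp h1
  have hlim := integral_tendsto_of_tendsto_of_monotone hfint hFint
    (Filter.Eventually.of_forall hfmono) (Filter.Eventually.of_forall hftend)
  -- bound on each finite stage
  have hbound : ∀ N, ∫ ω, f N ω ∂P ≤ Real.exp (∑' j, g j - lam * EM) := by
    intro N
    have e1 : ∀ ω : Ω, f N ω
        = Real.exp (-(lam * EM)) * Real.exp (lam * ∑ j ∈ Finset.range N, Z j ω) := by
      intro ω
      simp only [hfdef]
      rw [← Real.exp_add]
      congr 1
      ring
    calc ∫ ω, f N ω ∂P
        = Real.exp (-(lam * EM)) *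
            ∫ ω, Real.exp (lam * ∑ j ∈ Finset.range N, Z j ω) ∂P := by
          simp_rw [e1]; exact integral_const_mul _ _
      _ = Real.exp (-(lam * EM)) * ∏ j ∈ Finset.range N, (1 + g j) := by rw [h_prod N]
      _ ≤ Real.exp (-(lam * EM)) * Real.exp (∑' j, g j) := by
          apply mul_le_mul_of_nonneg_left _ (Real.exp_pos _).le
          calc ∏ j ∈ Finset.range N, (1 + g j)
              ≤ ∏ j ∈ Finset.range N, Real.exp (g j) :=
                Finset.prod_le_prod (fun j _ => by linarith [hg0 j])
                  (fun j _ => by linarith [Real.add_one_le_exp (g j)])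
            _ = Real.exp (∑ j ∈ Finset.range N, g j) := (Real.exp_sum _ _).symm
            _ ≤ Real.exp (∑' j, g j) := Real.exp_le_exp.mpr
                (Summable.sum_le_tsum _ (fun j _ => hg0 j) hgsum)
      _ = Real.exp (∑' j, g j - lam * EM) := by
          rw [← Real.exp_add]; congr 1; ring
  have hintF_le : ∫ ω, Real.exp (lam * (M ω - EM)) ∂P
      ≤ Real.exp (∑' j, g j - lam * EM) :=
    le_of_tendsto hlim (Filter.Eventually.of_forall hbound)
  have hintF_pos : 0 < ∫ ω, Real.exp (lam * (M ω - EM)) ∂P := by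
    have hFlb : ∀ ω, Real.exp (-(lam * EM)) ≤ Real.exp (lam * (M ω - EM)) := fun ω =>
      Real.exp_le_exp.mpr (by rw [mul_sub]; linarith [mul_nonneg hlam0 (hM0 ω)])
    calc (0:ℝ) < Real.exp (-(lam * EM)) := Real.exp_pos _
      _ = ∫ _ω, Real.exp (-(lam * EM)) ∂P := by simp
      _ ≤ ∫ ω, Real.exp (lam * (M ω - EM)) ∂P :=
          integral_mono (integrable_const _) hFint hFlb
  have hlog : Real.log (∫ ω, Real.exp (lam * (M ω - EM)) ∂P)
      ≤ ∑' j, g j - lam * EM :=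
    (Real.log_le_iff_le_exp hintF_pos).mpr hintF_le
  -- rewrite the series
  have hEMts : lam * EM = ∑' j, lam * (p j * (1 - p j) ^ n) := by
    rw [hEM, tsum_mul_left]
  have hlampq : Summable fun j => lam * (p j * (1 - p j) ^ n) := hpqsum.mul_left lam
  have key1 : ∑' j, g j - lam * EM
      = ∑' j, (1 - p j) ^ n * (Real.exp (lam * p j) - 1 - lam * p j) := by
    rw [hEMts, ← Summable.tsum_sub hgsum hlampq]
    exact tsum_congr fun j => by rw [hgdef]; ring
  -- pointwise bound and summation
  have hsumL : Summable fun j =>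
      (1 - p j) ^ n * (Real.exp (lam * p j) - 1 - lam * p j) := by
    have : (fun j => (1 - p j) ^ n * (Real.exp (lam * p j) - 1 - lam * p j))
        = fun j => g j - lam * (p j * (1 - p j) ^ n) := by
      funext j; rw [hgdef]; ring
    rw [this]
    exact hgsum.sub hlampq
  have hqsum : Summable fun j => 1 - (1 - p j) ^ n := by
    apply Summable.of_nonneg_of_le (fun j => by linarith [hq1 j])
      (fun j => ?_) (hsum.mul_left (n : ℝ))
    have := one_add_mul_le_pow (a := -p j) (by linarith [hp1 j]) n
    have h2 : 1 + (n : ℝ) * (-p j) ≤ (1 - p j) ^ n := by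
      rw [← sub_eq_add_neg] at this; linarith
    linarith
  have hsumR : Summable fun j =>
      (1 - (1 - p j) ^ n) * (lam ^ 2 / (n * ((n : ℝ) - lam))) :=
    hqsum.mul_right _
  have key2 : ∑' j, (1 - p j) ^ n * (Real.exp (lam * p j) - 1 - lam * p j)
      ≤ ∑' j, (1 - (1 - p j) ^ n) * (lam ^ 2 / (n * ((n : ℝ) - lam))) :=
    Summable.tsum_le_tsum
      (fun j => aux_pointwise (hp0 j) (hp1 j) (by omega) hlam0 hlamn)
      hsumL hsumR
  have key3 : ∑' j, (1 - (1 - p j) ^ n) * (lam ^ 2 / (n * ((n : ℝ) - lam)))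
      = EK * (lam ^ 2 / (n * ((n : ℝ) - lam))) := by
    rw [tsum_mul_right, hEK]
  have hEK0 : 0 ≤ EK := by
    rw [hEK]
    exact tsum_nonneg fun j => by linarith [hq1 j]
  -- final algebra
  have hne1 : (n : ℝ) ≠ 0 := hnpos.ne'
  have hne2 : (n : ℝ) - lam ≠ 0 := by linarith
  have hne3 : (n : ℝ) - 2 ≠ 0 := by linarith
  have hveq : lam ^ 2 * v / (2 * (1 - lam / (n : ℝ)))
      = EK * (lam ^ 2 / (((n : ℝ) - 2) * ((n : ℝ) - lam))) := by
    rw [hv]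
    have h4 : (n : ℝ) ^ 2 - 2 * n ≠ 0 := by nlinarith
    have h5 : 1 - lam / (n : ℝ) ≠ 0 := by
      intro h
      apply hne2
      field_simp at h
      linarith
    field_simp
  have hfinal : EK * (lam ^ 2 / (n * ((n : ℝ) - lam)))
      ≤ EK * (lam ^ 2 / (((n : ℝ) - 2) * ((n : ℝ) - lam))) := by
    apply mul_le_mul_of_nonneg_left _ hEK0
    exact div_le_div_of_nonneg_left (sq_nonneg lam) (by nlinarith) (by nlinarith)
  calc Real.log (∫ ω, Real.exp (lam * (M ω - EM)) ∂P)
      ≤ ∑' j, g j - lam * EM := hlog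
    _ = ∑' j, (1 - p j) ^ n * (Real.exp (lam * p j) - 1 - lam * p j) := key1
    _ ≤ ∑' j, (1 - (1 - p j) ^ n) * (lam ^ 2 / (n * ((n : ℝ) - lam))) := key2
    _ = EK * (lam ^ 2 / (n * ((n : ℝ) - lam))) := key3
    _ ≤ EK * (lam ^ 2 / (((n : ℝ) - 2) * ((n : ℝ) - lam))) := hfinal
    _ = lam ^ 2 * v / (2 * (1 - lam / (n : ℝ))) := hveq.symm
end

section
/- For every integer n > 2 and every x ≥ 0, the missing mass satisfies the left-tail concentration bound P( M_n − E[M_n] ≤ −x ) ≤ exp( −x² / (2 v_n⁻) ), where v_n⁻ := 2·E[K_{n+2,2}]/((n+2)(n+1)). -/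
open MeasureTheory ProbabilityTheory Filter

lemma exp_neg_le_quad {u : ℝ} (hu : 0 ≤ u) : Real.exp (-u) ≤ 1 - u + u ^ 2 / 2 := by
  have h1 : 1 + u + u ^ 2 / 2 ≤ Real.exp u := by
    have := Real.sum_le_exp_of_nonneg hu 3
    simp [Finset.sum_range_succ] at this
    nlinarith [this]
  have h2 : Real.exp (-u) * Real.exp u = 1 := by
    rw [← Real.exp_add]; simp
  nlinarith [Real.exp_pos u, Real.exp_pos (-u), sq_nonneg (u * u), sq_nonneg u]

lemma bern_mgf_le {q u : ℝ} (hq0 : 0 ≤ q) (hu : 0 ≤ u) :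
    1 + q * (Real.exp (-u) - 1) ≤ Real.exp (q * (u ^ 2 / 2 - u)) := by
  have h1 : Real.exp (-u) - 1 ≤ u ^ 2 / 2 - u := by
    have := exp_neg_le_quad hu; linarith
  have h2 : 1 + q * (u ^ 2 / 2 - u) ≤ Real.exp (q * (u ^ 2 / 2 - u)) := by
    linarith [Real.add_one_le_exp (q * (u ^ 2 / 2 - u))]
  nlinarith

lemma mgf_indicator_const {Ω : Type*} [MeasurableSpace Ω] (P : Measure Ω)
    [IsProbabilityMeasure P] {A : Set Ω} (hA : MeasurableSet A) (c l : ℝ) :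
    mgf (A.indicator fun _ => c) P l = 1 + (P A).toReal * (Real.exp (l * c) - 1) := by
  have hfun : (fun ω => Real.exp (l * A.indicator (fun _ => c) ω)) =
      fun ω => A.indicator (fun _ => Real.exp (l * c) - 1) ω + 1 := by
    funext ω
    by_cases h : ω ∈ A
    · simp [Set.indicator_of_mem h]
    · simp [Set.indicator_of_notMem h]
  rw [mgf, hfun, integral_add ((integrable_const _).indicator hA) (integrable_const 1),
    integral_indicator_const _ hA, integral_const]
  simp [smul_eq_mul]
  rw [measureReal_def]
  ring

lemma finite_chernoff {Ω : Type*} [MeasurableSpace Ω] (P : Measure Ω)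
    [IsProbabilityMeasure P] (Y : ℕ → Ω → ℝ) (hYmeas : ∀ j, Measurable (Y j))
    (hYindep : iIndepFun Y P)
    (p q : ℕ → ℝ) (hp0 : ∀ j, 0 ≤ p j) (hq0 : ∀ j, 0 ≤ q j)
    (A : ℕ → Set Ω) (hA : ∀ j, MeasurableSet (A j))
    (hY : ∀ j, Y j = (A j).indicator fun _ => p j)
    (hPA : ∀ j, (P (A j)).toReal = q j)
    (l t V : ℝ) (hl : 0 ≤ l)
    (N : ℕ) (hVN : ∑ j ∈ Finset.range N, p j ^ 2 * q j ≤ V) :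
    P {ω | (∑ j ∈ Finset.range N, Y j) ω ≤ (∑ j ∈ Finset.range N, p j * q j) - t}
      ≤ ENNReal.ofReal (Real.exp (l ^ 2 * V / 2 - l * t)) := by
  set S : Ω → ℝ := ∑ j ∈ Finset.range N, Y j with hS
  have hSmeas : Measurable S := by
    rw [hS]
    have := Finset.measurable_sum (Finset.range N) fun j _ => hYmeas j
    convert this using 1
    funext ω
    simp [Finset.sum_apply]
  have hSnn : ∀ ω, 0 ≤ S ω := by
    intro ω
    rw [hS, Finset.sum_apply]
    refine Finset.sum_nonneg fun j _ => ?_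
    rw [hY j]
    exact Set.indicator_nonneg (fun _ _ => hp0 j) ω
  have h_int : Integrable (fun ω => Real.exp (-l * S ω)) P := by
    refine Integrable.mono' (integrable_const 1)
      ((hSmeas.const_mul (-l)).exp.aestronglyMeasurable) (ae_of_all _ fun ω => ?_)
    rw [Real.norm_eq_abs, abs_of_pos (Real.exp_pos _)]
    refine Real.exp_le_one_iff.mpr ?_
    nlinarith [hSnn ω]
  have chern := measure_le_le_exp_mul_mgf (μ := P) (X := S)
    ((∑ j ∈ Finset.range N, p j * q j) - t) (neg_nonpos.mpr hl) h_int
  have hmgf : mgf S P (-l) = ∏ j ∈ Finset.range N, mgf (Y j) P (-l) :=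
    hYindep.mgf_sum hYmeas _
  have hstep : ∀ j, mgf (Y j) P (-l) ≤ Real.exp (q j * ((l * p j) ^ 2 / 2 - l * p j)) := by
    intro j
    have h1 : mgf (Y j) P (-l) = 1 + q j * (Real.exp (-(l * p j)) - 1) := by
      rw [hY j, mgf_indicator_const P (hA j), hPA j, neg_mul]
    rw [h1]
    exact bern_mgf_le (hq0 j) (mul_nonneg hl (hp0 j))
  have hprod : mgf S P (-l) ≤
      Real.exp (l ^ 2 * (∑ j ∈ Finset.range N, p j ^ 2 * q j) / 2
        - l * ∑ j ∈ Finset.range N, p j * q j) := by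
    rw [hmgf]
    calc ∏ j ∈ Finset.range N, mgf (Y j) P (-l)
        ≤ ∏ j ∈ Finset.range N, Real.exp (q j * ((l * p j) ^ 2 / 2 - l * p j)) :=
          Finset.prod_le_prod (fun j _ => mgf_nonneg) (fun j _ => hstep j)
      _ = Real.exp (∑ j ∈ Finset.range N, q j * ((l * p j) ^ 2 / 2 - l * p j)) :=
          (Real.exp_sum _ _).symm
      _ = Real.exp (l ^ 2 * (∑ j ∈ Finset.range N, p j ^ 2 * q j) / 2
            - l * ∑ j ∈ Finset.range N, p j * q j) := by
          congr 1
          rw [Finset.mul_sum, Finset.mul_sum, Finset.sum_div, ← Finset.sum_sub_distrib]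
          refine Finset.sum_congr rfl fun j _ => ?_
          ring
  set ES : ℝ := ∑ j ∈ Finset.range N, p j * q j with hES
  set VN : ℝ := ∑ j ∈ Finset.range N, p j ^ 2 * q j with hVN'
  have hfinal : (P {ω | S ω ≤ ES - t}).toReal ≤ Real.exp (l ^ 2 * V / 2 - l * t) := by
    calc (P {ω | S ω ≤ ES - t}).toReal
        ≤ Real.exp (-(-l) * (ES - t)) * mgf S P (-l) := chern
      _ ≤ Real.exp (-(-l) * (ES - t)) * Real.exp (l ^ 2 * VN / 2 - l * ES) :=
          mul_le_mul_of_nonneg_left hprod (Real.exp_pos _).le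
      _ = Real.exp (-(-l) * (ES - t) + (l ^ 2 * VN / 2 - l * ES)) := (Real.exp_add _ _).symm
      _ ≤ Real.exp (l ^ 2 * V / 2 - l * t) := by
          refine Real.exp_le_exp.mpr ?_
          nlinarith [sq_nonneg l]
  exact (ENNReal.le_ofReal_iff_toReal_le (measure_ne_top P _) (Real.exp_nonneg _)).mpr hfinal

set_option maxHeartbeats 1000000 in
/-- In the Bernoulli product model, for every `n > 2` and `x ≥ 0`,
the missing mass satisfies the left-tail bound
`P(M_n - E[M_n] ≤ -x) ≤ exp(-x²/(2 v_n⁻))`, with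
`v_n⁻ = 2 E[K_{n+2,2}]/((n+2)(n+1))`. -/
theorem missing_mass_left_tail_concentration
    {Ω : Type*} [MeasurableSpace Ω] (P : Measure Ω) [IsProbabilityMeasure P]
    (p : ℕ → ℝ) (hp : ∀ j, p j ∈ Set.Icc (0 : ℝ) 1) (hsum : Summable p)
    (n : ℕ) (hn : 2 < n)
    (X : ℕ → Ω → ℕ) (hXmeas : ∀ j, Measurable (X j))
    (hindep : iIndepFun X P)
    (hbin : ∀ j k, P {ω | X j ω = k} =
      ENNReal.ofReal ((n.choose k : ℝ) * p j ^ k * (1 - p j) ^ (n - k)))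
    (M : Ω → ℝ) (hM : ∀ ω, M ω = ∑' j, if X j ω = 0 then p j else 0)
    (EM : ℝ) (hEM : EM = ∑' j, p j * (1 - p j) ^ n)
    (EK : ℝ) (hEK : EK = ∑' j, (((n + 2).choose 2 : ℕ) : ℝ) * p j ^ 2 * (1 - p j) ^ n)
    (v : ℝ) (hv : v = 2 * EK / (((n : ℝ) + 2) * ((n : ℝ) + 1))) :
    ∀ x : ℝ, 0 ≤ x →
      P {ω | M ω - EM ≤ -x} ≤ ENNReal.ofReal (Real.exp (-(x ^ 2) / (2 * v))) := by
  have hp0 : ∀ j, 0 ≤ p j := fun j => (hp j).1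
  have hp1 : ∀ j, p j ≤ 1 := fun j => (hp j).2
  set q : ℕ → ℝ := fun j => (1 - p j) ^ n with hqdef
  have hq0 : ∀ j, 0 ≤ q j := fun j => pow_nonneg (by linarith [hp1 j]) n
  have hq1 : ∀ j, q j ≤ 1 := fun j => pow_le_one₀ (by linarith [hp1 j]) (by linarith [hp0 j])
  set A : ℕ → Set Ω := fun j => X j ⁻¹' {0} with hAdef
  have hA : ∀ j, MeasurableSet (A j) := fun j => hXmeas j (measurableSet_singleton 0)
  have hAset : ∀ j, A j = {ω | X j ω = 0} := by
    intro j; ext ω; simp [hAdef]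
  have hPA : ∀ j, (P (A j)).toReal = q j := by
    intro j
    rw [hAset j, hbin j 0]
    simp [hqdef, ENNReal.toReal_ofReal (hq0 j)]
    exact hq0 j
  set Y : ℕ → Ω → ℝ := fun j => (A j).indicator fun _ => p j with hYdef
  have hYmeas : ∀ j, Measurable (Y j) := fun j => measurable_const.indicator (hA j)
  have hYindep : iIndepFun Y P := by
    have hcomp := hindep.comp (fun j (k : ℕ) => if k = 0 then p j else 0)
      (fun j => measurable_from_top)
    convert hcomp using 1
    funext j ω
    by_cases h : X j ω = 0
    · simp [hYdef, hAdef, Set.indicator_apply, h, Function.comp]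
    · simp [hYdef, hAdef, Set.indicator_apply, h, Function.comp]
  have hYval : ∀ j ω, Y j ω = if X j ω = 0 then p j else 0 := by
    intro j ω
    by_cases h : X j ω = 0 <;> simp [hYdef, hAdef, Set.indicator_apply, h]
  have hYnn : ∀ j ω, 0 ≤ Y j ω := by
    intro j ω; rw [hYval]; split <;> simp [hp0 j]
  have hYle : ∀ j ω, Y j ω ≤ p j := by
    intro j ω; rw [hYval]; split <;> simp [hp0 j]
  have hsumY : ∀ ω, Summable fun j => Y j ω :=
    fun ω => hsum.of_nonneg_of_le (fun j => hYnn j ω) (fun j => hYle j ω)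
  have hM' : ∀ ω, M ω = ∑' j, Y j ω := by
    intro ω; rw [hM ω]; exact tsum_congr fun j => (hYval j ω).symm
  have hsum1 : Summable fun j => p j * q j :=
    hsum.of_nonneg_of_le (fun j => mul_nonneg (hp0 j) (hq0 j))
      (fun j => by nlinarith [hp0 j, hp1 j, hq0 j, hq1 j])
  have hsum2 : Summable fun j => p j ^ 2 * q j :=
    hsum.of_nonneg_of_le (fun j => mul_nonneg (sq_nonneg _) (hq0 j))
      (fun j => by nlinarith [hp0 j, hp1 j, hq0 j, hq1 j])
  have hEM' : EM = ∑' j, p j * q j := hEM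
  have hv' : v = ∑' j, p j ^ 2 * q j := by
    have hc : (((n + 2).choose 2 : ℕ) : ℝ) = ((n : ℝ) + 2) * ((n : ℝ) + 1) / 2 := by
      rw [Nat.cast_choose_two]; push_cast; ring
    have hterm : ∀ j, (((n + 2).choose 2 : ℕ) : ℝ) * p j ^ 2 * (1 - p j) ^ n =
        (((n : ℝ) + 2) * ((n : ℝ) + 1) / 2) * (p j ^ 2 * q j) := fun j => by
      rw [hc, hqdef]; ring
    have h1 : ((n : ℝ) + 2) * ((n : ℝ) + 1) ≠ 0 := by positivity
    rw [hv, hEK, tsum_congr hterm, tsum_mul_left]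
    field_simp
  have hvnn : 0 ≤ v := by
    rw [hv']
    exact tsum_nonneg fun j => mul_nonneg (sq_nonneg _) (hq0 j)
  intro x hx
  rcases eq_or_lt_of_le hx with h0 | hxpos
  · rw [← h0]
    simp
    exact prob_le_one
  rcases eq_or_lt_of_le hvnn with hv0 | hvpos
  · -- v = 0 : all terms vanish, M = 0 ≥ 0 a.s., EM = 0, event empty
    have hterm0 : ∀ j, p j ^ 2 * q j = 0 := by
      intro j
      have hle := Summable.le_tsum hsum2 j (fun i _ => mul_nonneg (sq_nonneg _) (hq0 i))
      rw [← hv', ← hv0] at hle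
      exact le_antisymm hle (mul_nonneg (sq_nonneg _) (hq0 j))
    have hpq0 : ∀ j, p j * q j = 0 := by
      intro j
      rcases mul_eq_zero.mp (hterm0 j) with h | h
      · rw [pow_eq_zero_iff (two_ne_zero)] at h
        rw [h, zero_mul]
      · rw [h, mul_zero]
    have hEM0 : EM = 0 := by
      rw [hEM', tsum_congr hpq0, tsum_zero]
    have hempty : {ω | M ω - EM ≤ -x} = ∅ := by
      ext ω
      simp only [Set.mem_setOf_eq, Set.mem_empty_iff_false, iff_false, not_le]
      have hMnn : 0 ≤ M ω := by
        rw [hM' ω]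
        exact tsum_nonneg fun j => hYnn j ω
      rw [hEM0]
      linarith
    rw [hempty]
    simp
  · -- v > 0
    set l : ℝ := x / v with hldef
    have hl : 0 ≤ l := div_nonneg hx hvnn
    set ε : ℕ → ℝ := fun N => ∑' j, p (j + N) with hεdef
    have hεtend : Tendsto ε atTop (nhds 0) := by
      exact tendsto_sum_nat_add p
    have key : ∀ N, P {ω | M ω - EM ≤ -x} ≤
        ENNReal.ofReal (Real.exp (l ^ 2 * v / 2 - l * (x - ε N))) := by
      intro N
      have hsubset : {ω | M ω - EM ≤ -x} ⊆
          {ω | (∑ j ∈ Finset.range N, Y j) ω ≤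
            (∑ j ∈ Finset.range N, p j * q j) - (x - ε N)} := by
        intro ω hω
        simp only [Set.mem_setOf_eq] at hω ⊢
        rw [Finset.sum_apply]
        have hMsplit : ∑ j ∈ Finset.range N, Y j ω + ∑' j, Y (j + N) ω = M ω := by
          rw [hM' ω]; exact Summable.sum_add_tsum_nat_add N (hsumY ω)
        have htail1 : 0 ≤ ∑' j, Y (j + N) ω :=
          tsum_nonneg fun j => hYnn _ ω
        have hEMsplit : ∑ j ∈ Finset.range N, p j * q j + ∑' j, p (j + N) * q (j + N)
            = EM := by
          rw [hEM']; exact Summable.sum_add_tsum_nat_add N hsum1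
        have htail2 : ∑' j, p (j + N) * q (j + N) ≤ ε N := by
          rw [hεdef]
          refine Summable.tsum_le_tsum (fun j => ?_)
            ((summable_nat_add_iff (f := fun j => p j * q j) N).mpr hsum1)
            ((summable_nat_add_iff (f := p) N).mpr hsum)
          nlinarith [hp0 (j + N), hq0 (j + N), hq1 (j + N)]
        linarith
      refine (measure_mono hsubset).trans ?_
      refine finite_chernoff P Y hYmeas hYindep p q hp0 hq0 A hA (fun j => rfl) hPA
        l (x - ε N) v hl N ?_
      rw [hv']
      exact Summable.sum_le_tsum _ (fun i _ => mul_nonneg (sq_nonneg _) (hq0 i)) hsum2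
    have hexp : l ^ 2 * v / 2 - l * x = -x ^ 2 / (2 * v) := by
      rw [hldef]
      field_simp
      ring
    have htend : Tendsto (fun N => ENNReal.ofReal (Real.exp (l ^ 2 * v / 2 - l * (x - ε N))))
        atTop (nhds (ENNReal.ofReal (Real.exp (-x ^ 2 / (2 * v))))) := by
      have h1 : Tendsto (fun N => l ^ 2 * v / 2 - l * (x - ε N)) atTop
          (nhds (l ^ 2 * v / 2 - l * (x - 0))) :=
        tendsto_const_nhds.sub ((tendsto_const_nhds.sub hεtend).const_mul l)
      rw [sub_zero, hexp] at h1
      exact (ENNReal.continuous_ofReal.tendsto _).comp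
        ((Real.continuous_exp.tendsto _).comp h1)
    have := ge_of_tendsto' htend key
    simpa [neg_div] using this
end

section
/- For every integer n > 2 and every x ≥ 0, the missing mass satisfies the right-tail concentration bound P( M_n − E[M_n] ≥ x ) ≤ exp( − n² v_n⁺ · h( x/(n v_n⁺) ) ), where v_n⁺ := 2·E[K_n]/(n² − 2n) and h(u) := 1 + u − √(1 + 2u); this is the Chernoff bound obtained from the sub-Gamma right-tail property of M_n with variance factor v_n⁺ and scale parameter 1/n. -/
open MeasureTheory ProbabilityTheory Filter

lemma mmrt_exp_quad {s : ℝ} (h0 : 0 ≤ s) (h2 : s ≤ 2) :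
    Real.exp s ≤ 1 + s + (6/5)*s^2 := by
  have hu0 : 0 ≤ s/2 := by linarith
  have hu1 : s/2 ≤ 1 := by linarith
  have hb0 := Real.exp_bound' hu0 hu1 (n := 2) (by norm_num)
  have hb : Real.exp (s/2) ≤ 1 + s/2 + (3/4)*(s/2)^2 := by
    norm_num [Finset.sum_range_succ] at hb0
    nlinarith [hb0]
  have hs : Real.exp s = Real.exp (s/2) * Real.exp (s/2) := by
    rw [← Real.exp_add]; ring_nf
  have hA : (0:ℝ) ≤ 1 + s/2 + (3/4)*(s/2)^2 := by nlinarith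
  have hsq : Real.exp (s/2) * Real.exp (s/2) ≤
      (1 + s/2 + (3/4)*(s/2)^2) * (1 + s/2 + (3/4)*(s/2)^2) :=
    mul_le_mul hb hb (Real.exp_pos _).le hA
  rw [hs]
  nlinarith [hsq, sq_nonneg s, mul_le_mul_of_nonneg_left h2 (mul_nonneg h0 h0)]

lemma mmrt_quad_le_exp {t : ℝ} (h0 : 0 ≤ t) : (6/5)*t^2 ≤ Real.exp t - 1 := by
  have h := Real.sum_le_exp_of_nonneg h0 4
  have hs : 1 + t + t^2/2 + t^3/6 ≤ Real.exp t := by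
    norm_num [Finset.sum_range_succ, Nat.factorial] at h
    nlinarith [h]
  nlinarith [mul_nonneg h0 (sq_nonneg (t - 21/10))]

set_option maxHeartbeats 1000000 in
lemma mmrt_key {N lam p q : ℝ} (hN : 3 ≤ N) (hp0 : 0 ≤ p) (hp1 : p ≤ 1)
    (hl0 : 0 ≤ lam) (hlN : lam < N) (hq0 : 0 ≤ q)
    (hqe : q ≤ Real.exp (-(N*p))) :
    (N-2)*(N-lam)*(q*(Real.exp (lam*p) - lam*p - 1)) ≤ (1-q)*lam^2 := by
  have hs0 : 0 ≤ lam * p := mul_nonneg hl0 hp0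
  have hnn : 0 ≤ Real.exp (lam*p) - lam*p - 1 := by
    nlinarith [Real.add_one_le_exp (lam*p)]
  have hNl0 : 0 < N - lam := by linarith
  have hN2 : 0 < N - 2 := by linarith
  rcases le_or_gt (lam * p) 2 with hs2 | hs2
  · -- small s
    have hEs : Real.exp (lam*p) - lam*p - 1 ≤ (6/5)*(lam*p)^2 := by
      nlinarith [mmrt_exp_quad hs0 hs2]
    set t := N * p with ht
    have ht0 : 0 ≤ t := mul_nonneg (by linarith) hp0
    have h1 : (6/5)*t^2 ≤ Real.exp t - 1 := mmrt_quad_le_exp ht0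
    have hiq : (6/5)*t^2 * q ≤ 1 - q := by
      have he : Real.exp (-t) * Real.exp t = 1 := by
        rw [← Real.exp_add]; simp
      have h2 : (6/5)*t^2 * q ≤ (6/5)*t^2 * Real.exp (-t) :=
        mul_le_mul_of_nonneg_left hqe (by positivity)
      have h3 : (6/5)*t^2 * Real.exp (-t) ≤ (Real.exp t - 1) * Real.exp (-t) :=
        mul_le_mul_of_nonneg_right h1 (Real.exp_pos _).le
      have h4 : (Real.exp t - 1) * Real.exp (-t) = 1 - Real.exp (-t) := by
        nlinarith [he]
      have h5 : q ≤ Real.exp (-t) := hqe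
      linarith
    have hfac1 : (N-2)*(N-lam) ≤ N^2 := by nlinarith
    calc (N-2)*(N-lam)*(q*(Real.exp (lam*p) - lam*p - 1))
        ≤ N^2*(q*(Real.exp (lam*p) - lam*p - 1)) :=
          mul_le_mul_of_nonneg_right hfac1 (mul_nonneg hq0 hnn)
      _ ≤ N^2*(q*((6/5)*(lam*p)^2)) := by
          apply mul_le_mul_of_nonneg_left _ (by positivity)
          exact mul_le_mul_of_nonneg_left hEs hq0
      _ = ((6/5)*t^2*q)*lam^2 := by rw [ht]; ring
      _ ≤ (1-q)*lam^2 := mul_le_mul_of_nonneg_right hiq (sq_nonneg lam)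
  · -- large s
    have hl2 : 2 ≤ lam := by nlinarith
    have hlp : 0 < lam := by linarith
    set a := N - lam with ha
    have ha0 : 0 < a := hNl0
    have h2a : 2*a/lam ≤ a*p := by
      rw [div_le_iff₀ hlp]
      nlinarith
    have hqes : q * Real.exp (lam*p) ≤ Real.exp (-(a*p)) := by
      calc q * Real.exp (lam*p)
          ≤ Real.exp (-(N*p)) * Real.exp (lam*p) :=
            mul_le_mul_of_nonneg_right hqe (Real.exp_pos (lam*p)).le
        _ = Real.exp (-(N*p) + lam*p) := (Real.exp_add _ _).symm
        _ = Real.exp (-(a*p)) := by rw [ha]; ring_nf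
    have h3 : Real.exp (-(a*p)) ≤ Real.exp (-(2*a/lam)) :=
      Real.exp_le_exp.2 (by linarith)
    have h4 : Real.exp (-(2*a/lam)) ≤ lam^2/(2*a*N) := by
      have hq := Real.quadratic_le_exp_of_nonneg (by positivity : (0:ℝ) ≤ 2*a/lam)
      have hmul : 2*a*N ≤ lam^2 * Real.exp (2*a/lam) := by
        have e1 : lam^2 * (1 + 2*a/lam + (2*a/lam)^2/2) = lam^2 + 2*a*lam + 2*a^2 := by
          field_simp
        have e2 : lam^2 * (1 + 2*a/lam + (2*a/lam)^2/2) ≤ lam^2 * Real.exp (2*a/lam) :=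
          mul_le_mul_of_nonneg_left hq (sq_nonneg lam)
        have e3 : 2*a*N = 2*a^2 + 2*a*lam := by rw [ha]; ring
        linarith [sq_nonneg lam]
      rw [Real.exp_neg, inv_eq_one_div,
        div_le_div_iff₀ (Real.exp_pos _) (by positivity : (0:ℝ) < 2*a*N)]
      linarith [hmul]
    have hq2 : q ≤ 1/2 := by
      have hNp2 : 2 ≤ N*p := by nlinarith [mul_le_mul_of_nonneg_right hlN.le hp0]
      have e1 : Real.exp (-(N*p)) ≤ Real.exp (-2) := Real.exp_le_exp.2 (by linarith)
      have h32 : (2:ℝ) ≤ Real.exp 2 := by linarith [Real.add_one_le_exp (2:ℝ)]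
      have e2 : Real.exp (-2:ℝ) ≤ 1/2 := by
        have := one_div_le_one_div_of_le (by norm_num : (0:ℝ) < 2) h32
        rw [Real.exp_neg, inv_eq_one_div]
        linarith
      linarith
    have hstep : q*(Real.exp (lam*p) - lam*p - 1) ≤ lam^2/(2*a*N) := by
      have e1 : q*(Real.exp (lam*p) - lam*p - 1) ≤ q * Real.exp (lam*p) := by
        nlinarith
      linarith
    calc (N-2)*(N-lam)*(q*(Real.exp (lam*p) - lam*p - 1))
        ≤ (N-2)*a*(lam^2/(2*a*N)) := by
          rw [← ha]
          exact mul_le_mul_of_nonneg_left hstep (by positivity)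
      _ = ((N-2)/(2*N))*lam^2 := by field_simp
      _ ≤ (1/2)*lam^2 := by
          apply mul_le_mul_of_nonneg_right _ (sq_nonneg lam)
          rw [div_le_div_iff₀ (by linarith : (0:ℝ) < 2*N) (by norm_num : (0:ℝ) < 2)]
          nlinarith
      _ ≤ (1-q)*lam^2 := mul_le_mul_of_nonneg_right (by linarith) (sq_nonneg lam)

set_option maxHeartbeats 1000000 in

/-- In the Bernoulli product model, for every `n > 2` and `x ≥ 0`,
the missing mass satisfies the right-tail Chernoff bound
`P(M_n - E[M_n] ≥ x) ≤ exp(- n² v_n⁺ h(x/(n v_n⁺)))`, where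
`v_n⁺ = 2 E[K_n]/(n² - 2n) > 0` and `h(u) = 1 + u - √(1 + 2u)`. -/
theorem missing_mass_right_tail_concentration
    {Ω : Type*} [MeasurableSpace Ω] (P : Measure Ω) [IsProbabilityMeasure P]
    (p : ℕ → ℝ) (hp : ∀ j, p j ∈ Set.Icc (0 : ℝ) 1) (hsum : Summable p)
    (n : ℕ) (hn : 2 < n)
    (X : ℕ → Ω → ℕ) (hXmeas : ∀ j, Measurable (X j))
    (hindep : iIndepFun X P)
    (hbin : ∀ j k, P {ω | X j ω = k} =
      ENNReal.ofReal ((n.choose k : ℝ) * p j ^ k * (1 - p j) ^ (n - k)))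
    (M : Ω → ℝ) (hM : ∀ ω, M ω = ∑' j, if X j ω = 0 then p j else 0)
    (EM : ℝ) (hEM : EM = ∑' j, p j * (1 - p j) ^ n)
    (EK : ℝ) (hEK : EK = ∑' j, (1 - (1 - p j) ^ n))
    (v : ℝ) (hv : v = 2 * EK / ((n : ℝ) ^ 2 - 2 * (n : ℝ))) (hvpos : 0 < v)
    (h : ℝ → ℝ) (hh : ∀ u : ℝ, h u = 1 + u - Real.sqrt (1 + 2 * u)) :
    ∀ x : ℝ, 0 ≤ x →
      P {ω | x ≤ M ω - EM} ≤
        ENNReal.ofReal (Real.exp (-((n : ℝ) ^ 2 * v * h (x / ((n : ℝ) * v))))) := by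
  intro x hx
  set N : ℝ := (n : ℝ) with hNdef
  have hN3 : (3:ℝ) ≤ N := by
    rw [hNdef]; exact_mod_cast hn
  have hNpos : (0:ℝ) < N := by linarith
  -- basic facts about p and q
  set q : ℕ → ℝ := fun j => (1 - p j)^n with hqdef
  have hq0 : ∀ j, 0 ≤ q j := fun j => pow_nonneg (by linarith [(hp j).2]) n
  have hq1 : ∀ j, q j ≤ 1 := fun j =>
    pow_le_one₀ (by linarith [(hp j).2]) (by linarith [(hp j).1])
  have hqe : ∀ j, q j ≤ Real.exp (-(N*(p j))) := by
    intro j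
    have h1 : 1 - p j ≤ Real.exp (-(p j)) := by
      linarith [Real.add_one_le_exp (-(p j))]
    calc q j ≤ (Real.exp (-(p j)))^n :=
          pow_le_pow_left₀ (by linarith [(hp j).2]) h1 n
      _ = Real.exp (-(N*(p j))) := by
          rw [← Real.exp_nat_mul, hNdef]; ring_nf
  have h1q : ∀ j, 1 - q j ≤ N * p j := by
    intro j
    have hb := one_add_mul_le_pow (a := -(p j)) (by linarith [(hp j).2] : (-2:ℝ) ≤ -(p j)) n
    have he : ((1:ℝ) + -(p j)) = 1 - p j := by ring
    rw [he] at hb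
    have h2 : 1 - (n:ℝ) * p j ≤ (1 - p j) ^ n := by linarith [hb]
    simp only [hqdef]
    rw [hNdef]; linarith
  -- the random variables Y j
  set Y : ℕ → Ω → ℝ := fun j ω => if X j ω = 0 then p j else 0 with hYdef
  have hYmeas : ∀ j, Measurable (Y j) := by
    intro j
    exact Measurable.ite (hXmeas j (measurableSet_singleton 0))
      measurable_const measurable_const
  have hY0 : ∀ j ω, 0 ≤ Y j ω := by
    intro j ω; rw [hYdef]; dsimp only
    split <;> simp [(hp j).1]
  have hYle : ∀ j ω, Y j ω ≤ p j := by
    intro j ω; rw [hYdef]; dsimp only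
    split <;> simp [(hp j).1]
  have hYsum : ∀ ω, Summable (fun j => Y j ω) := fun ω =>
    Summable.of_nonneg_of_le (fun j => hY0 j ω) (fun j => hYle j ω) hsum
  have hMY : ∀ ω, M ω = ∑' j, Y j ω := hM
  -- measurability of M
  have hMmeas : Measurable M := by
    have hMeq : M = fun ω => (∑' j, ENNReal.ofReal (Y j ω)).toReal := by
      funext ω
      rw [hMY ω, ENNReal.tsum_toReal_eq (fun j => ENNReal.ofReal_ne_top)]
      exact tsum_congr fun j => (ENNReal.toReal_ofReal (hY0 j ω)).symm
    rw [hMeq]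
    exact (Measurable.ennreal_tsum fun j => (hYmeas j).ennreal_ofReal).ennreal_toReal
  -- lambda
  have hNv : 0 < N * v := mul_pos hNpos hvpos
  set u : ℝ := x / (N * v) with hudef
  have hu0 : 0 ≤ u := div_nonneg hx hNv.le
  set sq : ℝ := Real.sqrt (1 + 2*u) with hsqdef
  have hsq1 : 1 ≤ sq := by
    have h1 : Real.sqrt 1 ≤ sq := by
      rw [hsqdef]; exact Real.sqrt_le_sqrt (by linarith)
    simpa using h1
  have hsqpos : 0 < sq := by linarith
  have hsq2 : sq^2 = 1 + 2*u := Real.sq_sqrt (by linarith)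
  set lam : ℝ := N * (sq - 1) / sq with hlamdef
  have hlam0 : 0 ≤ lam := by
    apply div_nonneg _ hsqpos.le
    apply mul_nonneg hNpos.le; linarith
  have hNl : N - lam = N / sq := by
    rw [hlamdef]; field_simp; ring
  have hlamN : lam < N := by
    have : 0 < N / sq := div_pos hNpos hsqpos
    linarith [hNl]
  have hN2 : (0:ℝ) < N - 2 := by linarith
  have hNl0 : (0:ℝ) < N - lam := by linarith
  -- the constant C
  set C : ℝ := lam^2 / ((N-2)*(N-lam)) with hCdef
  have hC0 : 0 ≤ C := by positivity
  -- key per-index bound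
  have hbj : ∀ j, q j * (Real.exp (lam * p j) - 1) ≤ lam * (p j * q j) + (1 - q j) * C := by
    intro j
    have hk := mmrt_key hN3 (hp j).1 (hp j).2 hlam0 hlamN (hq0 j) (hqe j)
    have hA : (0:ℝ) < (N-2)*(N-lam) := mul_pos hN2 hNl0
    have h5 : q j * (Real.exp (lam * p j) - lam * p j - 1) ≤ (1 - q j) * C := by
      rw [hCdef]
      have he : (1 - q j) * (lam^2/((N-2)*(N-lam))) = ((1 - q j)*lam^2)/((N-2)*(N-lam)) := by
        ring
      rw [he, le_div_iff₀ hA]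
      nlinarith [hk]
    have he2 : q j * (Real.exp (lam * p j) - 1)
        = q j * (Real.exp (lam * p j) - lam * p j - 1) + lam * (p j * q j) := by ring
    linarith [h5]
  -- summability
  have hsum_pq : Summable (fun j => p j * q j) :=
    Summable.of_nonneg_of_le (fun j => mul_nonneg (hp j).1 (hq0 j))
      (fun j => by nlinarith [(hp j).1, (hq0 j), (hq1 j)]) hsum
  have hsum_1q : Summable (fun j => 1 - q j) :=
    Summable.of_nonneg_of_le (fun j => by linarith [hq1 j]) (fun j => h1q j)
      (hsum.mul_left N)
  have hf2sum : Summable (fun j => lam * (p j * q j) + (1 - q j) * C) :=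
    (hsum_pq.mul_left lam).add (hsum_1q.mul_right C)
  have hf20 : ∀ j, 0 ≤ lam * (p j * q j) + (1 - q j) * C := by
    intro j
    have h1 := hq1 j
    have h2 := hq0 j
    have h3 := (hp j).1
    have := mul_nonneg (by linarith : (0:ℝ) ≤ 1 - q j) hC0
    nlinarith [mul_nonneg hlam0 (mul_nonneg h3 h2)]
  have htsum_f2 : ∑' j, (lam * (p j * q j) + (1 - q j) * C) = lam * EM + EK * C := by
    rw [Summable.tsum_add (hsum_pq.mul_left lam) (hsum_1q.mul_right C), tsum_mul_left,
      tsum_mul_right, hEM, hEK]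
  -- independence of Y
  have hYindep : iIndepFun Y P := by
    have := hindep.comp (fun j (k : ℕ) => if k = 0 then p j else 0)
      (fun j => measurable_from_top)
    exact this
  -- mgf of each Y j
  have hmgf : ∀ j, mgf (Y j) P lam = 1 + (Real.exp (lam * p j) - 1) * q j := by
    intro j
    have hA : MeasurableSet {ω | X j ω = 0} := hXmeas j (measurableSet_singleton 0)
    have hPA : P {ω | X j ω = 0} = ENNReal.ofReal ((1 - p j)^n) := by
      have hb := hbin j 0
      simpa using hb
    have htR : (P {ω | X j ω = 0}).toReal = q j := by
      rw [hPA, ENNReal.toReal_ofReal (hq0 j)]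
    have hpt : (fun ω => Real.exp (lam * Y j ω)) =
        fun ω => 1 + Set.indicator {ω | X j ω = 0}
          (fun _ => Real.exp (lam * p j) - 1) ω := by
      funext ω
      by_cases hω : X j ω = 0
      · have hmem : ω ∈ {ω | X j ω = 0} := hω
        rw [Set.indicator_of_mem hmem]
        simp only [hYdef, hω, if_true]
        ring
      · have hmem : ω ∉ {ω | X j ω = 0} := hω
        rw [Set.indicator_of_notMem hmem]
        simp only [hYdef, hω, if_false]
        simp
    have hmgfeq : mgf (Y j) P lam = ∫ ω, Real.exp (lam * Y j ω) ∂P := rfl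
    rw [hmgfeq, hpt, integral_add (integrable_const 1)
      ((integrable_const _).indicator hA), integral_indicator_const _ hA]
    simp [htR]
    rw [measureReal_def, htR]
    ring
  have hmgf_le : ∀ j, mgf (Y j) P lam ≤ Real.exp (lam * (p j * q j) + (1 - q j) * C) := by
    intro j
    rw [hmgf j]
    have h2 : (Real.exp (lam * p j) - 1) * q j + 1 ≤ Real.exp ((Real.exp (lam * p j) - 1) * q j) :=
      Real.add_one_le_exp _
    have h3 : (Real.exp (lam * p j) - 1) * q j ≤ lam * (p j * q j) + (1 - q j) * C := by
      rw [mul_comm]; exact hbj j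
    linarith [Real.exp_le_exp.2 h3]
  -- partial sums
  have hSmeas : ∀ J : ℕ, Measurable (fun ω => ∑ j ∈ Finset.range J, Y j ω) :=
    fun J => Finset.measurable_sum _ (fun j _ => hYmeas j)
  have hSint : ∀ J : ℕ, Integrable (fun ω => Real.exp (lam * ∑ j ∈ Finset.range J, Y j ω)) P := by
    intro J
    refine Integrable.mono' (integrable_const (Real.exp (lam * ∑ j ∈ Finset.range J, p j)))
      (((hSmeas J).const_mul lam).exp.aestronglyMeasurable) (ae_of_all _ fun ω => ?_)
    rw [Real.norm_eq_abs, Real.abs_exp]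
    exact Real.exp_le_exp.2 (mul_le_mul_of_nonneg_left
      (Finset.sum_le_sum fun j _ => hYle j ω) hlam0)
  -- product bound for partial sums
  have hGJ : ∀ J : ℕ, ∫⁻ ω, ENNReal.ofReal (Real.exp (lam * ∑ j ∈ Finset.range J, Y j ω)) ∂P
      ≤ ENNReal.ofReal (Real.exp (lam * EM + EK * C)) := by
    intro J
    rw [← ofReal_integral_eq_lintegral_ofReal (hSint J)
      (ae_of_all _ fun ω => (Real.exp_pos _).le)]
    apply ENNReal.ofReal_le_ofReal
    have hprod : ∫ ω, Real.exp (lam * ∑ j ∈ Finset.range J, Y j ω) ∂P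
        = ∏ j ∈ Finset.range J, mgf (Y j) P lam := by
      rw [← hYindep.mgf_sum hYmeas (Finset.range J)]
      show (∫ ω, Real.exp (lam * ∑ j ∈ Finset.range J, Y j ω) ∂P)
        = ∫ ω, Real.exp (lam * (∑ i ∈ Finset.range J, Y i) ω) ∂P
      simp [Finset.sum_apply]
    rw [hprod]
    calc ∏ j ∈ Finset.range J, mgf (Y j) P lam
        ≤ ∏ j ∈ Finset.range J, Real.exp (lam * (p j * q j) + (1 - q j) * C) :=
          Finset.prod_le_prod (fun j _ => mgf_nonneg) (fun j _ => hmgf_le j)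
      _ = Real.exp (∑ j ∈ Finset.range J, (lam * (p j * q j) + (1 - q j) * C)) :=
          (Real.exp_sum _ _).symm
      _ ≤ Real.exp (lam * EM + EK * C) := by
          apply Real.exp_le_exp.2
          rw [← htsum_f2]
          exact Summable.sum_le_tsum _ (fun j _ => hf20 j) hf2sum
  -- monotone convergence
  have hlint : ∫⁻ ω, ENNReal.ofReal (Real.exp (lam * M ω)) ∂P
      ≤ ENNReal.ofReal (Real.exp (lam * EM + EK * C)) := by
    have hmono : ∀ ω, Monotone
        (fun J => ENNReal.ofReal (Real.exp (lam * ∑ j ∈ Finset.range J, Y j ω))) := by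
      intro ω J1 J2 hJ
      apply ENNReal.ofReal_le_ofReal
      apply Real.exp_le_exp.2
      apply mul_le_mul_of_nonneg_left _ hlam0
      exact Finset.sum_le_sum_of_subset_of_nonneg (Finset.range_subset_range.2 hJ)
        (fun j _ _ => hY0 j ω)
    have htends : ∀ ω, Filter.Tendsto
        (fun J => ENNReal.ofReal (Real.exp (lam * ∑ j ∈ Finset.range J, Y j ω)))
        Filter.atTop (nhds (ENNReal.ofReal (Real.exp (lam * M ω)))) := by
      intro ω
      have h1 : Filter.Tendsto (fun J => ∑ j ∈ Finset.range J, Y j ω)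
          Filter.atTop (nhds (M ω)) := by
        rw [hMY ω]; exact (hYsum ω).hasSum.tendsto_sum_nat
      exact (ENNReal.continuous_ofReal.tendsto _).comp
        ((Real.continuous_exp.tendsto _).comp (h1.const_mul lam))
    have hMCT := lintegral_tendsto_of_tendsto_of_monotone (μ := P)
      (f := fun J ω => ENNReal.ofReal (Real.exp (lam * ∑ j ∈ Finset.range J, Y j ω)))
      (F := fun ω => ENNReal.ofReal (Real.exp (lam * M ω)))
      (fun J => (((hSmeas J).const_mul lam).exp.ennreal_ofReal).aemeasurable)
      (ae_of_all _ hmono) (ae_of_all _ htends)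
    exact le_of_tendsto' hMCT hGJ
  -- Markov / Chernoff
  have hfinal : lam * EM + EK * C - lam * (x + EM) = -(N^2 * v * h (x / (N * v))) := by
    have hEKv : EK = v * (N^2 - 2*N) / 2 := by
      have hd : N^2 - 2*N ≠ 0 := by nlinarith
      field_simp at hv
      linarith
    have hxu : x = u * (N * v) := by
      rw [hudef]; field_simp
    have hhu : h u = 1 + u - sq := by
      rw [hh u, ← hsqdef]
    have hu2 : u = (sq^2 - 1)/2 := by linarith [hsq2]
    have hgoal : lam * EM + EK * C - lam * (x + EM) = EK * C - lam * x := by ring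
    rw [hgoal, hhu, hEKv, hCdef, hNl, hxu, hlamdef, hu2]
    field_simp
    ring
  -- Markov inequality and conclusion
  have hgmeas : Measurable (fun ω => ENNReal.ofReal (Real.exp (lam * M ω))) :=
    ((hMmeas.const_mul lam).exp).ennreal_ofReal
  have hsub : {ω | x ≤ M ω - EM} ⊆ {ω | ENNReal.ofReal (Real.exp (lam * (x + EM)))
      ≤ ENNReal.ofReal (Real.exp (lam * M ω))} := by
    intro ω hω
    simp only [Set.mem_setOf_eq] at hω ⊢
    exact ENNReal.ofReal_le_ofReal (Real.exp_le_exp.2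
      (mul_le_mul_of_nonneg_left (by linarith) hlam0))
  have hε0 : ENNReal.ofReal (Real.exp (lam * (x + EM))) ≠ 0 := by
    simp [ENNReal.ofReal_eq_zero, not_le, Real.exp_pos]
  have hεtop : ENNReal.ofReal (Real.exp (lam * (x + EM))) ≠ ⊤ := ENNReal.ofReal_ne_top
  calc P {ω | x ≤ M ω - EM}
      ≤ P {ω | ENNReal.ofReal (Real.exp (lam * (x + EM)))
          ≤ ENNReal.ofReal (Real.exp (lam * M ω))} := measure_mono hsub
    _ ≤ (∫⁻ ω, ENNReal.ofReal (Real.exp (lam * M ω)) ∂P)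
          / ENNReal.ofReal (Real.exp (lam * (x + EM))) :=
        meas_ge_le_lintegral_div hgmeas.aemeasurable hε0 hεtop
    _ ≤ ENNReal.ofReal (Real.exp (lam * EM + EK * C))
          / ENNReal.ofReal (Real.exp (lam * (x + EM))) :=
        ENNReal.div_le_div_right hlint _
    _ = ENNReal.ofReal (Real.exp ((lam * EM + EK * C) - (lam * (x + EM)))) := by
        rw [Real.exp_sub, ENNReal.ofReal_div_of_pos (Real.exp_pos _)]
    _ = ENNReal.ofReal (Real.exp (-(N^2 * v * h (x / (N * v))))) := by rw [hfinal]
end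

section
/- For every integer n ≥ 1 and every integer r ≥ 1, the statistic K_{n,r} is sub-Poisson with variance factor E[K_{n,r}]: for every λ ∈ ℝ, log E[ e^{λ(K_{n,r} − E[K_{n,r}])} ] ≤ φ(λ)·E[K_{n,r}], where φ(λ) = e^λ − 1 − λ. -/
open MeasureTheory ProbabilityTheory Filter

/-- In the Bernoulli product model (independent counts
`X_{n,j} ~ Binomial(n, p_j)`), for `n ≥ 1`, `r ≥ 1`, the statistic
`K_{n,r} = Σ_j 1{X_{n,j} = r}` is sub-Poisson with variance factor `E[K_{n,r}]`:
for every real `λ`, `log E[exp(λ(K_{n,r} - E[K_{n,r}]))] ≤ (e^λ - 1 - λ) E[K_{n,r}]`. -/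
theorem K_nr_subPoisson
    {Ω : Type*} [MeasurableSpace Ω] (P : Measure Ω) [IsProbabilityMeasure P]
    (p : ℕ → ℝ) (hp : ∀ j, p j ∈ Set.Icc (0 : ℝ) 1) (hsum : Summable p)
    (n : ℕ) (hn : 1 ≤ n) (r : ℕ) (hr : 1 ≤ r)
    (X : ℕ → Ω → ℕ) (hXmeas : ∀ j, Measurable (X j))
    (hindep : iIndepFun X P)
    (hbin : ∀ j k, P {ω | X j ω = k} =
      ENNReal.ofReal ((n.choose k : ℝ) * p j ^ k * (1 - p j) ^ (n - k)))
    (K : Ω → ℝ) (hK : ∀ ω, K ω = ∑' j, if X j ω = r then (1 : ℝ) else 0)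
    (EK : ℝ) (hEK : EK = ∑' j, (n.choose r : ℝ) * p j ^ r * (1 - p j) ^ (n - r)) :
    ∀ lam : ℝ,
      Real.log (∫ ω, Real.exp (lam * (K ω - EK)) ∂P) ≤
        (Real.exp lam - 1 - lam) * EK := by
  intro lam
  -- the success probabilities
  set q : ℕ → ℝ := fun j => (n.choose r : ℝ) * p j ^ r * (1 - p j) ^ (n - r) with hqdef
  have hq0 : ∀ j, 0 ≤ q j := by
    intro j
    have h1 := (hp j).1; have h2 := (hp j).2
    have : (0:ℝ) ≤ 1 - p j := by linarith
    positivity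
  have hqle : ∀ j, q j ≤ (n.choose r : ℝ) * p j := by
    intro j
    have h1 := (hp j).1; have h2 := (hp j).2
    have h3 : (0:ℝ) ≤ 1 - p j := by linarith
    have hpr : p j ^ r ≤ p j := by
      calc p j ^ r ≤ p j ^ 1 := pow_le_pow_of_le_one h1 h2 hr
      _ = p j := pow_one _
    have h4 : (1 - p j) ^ (n - r) ≤ 1 := pow_le_one₀ h3 (by linarith)
    calc (n.choose r : ℝ) * p j ^ r * (1 - p j) ^ (n - r)
        ≤ (n.choose r : ℝ) * p j ^ r * 1 := by
          apply mul_le_mul_of_nonneg_left h4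
          positivity
      _ = (n.choose r : ℝ) * p j ^ r := by ring
      _ ≤ (n.choose r : ℝ) * p j := by
          apply mul_le_mul_of_nonneg_left hpr
          positivity
  have hqsum : Summable q :=
    (hsum.mul_left ((n.choose r : ℝ))).of_nonneg_of_le hq0 hqle
  have hEKsum : HasSum q EK := by rw [hEK]; exact hqsum.hasSum
  have hEK0 : 0 ≤ EK := hEKsum.nonneg hq0
  have hphi0 : 0 ≤ Real.exp lam - 1 - lam := by
    have := Real.add_one_le_exp lam; linarith
  -- the events
  have hAmeas : ∀ j, MeasurableSet {ω | X j ω = r} := fun j =>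
    hXmeas j (measurableSet_singleton r)
  have hPA : ∀ j, P {ω | X j ω = r} = ENNReal.ofReal (q j) := fun j => hbin j r
  have hq1 : ∀ j, q j ≤ 1 := by
    intro j
    have h := hPA j
    have hle : P {ω | X j ω = r} ≤ 1 := prob_le_one
    rw [h] at hle
    exact (ENNReal.ofReal_le_one).1 hle
  -- the bounded factors
  set Y : ℕ → Ω → ℝ := fun j ω => if X j ω = r then Real.exp lam else 1 with hYdef
  have hYmeas : ∀ j, Measurable (Y j) := by
    intro j
    have : Y j = (fun k => if k = r then Real.exp lam else 1) ∘ X j := rfl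
    rw [this]
    exact (measurable_from_top).comp (hXmeas j)
  have hYindep : iIndepFun Y P := by
    have := hindep.comp (fun j (k : ℕ) => if k = r then Real.exp lam else 1)
      (fun j => measurable_from_top)
    exact this
  have hYbd : ∀ j ω, ‖Y j ω‖ ≤ max 1 (Real.exp lam) := by
    intro j ω
    rw [Real.norm_eq_abs]
    by_cases h : X j ω = r <;> simp [hYdef, h, abs_of_pos, Real.exp_pos,
      (Real.exp_pos lam).le, le_max_left, le_max_right]
  have hYint : ∀ j, Integrable (Y j) P := by
    intro j
    exact (integrable_const (max 1 (Real.exp lam))).mono'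
      (hYmeas j).aestronglyMeasurable (Filter.Eventually.of_forall (hYbd j))
  have hYval : ∀ j, ∫ ω, Y j ω ∂P = 1 + q j * (Real.exp lam - 1) := by
    intro j
    have hYsplit : ∀ ω, Y j ω =
        ({ω | X j ω = r} : Set Ω).indicator (fun _ => Real.exp lam - 1) ω + 1 := by
      intro ω
      by_cases h : X j ω = r <;> simp [hYdef, Set.indicator_apply, h]
    calc ∫ ω, Y j ω ∂P
        = ∫ ω, (({ω | X j ω = r} : Set Ω).indicator (fun _ => Real.exp lam - 1) ω + 1) ∂P := by
          exact integral_congr_ae (Filter.Eventually.of_forall hYsplit)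
      _ = (∫ ω, ({ω | X j ω = r} : Set Ω).indicator (fun _ => Real.exp lam - 1) ω ∂P) + 1 := by
          rw [integral_add ((integrable_const _).indicator (hAmeas j)) (integrable_const 1)]
          simp
      _ = (P {ω | X j ω = r}).toReal * (Real.exp lam - 1) + 1 := by
          rw [integral_indicator_const _ (hAmeas j)]; simp [mul_comm, measureReal_def]
      _ = 1 + q j * (Real.exp lam - 1) := by
          rw [hPA j, ENNReal.toReal_ofReal (hq0 j)]; ring
  -- partial products / partial sums
  have hprod : ∀ m, Integrable (∏ j ∈ Finset.range m, Y j) P ∧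
      ∫ ω, (∏ j ∈ Finset.range m, Y j) ω ∂P
        = ∏ j ∈ Finset.range m, (1 + q j * (Real.exp lam - 1)) := by
    intro m
    induction m with
    | zero =>
      constructor
      · rw [Finset.range_zero, Finset.prod_empty]; exact integrable_const 1
      · simp
    | succ m ih =>
      have hind : IndepFun (∏ j ∈ Finset.range m, Y j) (Y m) P :=
        hYindep.indepFun_prod_range_succ hYmeas m
      have hint : Integrable (∏ j ∈ Finset.range (m+1), Y j) P := by
        rw [Finset.prod_range_succ]
        exact hind.integrable_mul ih.1 (hYint m)
      refine ⟨hint, ?_⟩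
      rw [Finset.prod_range_succ, Finset.prod_range_succ,
        hind.integral_mul_eq_mul_integral ih.1.aestronglyMeasurable (hYint m).aestronglyMeasurable, ih.2, hYval m]
  -- L^1 bound for partial products
  have hfac_nonneg : ∀ j, 0 ≤ 1 + q j * (Real.exp lam - 1) := by
    intro j
    have h1 := hq0 j; have h2 := hq1 j
    have : 1 + q j * (Real.exp lam - 1) = (1 - q j) + q j * Real.exp lam := by ring
    rw [this]
    have := (Real.exp_pos lam).le
    have : 0 ≤ q j * Real.exp lam := by positivity
    nlinarith
  have hprod_le : ∀ m, ∏ j ∈ Finset.range m, (1 + q j * (Real.exp lam - 1))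
      ≤ Real.exp ((Real.exp lam - 1) * ∑ j ∈ Finset.range m, q j) := by
    intro m
    calc ∏ j ∈ Finset.range m, (1 + q j * (Real.exp lam - 1))
        ≤ ∏ j ∈ Finset.range m, Real.exp (q j * (Real.exp lam - 1)) := by
          apply Finset.prod_le_prod (fun j _ => hfac_nonneg j)
          intro j _
          have := Real.add_one_le_exp (q j * (Real.exp lam - 1))
          linarith
      _ = Real.exp (∑ j ∈ Finset.range m, q j * (Real.exp lam - 1)) := (Real.exp_sum _ _).symm
      _ = Real.exp ((Real.exp lam - 1) * ∑ j ∈ Finset.range m, q j) := by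
          rw [← Finset.sum_mul, mul_comm]
  -- Borel–Cantelli: a.e. only finitely many events occur, hence K is the limit of partial sums
  have hBC : ∀ᵐ ω ∂P, Tendsto (fun m => ∑ j ∈ Finset.range m, (if X j ω = r then (1:ℝ) else 0))
      atTop (nhds (K ω)) := by
    have hsumP : ∑' j, P {ω | X j ω = r} ≠ ⊤ := by
      have : ∑' j, P {ω | X j ω = r} = ENNReal.ofReal (∑' j, q j) := by
        simp_rw [hPA]
        exact (ENNReal.ofReal_tsum_of_nonneg hq0 hqsum).symm
      rw [this]; exact ENNReal.ofReal_ne_top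
    have hfreq : P {ω | ∃ᶠ j in atTop, X j ω = r} = 0 :=
      measure_setOf_frequently_eq_zero hsumP
    have : ∀ᵐ ω ∂P, ¬ (∃ᶠ j in atTop, X j ω = r) := by
      rw [ae_iff]; simp only [not_not]; exact hfreq
    filter_upwards [this] with ω hω
    rw [Filter.not_frequently] at hω
    rw [Filter.eventually_atTop] at hω
    obtain ⟨N, hN⟩ := hω
    have hsupp : ∀ j ∉ Finset.range N, (if X j ω = r then (1:ℝ) else 0) = 0 := by
      intro j hj
      simp only [Finset.mem_range, not_lt] at hj
      simp [hN j hj]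
    have hsummable : Summable (fun j => if X j ω = r then (1:ℝ) else 0) :=
      summable_of_ne_finset_zero hsupp
    have : HasSum (fun j => if X j ω = r then (1:ℝ) else 0) (K ω) := by
      rw [hK ω]; exact hsummable.hasSum
    exact this.tendsto_sum_nat
  -- Fatou argument in the lintegral world
  set Km : ℕ → Ω → ℝ := fun m ω => ∑ j ∈ Finset.range m, (if X j ω = r then (1:ℝ) else 0)
    with hKmdef
  have hKmmeas : ∀ m, Measurable (Km m) := by
    intro m
    apply Finset.measurable_sum
    intro j _
    exact Measurable.ite (hXmeas j (measurableSet_singleton r)) measurable_const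
      measurable_const
  set g : ℕ → Ω → ENNReal := fun m ω => ENNReal.ofReal (Real.exp (lam * (Km m ω - EK)))
    with hgdef
  have hgmeas : ∀ m, Measurable (g m) := by
    intro m
    exact ((Real.measurable_exp.comp (((hKmmeas m).sub measurable_const).const_mul lam))).ennreal_ofReal
  have hgtend : ∀ᵐ ω ∂P, Tendsto (fun m => g m ω) atTop
      (nhds (ENNReal.ofReal (Real.exp (lam * (K ω - EK))))) := by
    filter_upwards [hBC] with ω hω
    apply (ENNReal.continuous_ofReal.tendsto _).comp
    apply (Real.continuous_exp.tendsto _).comp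
    exact (hω.sub_const EK).const_mul lam
  -- relate exp(lam*Km) to the product of Y's
  have hexpKm : ∀ m ω, Real.exp (lam * (Km m ω - EK)) =
      Real.exp (-(lam * EK)) * (∏ j ∈ Finset.range m, Y j) ω := by
    intro m ω
    have h1 : lam * (Km m ω - EK) =
        -(lam * EK) + ∑ j ∈ Finset.range m, lam * (if X j ω = r then (1:ℝ) else 0) := by
      rw [← Finset.mul_sum]
      simp only [hKmdef]
      ring
    rw [h1, Real.exp_add, Real.exp_sum, Finset.prod_apply]
    congr 1
    apply Finset.prod_congr rfl
    intro j _
    by_cases h : X j ω = r <;> simp [hYdef, h]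
  have hFmint : ∀ m, Integrable (fun ω => Real.exp (lam * (Km m ω - EK))) P := by
    intro m
    exact (((hprod m).1.const_mul (Real.exp (-(lam * EK)))).congr
      (Filter.Eventually.of_forall fun ω => (hexpKm m ω).symm))
  have hglint : ∀ m, ∫⁻ ω, g m ω ∂P ≤
      ENNReal.ofReal (Real.exp (-(lam * EK)) *
        Real.exp ((Real.exp lam - 1) * ∑ j ∈ Finset.range m, q j)) := by
    intro m
    rw [hgdef]
    simp only
    rw [← ofReal_integral_eq_lintegral_ofReal (hFmint m)
      (Filter.Eventually.of_forall fun ω => (Real.exp_pos _).le)]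
    apply ENNReal.ofReal_le_ofReal
    have heq : ∫ ω, Real.exp (lam * (Km m ω - EK)) ∂P
        = Real.exp (-(lam * EK)) * ∏ j ∈ Finset.range m, (1 + q j * (Real.exp lam - 1)) := by
      rw [← (hprod m).2, ← MeasureTheory.integral_const_mul]
      exact integral_congr_ae (Filter.Eventually.of_forall fun ω => hexpKm m ω)
    rw [heq]
    exact mul_le_mul_of_nonneg_left (hprod_le m) (Real.exp_pos _).le
  have hb_tend : Tendsto (fun m => ENNReal.ofReal (Real.exp (-(lam * EK)) *
      Real.exp ((Real.exp lam - 1) * ∑ j ∈ Finset.range m, q j))) atTop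
      (nhds (ENNReal.ofReal (Real.exp ((Real.exp lam - 1 - lam) * EK)))) := by
    have hs : Tendsto (fun m => ∑ j ∈ Finset.range m, q j) atTop (nhds EK) :=
      hEKsum.tendsto_sum_nat
    have h2 : Tendsto (fun m => Real.exp (-(lam * EK)) *
        Real.exp ((Real.exp lam - 1) * ∑ j ∈ Finset.range m, q j)) atTop
        (nhds (Real.exp (-(lam * EK)) * Real.exp ((Real.exp lam - 1) * EK))) :=
      (((Real.continuous_exp.tendsto _).comp (hs.const_mul (Real.exp lam - 1))).const_mul _)
    have heq : Real.exp (-(lam * EK)) * Real.exp ((Real.exp lam - 1) * EK)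
        = Real.exp ((Real.exp lam - 1 - lam) * EK) := by
      rw [← Real.exp_add]; ring_nf
    rw [heq] at h2
    exact (ENNReal.continuous_ofReal.tendsto _).comp h2
  have hkey : ∫⁻ ω, ENNReal.ofReal (Real.exp (lam * (K ω - EK))) ∂P ≤
      ENNReal.ofReal (Real.exp ((Real.exp lam - 1 - lam) * EK)) := by
    have h1 : ∫⁻ ω, ENNReal.ofReal (Real.exp (lam * (K ω - EK))) ∂P
        = ∫⁻ ω, liminf (fun m => g m ω) atTop ∂P := by
      apply lintegral_congr_ae
      filter_upwards [hgtend] with ω hω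
      exact hω.liminf_eq.symm
    rw [h1]
    calc ∫⁻ ω, liminf (fun m => g m ω) atTop ∂P
        ≤ liminf (fun m => ∫⁻ ω, g m ω ∂P) atTop := lintegral_liminf_le hgmeas
      _ ≤ liminf (fun m => ENNReal.ofReal (Real.exp (-(lam * EK)) *
            Real.exp ((Real.exp lam - 1) * ∑ j ∈ Finset.range m, q j))) atTop :=
          liminf_le_liminf (Filter.Eventually.of_forall hglint)
      _ = ENNReal.ofReal (Real.exp ((Real.exp lam - 1 - lam) * EK)) := hb_tend.liminf_eq
  have hKaem : AEMeasurable K P :=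
    aemeasurable_of_tendsto_metrizable_ae atTop (fun m => (hKmmeas m).aemeasurable) hBC
  have hFmeas : AEStronglyMeasurable (fun ω => Real.exp (lam * (K ω - EK))) P :=
    (Real.measurable_exp.comp_aemeasurable
      (((hKaem.sub aemeasurable_const).const_mul lam))).aestronglyMeasurable
  have hI : ∫ ω, Real.exp (lam * (K ω - EK)) ∂P
      = (∫⁻ ω, ENNReal.ofReal (Real.exp (lam * (K ω - EK))) ∂P).toReal :=
    integral_eq_lintegral_of_nonneg_ae
      (Filter.Eventually.of_forall fun ω => (Real.exp_pos _).le) hFmeas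
  have hIle : ∫ ω, Real.exp (lam * (K ω - EK)) ∂P ≤
      Real.exp ((Real.exp lam - 1 - lam) * EK) := by
    rw [hI]
    calc (∫⁻ ω, ENNReal.ofReal (Real.exp (lam * (K ω - EK))) ∂P).toReal
        ≤ (ENNReal.ofReal (Real.exp ((Real.exp lam - 1 - lam) * EK))).toReal :=
          ENNReal.toReal_mono ENNReal.ofReal_ne_top hkey
      _ = Real.exp ((Real.exp lam - 1 - lam) * EK) :=
          ENNReal.toReal_ofReal (Real.exp_pos _).le
  have hInonneg : 0 ≤ ∫ ω, Real.exp (lam * (K ω - EK)) ∂P :=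
    integral_nonneg fun ω => (Real.exp_pos _).le
  rcases eq_or_lt_of_le hInonneg with h0 | h0
  · rw [← h0, Real.log_zero]
    exact mul_nonneg hphi0 hEK0
  · rw [Real.log_le_iff_le_exp h0]
    exact hIle
end

section
/- For every integer n > 2: |Φ_n − E[K_n]| ≤ (2/n)·Φ_{n,2} ≤ (2/n)·Φ_n, and consequently Φ_n ≤ E[K_n]/(1 − 2/n), where E[K_n] = Σ_{j≥1} (1 − (1−p_j)^n). -/
open Real

private lemma pt_exp_sub_pow {x : ℝ} (hx0 : 0 ≤ x) (hx1 : x ≤ 1) (n : ℕ) :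
    0 ≤ Real.exp (-((n : ℝ) * x)) - (1 - x) ^ n ∧
    Real.exp (-((n : ℝ) * x)) - (1 - x) ^ n ≤ (n : ℝ) * x ^ 2 * Real.exp (-((n : ℝ) * x)) := by
  have h1x : (0 : ℝ) ≤ 1 - x := by linarith
  have hle : (1 - x) ≤ Real.exp (-x) := by
    have := Real.add_one_le_exp (-x); linarith
  have hpow : (1 - x) ^ n ≤ Real.exp (-((n : ℝ) * x)) := by
    calc (1 - x) ^ n ≤ (Real.exp (-x)) ^ n := pow_le_pow_left₀ h1x hle n
      _ = Real.exp (-((n : ℝ) * x)) := by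
          rw [← Real.exp_nat_mul]; ring_nf
  refine ⟨by linarith, ?_⟩
  set t : ℝ := (1 - x) * Real.exp x with ht
  have ht0 : 0 ≤ t := mul_nonneg h1x (Real.exp_pos x).le
  have ht1 : t ≤ 1 := by
    have : (1 - x) * Real.exp x ≤ Real.exp (-x) * Real.exp x :=
      mul_le_mul_of_nonneg_right hle (Real.exp_pos x).le
    rwa [← Real.exp_add, neg_add_cancel, Real.exp_zero] at this
  have htx : 1 - t ≤ x ^ 2 := by
    have hexp : 1 + x ≤ Real.exp x := by have := Real.add_one_le_exp x; linarith
    have : (1 - x) * (1 + x) ≤ (1 - x) * Real.exp x := mul_le_mul_of_nonneg_left hexp h1x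
    nlinarith
  have hkey : (1 - x) ^ n = Real.exp (-((n : ℝ) * x)) * t ^ n := by
    rw [ht, mul_pow, ← Real.exp_nat_mul, mul_left_comm, ← Real.exp_add]
    simp
  have hbern : 1 + (n : ℝ) * (t - 1) ≤ t ^ n := by
    have := one_add_mul_le_pow (a := t - 1) (by linarith) n
    simpa using this
  have h1tn : 1 - t ^ n ≤ (n : ℝ) * (1 - t) := by nlinarith
  have hepos : (0 : ℝ) < Real.exp (-((n : ℝ) * x)) := Real.exp_pos _
  have hn0 : (0 : ℝ) ≤ (n : ℝ) := Nat.cast_nonneg n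
  calc Real.exp (-((n : ℝ) * x)) - (1 - x) ^ n
      = Real.exp (-((n : ℝ) * x)) * (1 - t ^ n) := by rw [hkey]; ring
    _ ≤ Real.exp (-((n : ℝ) * x)) * ((n : ℝ) * (1 - t)) :=
        mul_le_mul_of_nonneg_left h1tn hepos.le
    _ ≤ Real.exp (-((n : ℝ) * x)) * ((n : ℝ) * x ^ 2) := by
        apply mul_le_mul_of_nonneg_left _ hepos.le
        exact mul_le_mul_of_nonneg_left htx hn0
    _ = (n : ℝ) * x ^ 2 * Real.exp (-((n : ℝ) * x)) := by ring

private lemma pt_quad {y : ℝ} (hy : 0 ≤ y) :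
    y ^ 2 * Real.exp (-y) / 2 ≤ 1 - Real.exp (-y) := by
  have h := Real.quadratic_le_exp_of_nonneg hy
  have hepos : (0 : ℝ) < Real.exp (-y) := Real.exp_pos _
  have hmul : (1 + y + y ^ 2 / 2) * Real.exp (-y) ≤ Real.exp y * Real.exp (-y) :=
    mul_le_mul_of_nonneg_right h hepos.le
  rw [← Real.exp_add, add_neg_cancel, Real.exp_zero] at hmul
  nlinarith [mul_nonneg hy hepos.le]

/-- For `(p_j)` in `[0,1]` summable and `n > 2`, with
`Φ_n = Σ_j (1 - e^{-n p_j})`, `Φ_{n,2} = Σ_j (n p_j)² e^{-n p_j}/2!` and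
`E[K_n] = Σ_j (1 - (1-p_j)^n)`:
`|Φ_n - E[K_n]| ≤ (2/n) Φ_{n,2} ≤ (2/n) Φ_n`, and consequently
`Φ_n ≤ E[K_n]/(1 - 2/n)`. -/
theorem Phi_n_vs_expected_distinct_features
    (p : ℕ → ℝ) (hp : ∀ j, p j ∈ Set.Icc (0 : ℝ) 1) (hsum : Summable p)
    (n : ℕ) (hn : 2 < n)
    (Phin Phin2 EK : ℝ)
    (hPhin : Phin = ∑' j, (1 - Real.exp (-((n : ℝ) * p j))))
    (hPhin2 : Phin2 = ∑' j, ((n : ℝ) * p j) ^ 2 * Real.exp (-((n : ℝ) * p j)) / (Nat.factorial 2))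
    (hEK : EK = ∑' j, (1 - (1 - p j) ^ n)) :
    |Phin - EK| ≤ 2 / (n : ℝ) * Phin2 ∧
    2 / (n : ℝ) * Phin2 ≤ 2 / (n : ℝ) * Phin ∧
    Phin ≤ EK / (1 - 2 / (n : ℝ)) := by
  have hnpos : (0 : ℝ) < n := by positivity
  have hp0 : ∀ j, 0 ≤ p j := fun j => (hp j).1
  have hp1 : ∀ j, p j ≤ 1 := fun j => (hp j).2
  -- abbreviations
  set a : ℕ → ℝ := fun j => 1 - Real.exp (-((n : ℝ) * p j)) with ha
  set b : ℕ → ℝ := fun j => ((n : ℝ) * p j) ^ 2 * Real.exp (-((n : ℝ) * p j)) / (Nat.factorial 2) with hb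
  set c : ℕ → ℝ := fun j => 1 - (1 - p j) ^ n with hc
  have hb' : ∀ j, b j = ((n : ℝ) * p j) ^ 2 * Real.exp (-((n : ℝ) * p j)) / 2 := by
    intro j; simp [hb, Nat.factorial]
  have ha_nonneg : ∀ j, 0 ≤ a j := by
    intro j
    have : Real.exp (-((n : ℝ) * p j)) ≤ 1 := by
      rw [Real.exp_le_one_iff]
      have := mul_nonneg hnpos.le (hp0 j); linarith
    simp only [ha]; linarith
  have hb_nonneg : ∀ j, 0 ≤ b j := by intro j; rw [hb']; positivity
  have hba : ∀ j, b j ≤ a j := by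
    intro j
    rw [hb']
    exact pt_quad (mul_nonneg hnpos.le (hp0 j))
  have ha_le : ∀ j, a j ≤ (n : ℝ) * p j := by
    intro j
    have := Real.add_one_le_exp (-((n : ℝ) * p j))
    simp only [ha]; linarith
  have hc_nonneg : ∀ j, 0 ≤ c j := by
    intro j
    have h1 : (0:ℝ) ≤ 1 - p j := by linarith [hp1 j]
    have h2 : (1 - p j) ^ n ≤ 1 := pow_le_one₀ h1 (by linarith [hp0 j])
    simp only [hc]; linarith
  have hc_le : ∀ j, c j ≤ (n : ℝ) * p j := by
    intro j
    have hbern := one_add_mul_le_pow (a := -(p j)) (by linarith [hp1 j]) n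
    simp only [hc]
    have h2 : ((1:ℝ) + -(p j)) = 1 - p j := by ring
    rw [h2] at hbern
    linarith
  -- summabilities
  have hsumn : Summable (fun j => (n : ℝ) * p j) := hsum.mul_left _
  have hsa : Summable a := hsumn.of_nonneg_of_le ha_nonneg ha_le
  have hsb : Summable b := hsa.of_nonneg_of_le hb_nonneg hba
  have hsc : Summable c := hsumn.of_nonneg_of_le hc_nonneg hc_le
  -- pointwise bound |a - c| ≤ (2/n) * b
  have hac : ∀ j, |a j - c j| ≤ 2 / (n : ℝ) * b j := by
    intro j
    obtain ⟨h0, h1⟩ := pt_exp_sub_pow (hp0 j) (hp1 j) n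
    have heq : a j - c j = (1 - p j) ^ n - Real.exp (-((n : ℝ) * p j)) := by
      simp only [ha, hc]; ring
    rw [heq, abs_sub_comm, abs_of_nonneg h0, hb']
    have : 2 / (n : ℝ) * (((n : ℝ) * p j) ^ 2 * Real.exp (-((n : ℝ) * p j)) / 2)
        = (n : ℝ) * p j ^ 2 * Real.exp (-((n : ℝ) * p j)) := by
      field_simp
    rw [this]; exact h1
  constructor
  · -- |Phin - EK| ≤ 2/n * Phin2
    have hdiff : Phin - EK = ∑' j, (a j - c j) := by
      rw [hPhin, hEK, ← Summable.tsum_sub hsa hsc]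
    rw [hdiff]
    calc |∑' j, (a j - c j)| ≤ ∑' j, |a j - c j| := by
          simpa using norm_tsum_le_tsum_norm (f := fun j => a j - c j)
            (by simpa using (hsa.sub hsc).abs)
      _ ≤ ∑' j, 2 / (n : ℝ) * b j := by
          apply Summable.tsum_le_tsum hac ((hsa.sub hsc).abs) (hsb.mul_left _)
      _ = 2 / (n : ℝ) * Phin2 := by rw [hPhin2, tsum_mul_left]
  constructor
  · -- 2/n * Phin2 ≤ 2/n * Phin
    have : Phin2 ≤ Phin := by
      rw [hPhin2, hPhin]
      exact Summable.tsum_le_tsum hba hsb hsa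
    apply mul_le_mul_of_nonneg_left this (by positivity)
  · -- Phin ≤ EK / (1 - 2/n)
    have h2n : (0 : ℝ) < 1 - 2 / n := by
      rw [sub_pos, div_lt_one hnpos]
      exact_mod_cast hn
    rw [le_div_iff₀ h2n]
    -- need Phin * (1 - 2/n) ≤ EK, i.e. Phin - EK ≤ 2/n * Phin
    have h1 : |Phin - EK| ≤ 2 / (n : ℝ) * Phin2 := by
      have hdiff : Phin - EK = ∑' j, (a j - c j) := by
        rw [hPhin, hEK, ← Summable.tsum_sub hsa hsc]
      rw [hdiff]
      calc |∑' j, (a j - c j)| ≤ ∑' j, |a j - c j| := by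
            simpa using norm_tsum_le_tsum_norm (f := fun j => a j - c j)
              (by simpa using (hsa.sub hsc).abs)
        _ ≤ ∑' j, 2 / (n : ℝ) * b j := by
            apply Summable.tsum_le_tsum hac ((hsa.sub hsc).abs) (hsb.mul_left _)
        _ = 2 / (n : ℝ) * Phin2 := by rw [hPhin2, tsum_mul_left]
    have h2 : Phin2 ≤ Phin := by
      rw [hPhin2, hPhin]; exact Summable.tsum_le_tsum hba hsb hsa
    have h3 : Phin - EK ≤ 2 / (n : ℝ) * Phin := by
      have := abs_le.mp h1
      have h4 : 2 / (n : ℝ) * Phin2 ≤ 2 / (n : ℝ) * Phin :=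
        mul_le_mul_of_nonneg_left h2 (by positivity)
      linarith [this.2]
    nlinarith
end

section
/- For each fixed integer r ≥ 1 there exists a constant c > 0 (depending only on r) such that for every integer n ≥ 1, |E[K_{n,r}] − Φ_{n,r}| ≤ (c/n) · max{ Φ_{n,r}, Φ_{n,r+2} }, where E[K_{n,r}] = Σ_{j≥1} C(n,r) p_j^r (1−p_j)^{n−r}. -/
noncomputable def C1 (r : ℕ) : ℝ :=
  ((r : ℝ) * Real.exp r + (r : ℝ) ^ 2 + 1) * ((r : ℝ) + 1) * ((r : ℝ) + 2)

lemma C1_pos (r : ℕ) : 0 < C1 r := by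
  unfold C1
  have := Real.exp_pos (r : ℝ)
  have : (0:ℝ) ≤ (r:ℝ) := Nat.cast_nonneg r
  positivity

lemma C1_ge (r : ℕ) : (r : ℝ) ≤ C1 r := by
  unfold C1
  have hE : (1:ℝ) ≤ Real.exp r := Real.one_le_exp (Nat.cast_nonneg r)
  have hr : (0:ℝ) ≤ (r:ℝ) := Nat.cast_nonneg r
  have h1 : (r:ℝ) ≤ (r:ℝ) * Real.exp r + (r:ℝ)^2 + 1 := by
    nlinarith [sq_nonneg (2*(r:ℝ) - 1), mul_nonneg hr (by linarith : (0:ℝ) ≤ Real.exp r)]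
  have h0 : (0:ℝ) ≤ (r:ℝ) * Real.exp r + (r:ℝ)^2 + 1 := by positivity
  nlinarith [mul_nonneg h0 hr, mul_nonneg (mul_nonneg h0 hr) hr]

lemma descFactorial_ge (n : ℕ) : ∀ r : ℕ, r ≤ n →
    (n:ℝ) ^ r * ((n:ℝ) - (r:ℝ) ^ 2) ≤ (n.descFactorial r : ℝ) * (n:ℝ) := by
  intro r
  induction r with
  | zero => intro _; simp
  | succ r ih =>
    intro hrn
    have hr : r ≤ n := Nat.le_of_succ_le hrn
    have ihr := ih hr
    have hD : ((n.descFactorial r : ℕ) : ℝ) ≤ (n:ℝ) ^ r := by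
      exact_mod_cast Nat.descFactorial_le_pow n r
    have hcast : ((n.descFactorial (r+1) : ℕ) : ℝ) = ((n:ℝ) - (r:ℝ)) * (n.descFactorial r : ℝ) := by
      rw [Nat.descFactorial_succ]
      push_cast [Nat.cast_sub hr]
      ring
    have hNr : (0:ℝ) ≤ (n:ℝ) - (r:ℝ) := by
      have : (r:ℝ) ≤ (n:ℝ) := by exact_mod_cast hr
      linarith
    have hN1 : (1:ℝ) ≤ (n:ℝ) := by
      have : 1 ≤ n := Nat.one_le_of_lt (Nat.lt_of_lt_of_le (Nat.lt_succ_self r) hrn)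
      exact_mod_cast this
    have hpow : (0:ℝ) < (n:ℝ) ^ r := pow_pos (by linarith) r
    rw [hcast, pow_succ]
    push_cast
    have hD0 : (0:ℝ) ≤ (n.descFactorial r : ℝ) := Nat.cast_nonneg _
    nlinarith [mul_le_mul_of_nonneg_left ihr hNr,
      mul_nonneg hpow.le (show (0:ℝ) ≤ ((r:ℝ)+1)*(n:ℝ) + (r:ℝ)^3 by positivity)]

lemma alg_le (b p N q E : ℝ) (hb : 0 ≤ b) (hN : 0 < N) (hq : 0 ≤ q) (hE : 1 ≤ E)
    (hp : 0 ≤ p) :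
    b * (q^2/N + N*p^2 + q*E*p) ≤
      (q*E + q^2 + 1) * ((q+1)*(q+2)) / N * (b + b*(N*p)^2/((q+1)*(q+2))) := by
  have hE0 : (0:ℝ) ≤ E := by linarith
  have hQ : (0:ℝ) < (q+1)*(q+2) := by nlinarith
  rw [← sub_nonneg]
  have key : (q*E + q^2 + 1) * ((q+1)*(q+2)) / N * (b + b*(N*p)^2/((q+1)*(q+2)))
      - b * (q^2/N + N*p^2 + q*E*p)
      = (b * ((q*E+q^2+1)*((q+1)*(q+2)) + (q*E+q^2+1)*(N*p)^2)
          - b * (q^2 + (N*p)^2 + q*E*(N*p))) / N := by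
    field_simp
  rw [key]
  apply div_nonneg _ (by positivity)
  have hy : (0:ℝ) ≤ N*p := mul_nonneg hN.le hp
  have hK0 : (0:ℝ) ≤ q*E+q^2+1 := by nlinarith [mul_nonneg hq hE0, sq_nonneg q]
  have hQ2 : (0:ℝ) ≤ (q+1)*(q+2) - 2 := by nlinarith [sq_nonneg q]
  have ht2 : (0:ℝ) ≤ (q*E+q^2+1) * ((q+1)*(q+2) - 2) := mul_nonneg hK0 hQ2
  have hmain : q^2 + (N*p)^2 + q*E*(N*p) ≤
      (q*E+q^2+1)*((q+1)*(q+2)) + (q*E+q^2+1)*(N*p)^2 := by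
    nlinarith [mul_nonneg (mul_nonneg hq hE0) (sq_nonneg (N*p - 1)), ht2,
      mul_nonneg (mul_nonneg hq hE0) (sq_nonneg (N*p)),
      mul_nonneg (mul_nonneg hq hq) (sq_nonneg (N*p)),
      mul_nonneg hq hE0, mul_nonneg hq hq]
  nlinarith [mul_le_mul_of_nonneg_left hmain hb]

set_option maxHeartbeats 2000000 in
lemma key_term (r n : ℕ) (hr : 1 ≤ r) (hn : 1 ≤ n) (p : ℝ) (hp0 : 0 ≤ p) (hp1 : p ≤ 1) :
    |(n.choose r : ℝ) * p ^ r * (1 - p) ^ (n - r) -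
        ((n : ℝ) * p) ^ r * Real.exp (-((n : ℝ) * p)) / (Nat.factorial r)| ≤
      C1 r / (n : ℝ) *
        (((n : ℝ) * p) ^ r * Real.exp (-((n : ℝ) * p)) / (Nat.factorial r) +
          ((n : ℝ) * p) ^ (r + 2) * Real.exp (-((n : ℝ) * p)) / (Nat.factorial (r + 2))) := by
  have hN0 : (0:ℝ) < (n:ℝ) := by exact_mod_cast hn
  have hx0 : (0:ℝ) ≤ (n:ℝ) * p := mul_nonneg hN0.le hp0
  have hE0 : (0:ℝ) < Real.exp (-((n:ℝ)*p)) := Real.exp_pos _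
  have hb0 : (0:ℝ) ≤ ((n : ℝ) * p) ^ r * Real.exp (-((n : ℝ) * p)) / (Nat.factorial r) := by
    positivity
  have hφ0 : (0:ℝ) ≤ ((n : ℝ) * p) ^ (r+2) * Real.exp (-((n : ℝ) * p)) / (Nat.factorial (r+2)) := by
    positivity
  rcases lt_or_ge n r with hnr | hrn
  · -- n < r : choose = 0
    rw [Nat.choose_eq_zero_of_lt hnr]
    have hC : (1:ℝ) ≤ C1 r / (n:ℝ) := by
      rw [le_div_iff₀ hN0]
      have h1 : (n:ℝ) ≤ (r:ℝ) := by exact_mod_cast hnr.le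
      have := C1_ge r
      linarith
    rw [Nat.cast_zero, zero_mul, zero_mul, zero_sub, abs_neg,
      abs_of_nonneg hb0]
    nlinarith [mul_le_mul_of_nonneg_right hC (add_nonneg hb0 hφ0)]
  · -- r ≤ n
    set x : ℝ := (n:ℝ) * p with hxdef
    have hNr0 : (0:ℝ) < (n:ℝ)^r := pow_pos hN0 r
    have hfac0 : (0:ℝ) < ((Nat.factorial r : ℕ) : ℝ) := by exact_mod_cast r.factorial_pos
    have h1p0 : (0:ℝ) ≤ 1 - p := by linarith
    have hnrcast : ((n - r : ℕ) : ℝ) = (n:ℝ) - (r:ℝ) := by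
      push_cast [Nat.cast_sub hrn]; ring
    set A : ℝ := (n.descFactorial r : ℝ) / (n:ℝ)^r with hAdef
    set B : ℝ := (1 - p)^(n - r) * Real.exp x with hBdef
    set b : ℝ := x ^ r * Real.exp (-x) / ((Nat.factorial r : ℕ) : ℝ) with hbdef
    have hdesc : ((n.descFactorial r) : ℝ) = ((Nat.factorial r : ℕ) : ℝ) * (n.choose r : ℝ) := by
      exact_mod_cast Nat.descFactorial_eq_factorial_mul_choose n r
    have key_eq : (n.choose r : ℝ) * p ^ r * (1 - p) ^ (n - r) = b * A * B := by
      rw [hbdef, hAdef, hBdef, hdesc, hxdef, mul_pow, Real.exp_neg]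
      have hexppos := Real.exp_pos ((n:ℝ)*p)
      field_simp
    have hA1 : A ≤ 1 := by
      rw [hAdef, div_le_one hNr0]
      exact_mod_cast Nat.descFactorial_le_pow n r
    have hA0 : 0 ≤ A := by rw [hAdef]; positivity
    have h1A : 1 - A ≤ (r:ℝ)^2 / (n:ℝ) := by
      have h := descFactorial_ge n r hrn
      have heq : 1 - A = ((n:ℝ)^r - (n.descFactorial r : ℝ))/(n:ℝ)^r := by
        rw [hAdef]; field_simp
      rw [heq, div_le_div_iff₀ hNr0 hN0]
      nlinarith [h]
    have hB0 : 0 ≤ B := by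
      rw [hBdef]
      exact mul_nonneg (pow_nonneg h1p0 _) (Real.exp_pos x).le
    have hexp1p : 1 - p ≤ Real.exp (-p) := by nlinarith [Real.add_one_le_exp (-p)]
    have hBle : B ≤ Real.exp ((r:ℝ) * p) := by
      have h1 : (1-p)^(n-r) ≤ Real.exp (-p) ^ (n-r) := pow_le_pow_left₀ h1p0 hexp1p _
      have h2 : Real.exp (-p) ^ (n - r) = Real.exp (((n-r:ℕ):ℝ) * (-p)) :=
        (Real.exp_nat_mul _ _).symm
      have h3 : B ≤ Real.exp (((n-r:ℕ):ℝ) * (-p)) * Real.exp x := by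
        rw [hBdef]
        exact mul_le_mul_of_nonneg_right (h1.trans_eq h2) (Real.exp_pos x).le
      have h4 : Real.exp (((n-r:ℕ):ℝ) * (-p)) * Real.exp x = Real.exp ((r:ℝ) * p) := by
        rw [← Real.exp_add, hnrcast, hxdef]
        ring_nf
      linarith [h3, le_of_eq h4]
    have hBge : 1 - (n:ℝ) * p^2 ≤ B := by
      have s3 : 1 - (n:ℝ)*p^2 ≤ (1 - p^2)^n := by
        have hber := one_add_mul_le_pow (show (-2:ℝ) ≤ -p^2 by nlinarith [sq_nonneg p]) n
        calc 1 - (n:ℝ)*p^2 = 1 + (n:ℝ)*(-p^2) := by ring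
        _ ≤ (1 + -p^2)^n := hber
        _ = (1 - p^2)^n := by ring_nf
      have s2 : (1 - p^2)^n ≤ ((1-p) * Real.exp p)^n := by
        apply pow_le_pow_left₀ (by nlinarith)
        nlinarith [Real.add_one_le_exp p, Real.exp_pos p]
      have s1 : ((1-p) * Real.exp p)^n = (1-p)^n * Real.exp x := by
        rw [mul_pow, hxdef, ← Real.exp_nat_mul]
      have s0 : (1-p)^n ≤ (1-p)^(n-r) := pow_le_pow_of_le_one h1p0 (by linarith) (Nat.sub_le n r)
      have s0' : (1-p)^n * Real.exp x ≤ B := by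
        rw [hBdef]
        exact mul_le_mul_of_nonneg_right s0 (Real.exp_pos x).le
      calc 1 - (n:ℝ)*p^2 ≤ (1-p^2)^n := s3
      _ ≤ ((1-p) * Real.exp p)^n := s2
      _ = (1-p)^n * Real.exp x := s1
      _ ≤ B := s0'
    have hrp0 : (0:ℝ) ≤ (r:ℝ)*p := mul_nonneg (Nat.cast_nonneg r) hp0
    have hU : A * B - 1 ≤ (r:ℝ) * Real.exp r * p := by
      have h1 : A * B ≤ B := by nlinarith [mul_nonneg hB0 (by linarith : (0:ℝ) ≤ 1 - A)]
      have h4 : Real.exp (-((r:ℝ)*p)) * Real.exp ((r:ℝ)*p) = 1 := by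
        rw [← Real.exp_add]; simp
      have h2 : Real.exp ((r:ℝ)*p) - 1 ≤ ((r:ℝ)*p) * Real.exp ((r:ℝ)*p) := by
        nlinarith [Real.add_one_le_exp (-((r:ℝ)*p)), Real.exp_pos ((r:ℝ)*p)]
      have h5 : Real.exp ((r:ℝ)*p) ≤ Real.exp (r:ℝ) := by
        rw [Real.exp_le_exp]
        nlinarith [(Nat.cast_nonneg r : (0:ℝ) ≤ (r:ℝ))]
      nlinarith [hBle, mul_le_mul_of_nonneg_left h5 hrp0]
    have hL : 1 - A * B ≤ (r:ℝ)^2/(n:ℝ) + (n:ℝ)*p^2 := by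
      rcases le_or_gt B 1 with hB1 | hB1
      · nlinarith [mul_nonneg (by linarith : (0:ℝ) ≤ 1 - A) (by linarith : (0:ℝ) ≤ 1 - B),
          hBge, h1A]
      · nlinarith [mul_nonneg hA0 (by linarith : (0:ℝ) ≤ B - 1), h1A,
          mul_nonneg hN0.le (sq_nonneg p)]
    have hEr0 : (0:ℝ) ≤ (r:ℝ) * Real.exp r * p :=
      mul_nonneg (mul_nonneg (Nat.cast_nonneg r) (Real.exp_pos _).le) hp0
    have hrsq : (0:ℝ) ≤ (r:ℝ)^2/(n:ℝ) := by positivity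
    have hnp2 : (0:ℝ) ≤ (n:ℝ)*p^2 := mul_nonneg hN0.le (sq_nonneg p)
    have habs : |A*B - 1| ≤ (r:ℝ)^2/(n:ℝ) + (n:ℝ)*p^2 + (r:ℝ)*Real.exp r * p := by
      rw [abs_le]; constructor
      · linarith
      · linarith
    rw [key_eq]
    have heq2 : b * A * B - b = b * (A*B - 1) := by ring
    rw [heq2, abs_mul, abs_of_nonneg hb0]
    have hQpos : (0:ℝ) < ((r:ℝ)+1) * ((r:ℝ)+2) := by positivity
    have hφeq : x^(r+2) * Real.exp (-x) / ((Nat.factorial (r+2) : ℕ) : ℝ)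
        = b * ((n:ℝ)*p)^2 / (((r:ℝ)+1) * ((r:ℝ)+2)) := by
      have hfac2 : ((Nat.factorial (r+2) : ℕ) : ℝ)
          = ((r:ℝ)+2) * (((r:ℝ)+1) * ((Nat.factorial r : ℕ) : ℝ)) := by
        push_cast [Nat.factorial_succ]
        ring
      rw [hbdef, hfac2, pow_add, ← hxdef]
      field_simp
    rw [hφeq]
    have hKQ : C1 r = ((r:ℝ)*Real.exp r + (r:ℝ)^2 + 1) * (((r:ℝ)+1)*((r:ℝ)+2)) := by
      unfold C1; ring
    have hE1 : (1:ℝ) ≤ Real.exp (r:ℝ) := Real.one_le_exp (Nat.cast_nonneg r)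
    have hq0 : (0:ℝ) ≤ (r:ℝ) := Nat.cast_nonneg r
    calc b * |A * B - 1|
        ≤ b * ((r:ℝ)^2/(n:ℝ) + (n:ℝ)*p^2 + (r:ℝ)*Real.exp r * p) :=
          mul_le_mul_of_nonneg_left habs hb0
      _ ≤ C1 r / (n:ℝ) * (b + b * ((n:ℝ)*p)^2 / (((r:ℝ)+1) * ((r:ℝ)+2))) := by
          rw [hKQ]
          exact alg_le b p (n:ℝ) (r:ℝ) (Real.exp (r:ℝ)) hb0 hN0 hq0 hE1 hp0

/-- For each fixed `r ≥ 1` there is a constant `c > 0` depending only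
on `r` such that for every sequence `(p_j)` in `[0,1]` with `Σ_j p_j < ∞` and every
`n ≥ 1`, `|E[K_{n,r}] - Φ_{n,r}| ≤ (c/n) max{Φ_{n,r}, Φ_{n,r+2}}`, where
`E[K_{n,r}] = Σ_j C(n,r) p_j^r (1-p_j)^{n-r}` and
`Φ_{n,r} = Σ_j (n p_j)^r e^{-n p_j}/r!`. -/
theorem expected_K_nr_Phi_nr_approximation
    (r : ℕ) (hr : 1 ≤ r) :
    ∃ c : ℝ, 0 < c ∧
      ∀ (p : ℕ → ℝ), (∀ j, p j ∈ Set.Icc (0 : ℝ) 1) → Summable p →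
        ∀ n : ℕ, 1 ≤ n →
          |(∑' j, (n.choose r : ℝ) * p j ^ r * (1 - p j) ^ (n - r)) -
              (∑' j, ((n : ℝ) * p j) ^ r * Real.exp (-((n : ℝ) * p j)) / (Nat.factorial r))| ≤
            c / (n : ℝ) *
              max (∑' j, ((n : ℝ) * p j) ^ r * Real.exp (-((n : ℝ) * p j)) / (Nat.factorial r))
                (∑' j, ((n : ℝ) * p j) ^ (r + 2) * Real.exp (-((n : ℝ) * p j)) /
                  (Nat.factorial (r + 2))) := by
  refine ⟨2 * C1 r, by linarith [C1_pos r], ?_⟩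
  intro p hp hsum n hn
  have hp0 : ∀ j, 0 ≤ p j := fun j => (hp j).1
  have hp1 : ∀ j, p j ≤ 1 := fun j => (hp j).2
  have hN0 : (0:ℝ) < (n:ℝ) := by exact_mod_cast hn
  have hexp1 : ∀ j, Real.exp (-((n:ℝ) * p j)) ≤ 1 := by
    intro j
    rw [← Real.exp_zero]
    exact Real.exp_le_exp.mpr (by nlinarith [hp0 j, hN0.le])
  -- summability of the three series
  have hf : Summable (fun j => (n.choose r : ℝ) * p j ^ r * (1 - p j) ^ (n - r)) := by
    apply Summable.of_nonneg_of_le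
      (fun j => mul_nonneg (mul_nonneg (Nat.cast_nonneg _) (pow_nonneg (hp0 j) r))
        (pow_nonneg (by linarith [hp1 j]) _))
      (fun j => ?_) (hsum.mul_left ((n.choose r : ℝ)))
    have b1 : p j ^ r ≤ p j := pow_le_of_le_one (hp0 j) (hp1 j) (by omega)
    have b2 : (1 - p j) ^ (n - r) ≤ 1 := pow_le_one₀ (by linarith [hp1 j]) (by linarith [hp0 j])
    calc (n.choose r : ℝ) * p j ^ r * (1 - p j) ^ (n - r)
        ≤ (n.choose r : ℝ) * p j ^ r * 1 := by
          exact mul_le_mul_of_nonneg_left b2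
            (mul_nonneg (Nat.cast_nonneg _) (pow_nonneg (hp0 j) r))
      _ = (n.choose r : ℝ) * p j ^ r := mul_one _
      _ ≤ (n.choose r : ℝ) * p j := mul_le_mul_of_nonneg_left b1 (Nat.cast_nonneg _)
  have hbound : ∀ (s : ℕ) , 1 ≤ s → Summable
      (fun j => ((n:ℝ) * p j) ^ s * Real.exp (-((n:ℝ) * p j)) / (Nat.factorial s)) := by
    intro s hs
    apply Summable.of_nonneg_of_le (fun j => by
        have h1 : (0:ℝ) ≤ (n:ℝ) * p j := mul_nonneg hN0.le (hp0 j)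
        positivity) (fun j => ?_)
      ((hsum.mul_left ((n:ℝ)^s)).div_const ((Nat.factorial s : ℕ) : ℝ))
    have hfacpos : (0:ℝ) < ((Nat.factorial s : ℕ) : ℝ) := by exact_mod_cast s.factorial_pos
    have e2 : ((n:ℝ) * p j) ^ s ≤ (n:ℝ)^s * p j := by
      rw [mul_pow]
      exact mul_le_mul_of_nonneg_left
        (pow_le_of_le_one (hp0 j) (hp1 j) (by omega)) (pow_nonneg hN0.le s)
    have e3 : ((n:ℝ) * p j) ^ s * Real.exp (-((n:ℝ) * p j)) ≤ (n:ℝ)^s * p j := by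
      calc ((n:ℝ) * p j) ^ s * Real.exp (-((n:ℝ) * p j))
          ≤ ((n:ℝ) * p j) ^ s * 1 :=
            mul_le_mul_of_nonneg_left (hexp1 j) (pow_nonneg (mul_nonneg hN0.le (hp0 j)) s)
        _ = ((n:ℝ) * p j) ^ s := mul_one _
        _ ≤ (n:ℝ)^s * p j := e2
    exact div_le_div_of_nonneg_right e3 hfacpos.le |>.trans_eq rfl
  have hg := hbound r hr
  have hh := hbound (r+2) (by omega)
  have hterm : ∀ j,
      |(n.choose r : ℝ) * p j ^ r * (1 - p j) ^ (n - r) -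
        ((n:ℝ) * p j) ^ r * Real.exp (-((n:ℝ) * p j)) / (Nat.factorial r)| ≤
      C1 r / (n:ℝ) *
        (((n:ℝ) * p j) ^ r * Real.exp (-((n:ℝ) * p j)) / (Nat.factorial r) +
         ((n:ℝ) * p j) ^ (r+2) * Real.exp (-((n:ℝ) * p j)) / (Nat.factorial (r+2))) :=
    fun j => key_term r n hr hn (p j) (hp0 j) (hp1 j)
  have hfg : Summable (fun j => (n.choose r : ℝ) * p j ^ r * (1 - p j) ^ (n - r) -
      ((n:ℝ) * p j) ^ r * Real.exp (-((n:ℝ) * p j)) / (Nat.factorial r)) := hf.sub hg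
  rw [← Summable.tsum_sub hf hg]
  have h1 : |∑' j, ((n.choose r : ℝ) * p j ^ r * (1 - p j) ^ (n - r) -
      ((n:ℝ) * p j) ^ r * Real.exp (-((n:ℝ) * p j)) / (Nat.factorial r))| ≤
      ∑' j, |(n.choose r : ℝ) * p j ^ r * (1 - p j) ^ (n - r) -
      ((n:ℝ) * p j) ^ r * Real.exp (-((n:ℝ) * p j)) / (Nat.factorial r)| := by
    have := norm_tsum_le_tsum_norm (f := fun j =>
      (n.choose r : ℝ) * p j ^ r * (1 - p j) ^ (n - r) -
      ((n:ℝ) * p j) ^ r * Real.exp (-((n:ℝ) * p j)) / (Nat.factorial r))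
      (by simpa [Real.norm_eq_abs] using hfg.abs)
    simpa [Real.norm_eq_abs] using this
  have h2 : ∑' j, |(n.choose r : ℝ) * p j ^ r * (1 - p j) ^ (n - r) -
      ((n:ℝ) * p j) ^ r * Real.exp (-((n:ℝ) * p j)) / (Nat.factorial r)| ≤
      ∑' j, C1 r / (n:ℝ) *
        (((n:ℝ) * p j) ^ r * Real.exp (-((n:ℝ) * p j)) / (Nat.factorial r) +
         ((n:ℝ) * p j) ^ (r+2) * Real.exp (-((n:ℝ) * p j)) / (Nat.factorial (r+2))) :=
    Summable.tsum_le_tsum hterm hfg.abs ((hg.add hh).mul_left _)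
  have h3 : ∑' j, C1 r / (n:ℝ) *
        (((n:ℝ) * p j) ^ r * Real.exp (-((n:ℝ) * p j)) / (Nat.factorial r) +
         ((n:ℝ) * p j) ^ (r+2) * Real.exp (-((n:ℝ) * p j)) / (Nat.factorial (r+2)))
      = C1 r / (n:ℝ) *
        ((∑' j, ((n:ℝ) * p j) ^ r * Real.exp (-((n:ℝ) * p j)) / (Nat.factorial r)) +
         (∑' j, ((n:ℝ) * p j) ^ (r+2) * Real.exp (-((n:ℝ) * p j)) / (Nat.factorial (r+2)))) := by
    rw [tsum_mul_left, Summable.tsum_add hg hh]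
  have hC0 : (0:ℝ) ≤ C1 r / (n:ℝ) := div_nonneg (C1_pos r).le hN0.le
  set G := ∑' j, ((n:ℝ) * p j) ^ r * Real.exp (-((n:ℝ) * p j)) / (Nat.factorial r) with hG
  set H := ∑' j, ((n:ℝ) * p j) ^ (r+2) * Real.exp (-((n:ℝ) * p j)) / (Nat.factorial (r+2)) with hH
  have h4 : C1 r / (n:ℝ) * (G + H) ≤ 2 * C1 r / (n:ℝ) * max G H := by
    have g1 : G ≤ max G H := le_max_left _ _
    have g2 : H ≤ max G H := le_max_right _ _
    have := mul_le_mul_of_nonneg_left (add_le_add g1 g2) hC0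
    calc C1 r / (n:ℝ) * (G + H) ≤ C1 r / (n:ℝ) * (max G H + max G H) := this
      _ = 2 * C1 r / (n:ℝ) * max G H := by ring
  calc |∑' j, ((n.choose r : ℝ) * p j ^ r * (1 - p j) ^ (n - r) -
      ((n:ℝ) * p j) ^ r * Real.exp (-((n:ℝ) * p j)) / (Nat.factorial r))|
      ≤ ∑' j, |(n.choose r : ℝ) * p j ^ r * (1 - p j) ^ (n - r) -
      ((n:ℝ) * p j) ^ r * Real.exp (-((n:ℝ) * p j)) / (Nat.factorial r)| := h1
    _ ≤ ∑' j, C1 r / (n:ℝ) *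
        (((n:ℝ) * p j) ^ r * Real.exp (-((n:ℝ) * p j)) / (Nat.factorial r) +
         ((n:ℝ) * p j) ^ (r+2) * Real.exp (-((n:ℝ) * p j)) / (Nat.factorial (r+2))) := h2
    _ = C1 r / (n:ℝ) * (G + H) := h3
    _ ≤ 2 * C1 r / (n:ℝ) * max G H := h4
end

section
/- Let (p_j)_{j≥1} be regularly varying with index α ∈ (0,1). Then for every integer r ≥ 1, the expected number of features observed exactly r times in a sample of size n satisfies E[K_{n,r}] ≃ (α Γ(r−α)/r!) · n^α ℓ(n) as n → ∞. -/
open Filter Topology MeasureTheory Set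
open scoped ENNReal NNReal

namespace RV16


noncomputable def N (p : ℕ → ℝ) (x : ℝ) : ℝ := (Nat.card {j | x ≤ p j} : ℝ)

lemma finite_above {p : ℕ → ℝ} (hsum : Summable p) {x : ℝ} (hx : 0 < x) :
    {j | x ≤ p j}.Finite := by
  have h := hsum.tendsto_atTop_zero
  have h2 : ∀ᶠ j in atTop, p j < x := by
    have := (h.eventually (eventually_lt_nhds hx))
    simpa using this
  rcases eventually_atTop.1 h2 with ⟨m, hm⟩
  apply Set.Finite.subset (Set.finite_Iio m)
  intro j hj
  simp only [Set.mem_setOf_eq] at hj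
  by_contra hjm
  exact absurd hj (not_le.2 (hm j (not_lt.1 hjm)))

lemma N_nonneg (p : ℕ → ℝ) (x : ℝ) : 0 ≤ N p x := Nat.cast_nonneg _

lemma N_antitone {p : ℕ → ℝ} (hsum : Summable p) {x y : ℝ} (hx : 0 < x) (hxy : x ≤ y) :
    N p y ≤ N p x := by
  have : {j | y ≤ p j} ⊆ {j | x ≤ p j} := fun j hj => le_trans hxy hj
  unfold N
  exact_mod_cast Nat.card_mono (finite_above hsum hx) this

lemma N_zero_of_nonpos {p : ℕ → ℝ} (hp : ∀ j, p j ∈ Set.Icc (0:ℝ) 1) {x : ℝ} (hx : x ≤ 0) :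
    N p x = 0 := by
  have : {j | x ≤ p j} = Set.univ := by
    ext j; simp [le_trans hx (hp j).1]
  simp [N, this, Nat.card_eq_zero_of_infinite]

lemma N_zero_of_gt_one {p : ℕ → ℝ} (hp : ∀ j, p j ∈ Set.Icc (0:ℝ) 1) {x : ℝ} (hx : 1 < x) :
    N p x = 0 := by
  have : {j | x ≤ p j} = ∅ := by
    ext j; simp only [Set.mem_setOf_eq, Set.mem_empty_iff_false, iff_false, not_le]
    exact lt_of_le_of_lt (hp j).2 hx
  simp [N, this]

lemma N_eq_toReal {p : ℕ → ℝ} (hp : ∀ j, p j ∈ Set.Icc (0:ℝ) 1) (hsum : Summable p) (x : ℝ) :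
    N p x = (∑' j, (Set.Ioc (0:ℝ) (p j)).indicator (1 : ℝ → ℝ≥0∞) x).toReal := by
  rcases le_or_gt x 0 with hx | hx
  · rw [N_zero_of_nonpos hp hx]
    have : ∀ j, (Set.Ioc (0:ℝ) (p j)).indicator (1 : ℝ → ℝ≥0∞) x = 0 := by
      intro j
      apply Set.indicator_of_notMem
      simp only [Set.mem_Ioc, not_and_or, not_lt]
      exact Or.inl hx
    simp [this]
  · have hfin := finite_above hsum hx
    have hterm : ∀ j, (Set.Ioc (0:ℝ) (p j)).indicator (1 : ℝ → ℝ≥0∞) x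
        = if x ≤ p j then 1 else 0 := by
      intro j
      by_cases h : x ≤ p j
      · rw [Set.indicator_of_mem (Set.mem_Ioc.2 ⟨hx, h⟩)]; simp [h]
      · rw [Set.indicator_of_notMem (by simp [Set.mem_Ioc, h])]; simp [h]
    have : (∑' j, (Set.Ioc (0:ℝ) (p j)).indicator (1 : ℝ → ℝ≥0∞) x)
        = ∑ j ∈ hfin.toFinset, 1 := by
      simp only [hterm]
      rw [tsum_eq_sum (s := hfin.toFinset)]
      · apply Finset.sum_congr rfl
        intro j hj
        simp only [Set.Finite.mem_toFinset, Set.mem_setOf_eq] at hj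
        simp [hj]
      · intro j hj
        simp only [Set.Finite.mem_toFinset, Set.mem_setOf_eq] at hj
        simp [hj]
    rw [this]
    simp only [Finset.sum_const, nsmul_eq_mul, mul_one, N]
    rw [Nat.card_eq_card_finite_toFinset hfin]
    simp

lemma measurable_N {p : ℕ → ℝ} (hp : ∀ j, p j ∈ Set.Icc (0:ℝ) 1) (hsum : Summable p) :
    Measurable (N p) := by
  have : N p = fun x => (∑' j, (Set.Ioc (0:ℝ) (p j)).indicator (1 : ℝ → ℝ≥0∞) x).toReal := by
    funext x; exact N_eq_toReal hp hsum x
  rw [this]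
  apply Measurable.ennreal_toReal
  exact Measurable.ennreal_tsum fun j => (measurable_const.indicator measurableSet_Ioc)


section
variable {p : ℕ → ℝ} {α : ℝ} {L : ℝ → ℝ}

lemma exists_delta_pos
    (hreg : Tendsto (fun x : ℝ => N p x / (x ^ (-α) * L (1/x))) (𝓝[>] (0:ℝ)) (𝓝 1)) :
    ∃ δ : ℝ, 0 < δ ∧ ∀ x : ℝ, 0 < x → x < δ → 0 < N p x ∧ 0 < x ^ (-α) * L (1/x) := by
  have h := hreg.eventually (eventually_gt_nhds (by norm_num : (1:ℝ)/2 < 1))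
  rw [(nhdsGT_basis (0:ℝ)).eventually_iff] at h
  rcases h with ⟨δ, hδ, hδ'⟩
  refine ⟨δ, hδ, fun x hx hxδ => ?_⟩
  have hr := hδ' ⟨hx, hxδ⟩
  have hd : x ^ (-α) * L (1/x) ≠ 0 := by
    intro h0; rw [h0, div_zero] at hr; norm_num at hr
  have hdpos : 0 < x ^ (-α) * L (1/x) := by
    rcases hd.lt_or_gt with h1 | h1
    · exfalso
      have : N p x / (x ^ (-α) * L (1/x)) ≤ 0 :=
        div_nonpos_of_nonneg_of_nonpos (N_nonneg p x) h1.le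
      linarith
    · exact h1
  refine ⟨?_, hdpos⟩
  have : 0 < N p x / (x ^ (-α) * L (1/x)) := by linarith
  exact (div_pos_iff.1 this).resolve_right (fun h => absurd hdpos (not_lt.2 h.2.le)) |>.1

lemma tendsto_ratio
    (hL : ∀ c : ℝ, 0 < c → Tendsto (fun t : ℝ => L (c * t) / L t) atTop (𝓝 1))
    (hreg : Tendsto (fun x : ℝ => N p x / (x ^ (-α) * L (1/x))) (𝓝[>] (0:ℝ)) (𝓝 1))
    {c : ℝ} (hc : 0 < c) :
    Tendsto (fun x : ℝ => N p (c * x) / N p x) (𝓝[>] (0:ℝ)) (𝓝 (c ^ (-α))) := by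
  obtain ⟨δ, hδ, hδ'⟩ := exists_delta_pos hreg
  have hmul : Tendsto (fun x : ℝ => c * x) (𝓝[>] (0:ℝ)) (𝓝[>] (0:ℝ)) := by
    rw [tendsto_nhdsWithin_iff]
    constructor
    · have : Tendsto (fun x : ℝ => c * x) (𝓝 (0:ℝ)) (𝓝 (c * 0)) :=
        (continuous_const.mul continuous_id).tendsto 0
      rw [mul_zero] at this
      exact this.mono_left nhdsWithin_le_nhds
    · exact eventually_nhdsWithin_of_forall fun x hx => mul_pos hc hx
  have h1 : Tendsto (fun x : ℝ => N p (c*x) / ((c*x) ^ (-α) * L (1/(c*x)))) (𝓝[>] (0:ℝ)) (𝓝 1) :=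
    hreg.comp hmul
  have hev : ∀ᶠ x : ℝ in 𝓝[>] (0:ℝ), 0 < x ∧ x < δ ∧ c * x < δ := by
    filter_upwards [eventually_nhdsWithin_of_eventually_nhds
      (eventually_lt_nhds (show (0:ℝ) < min δ (δ/c) by positivity)),
      self_mem_nhdsWithin] with x hx hx'
    refine ⟨hx', lt_of_lt_of_le hx (min_le_left _ _), ?_⟩
    have : x < δ / c := lt_of_lt_of_le hx (min_le_right _ _)
    calc c * x < c * (δ / c) := by exact (mul_lt_mul_iff_right₀ hc).2 this
    _ = δ := by field_simp
  have h2 : Tendsto (fun x : ℝ => (x ^ (-α) * L (1/x)) / N p x) (𝓝[>] (0:ℝ)) (𝓝 1) := by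
    have h := hreg.inv₀ one_ne_zero
    rw [inv_one] at h
    apply h.congr'
    filter_upwards [hev] with x ⟨hx, hxδ, _⟩
    obtain ⟨hN, hd⟩ := hδ' x hx hxδ
    rw [inv_div]
  have h3 : Tendsto (fun x : ℝ => L (1/(c*x)) / L (1/x)) (𝓝[>] (0:ℝ)) (𝓝 1) := by
    have h := (hL (1/c) (by positivity)).comp tendsto_inv_nhdsGT_zero
    apply h.congr
    intro x
    simp only [Function.comp]
    rw [one_div, one_div, mul_inv]
    ring_nf
  have hconst : Tendsto (fun _ : ℝ => c ^ (-α)) (𝓝[>] (0:ℝ)) (𝓝 (c ^ (-α))) := tendsto_const_nhds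
  have hprod := ((h1.mul hconst).mul h3).mul h2
  rw [one_mul, mul_one, mul_one] at hprod
  apply hprod.congr'
  filter_upwards [hev] with x ⟨hx, hxδ, hcxδ⟩
  obtain ⟨hN, hd⟩ := hδ' x hx hxδ
  obtain ⟨hNc, hdc⟩ := hδ' (c*x) (mul_pos hc hx) hcxδ
  have hxp : (0:ℝ) < x ^ (-α) := Real.rpow_pos_of_pos hx _
  have hcp : (0:ℝ) < c ^ (-α) := Real.rpow_pos_of_pos hc _
  have hcxp : (0:ℝ) < (c*x) ^ (-α) := Real.rpow_pos_of_pos (mul_pos hc hx) _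
  have hLx : L (1/x) ≠ 0 := by
    intro h0; rw [h0, mul_zero] at hd; exact lt_irrefl _ hd
  have hLcx : L (1/(c*x)) ≠ 0 := by
    intro h0; rw [h0, mul_zero] at hdc; exact lt_irrefl _ hdc
  have hrpow : (c*x) ^ (-α) = c ^ (-α) * x ^ (-α) := Real.mul_rpow hc.le hx.le
  field_simp
  rw [hrpow]

end

section
variable {p : ℕ → ℝ} {α : ℝ} {L : ℝ → ℝ}


lemma potter_aux {β δ : ℝ} (hβ : 0 < β)
    (hhalf : ∀ x : ℝ, 0 < x → x < δ → N p ((1/2) * x) ≤ 2 ^ β * N p x)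
    (hN0 : ∀ x : ℝ, 0 < x → x < δ → 0 < N p x)
    (hanti : ∀ x y : ℝ, 0 < x → x ≤ y → N p y ≤ N p x) :
    ∀ x : ℝ, 0 < x → x < δ → ∀ y : ℝ, 0 < y → y ≤ 1 →
      N p (y * x) ≤ 2 ^ β * y ^ (-β) * N p x := by
  intro x hx hxδ
  have key : ∀ k : ℕ, ∀ y : ℝ, (1/2:ℝ)^(k+1) ≤ y → y ≤ 1 →
      N p (y * x) ≤ 2 ^ β * y ^ (-β) * N p x := by
    intro k
    induction k with
    | zero =>
      intro y hy1 hy2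
      have hy0 : (0:ℝ) < y := lt_of_lt_of_le (by norm_num) hy1
      have h1 : N p (y * x) ≤ N p ((1/2) * x) := by
        apply hanti _ _ (by positivity)
        have : (1/2:ℝ) ≤ y := by norm_num at hy1; linarith
        nlinarith
      have h2 : N p ((1/2) * x) ≤ 2 ^ β * N p x := hhalf x hx hxδ
      have h3 : (1:ℝ) ≤ y ^ (-β) :=
        Real.one_le_rpow_of_pos_of_le_one_of_nonpos hy0 hy2 (by linarith)
      have hNx : (0:ℝ) < N p x := hN0 x hx hxδ
      calc N p (y * x) ≤ 2 ^ β * N p x := h1.trans h2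
        _ = 2 ^ β * 1 * N p x := by ring
        _ ≤ 2 ^ β * y ^ (-β) * N p x := by
            apply mul_le_mul_of_nonneg_right _ hNx.le
            apply mul_le_mul_of_nonneg_left h3 (by positivity)
    | succ k ih =>
      intro y hy1 hy2
      have hy0 : (0:ℝ) < y := lt_of_lt_of_le (by positivity) hy1
      by_cases hc : (1/2:ℝ)^(k+1) ≤ y
      · exact ih y hc hy2
      · push_neg at hc
        have h2y1 : (1/2:ℝ)^(k+1) ≤ 2*y := by
          rw [pow_succ] at hy1; nlinarith
        have h2y2 : 2*y ≤ 1 := by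
          have : (1/2:ℝ)^(k+1) ≤ (1/2:ℝ)^1 :=
            pow_le_pow_of_le_one (by norm_num) (by norm_num) (by omega)
          simp only [pow_one] at this
          linarith
        have ihy := ih (2*y) h2y1 h2y2
        have heq : y * x = (1/2) * ((2*y) * x) := by ring
        have h2yx : 0 < (2*y)*x := by positivity
        have h2yxδ : (2*y)*x < δ := by nlinarith
        have hh := hhalf ((2*y)*x) h2yx h2yxδ
        rw [← heq] at hh
        have hNx : (0:ℝ) < N p x := hN0 x hx hxδ
        calc N p (y * x) ≤ 2 ^ β * N p ((2*y)*x) := hh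
          _ ≤ 2 ^ β * (2 ^ β * (2*y) ^ (-β) * N p x) := by
              apply mul_le_mul_of_nonneg_left ihy (by positivity)
          _ = 2 ^ β * y ^ (-β) * N p x := by
              rw [Real.mul_rpow (by norm_num) hy0.le]
              have h0 : (2:ℝ) ^ β * (2:ℝ) ^ (-β) = 1 := by
                rw [← Real.rpow_add (by norm_num : (0:ℝ) < 2)]; norm_num
              linear_combination (2 ^ β * y ^ (-β) * N p x) * h0
  intro y hy0 hy1
  obtain ⟨k, hk⟩ := exists_pow_lt_of_lt_one hy0 (by norm_num : (1/2:ℝ) < 1)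
  apply key k y _ hy1
  calc (1/2:ℝ)^(k+1) ≤ (1/2:ℝ)^k := by
        apply pow_le_pow_of_le_one (by norm_num) (by norm_num) (by omega)
    _ ≤ y := hk.le

end

noncomputable def D (r n : ℕ) (x : ℝ) : ℝ :=
  (n.choose r : ℝ) * ((r : ℝ) * x^(r-1) * (1-x)^(n-r) - ((n:ℝ) - r) * x^r * (1-x)^(n-(r+1)))

lemma continuous_D (r n : ℕ) : Continuous (D r n) := by
  unfold D; fun_prop

lemma hasDerivAt_D {r n : ℕ} (hr : 1 ≤ r) (hn : r + 1 ≤ n) (x : ℝ) :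
    HasDerivAt (fun t : ℝ => (n.choose r : ℝ) * t^r * (1-t)^(n-r)) (D r n x) x := by
  have h1 : HasDerivAt (fun t : ℝ => t^r) ((r:ℝ) * x^(r-1)) x := hasDerivAt_pow r x
  have hin : HasDerivAt (fun t : ℝ => 1 - t) (-1 : ℝ) x := by
    simpa using (hasDerivAt_id x).const_sub 1
  have h2 : HasDerivAt (fun t : ℝ => (1-t)^(n-r))
      (((n-r : ℕ):ℝ) * (1-x)^(n-r-1) * (-1)) x := by
    exact (hasDerivAt_pow (n-r) (1-x)).comp x hin
  have h3 := (h1.mul h2).const_mul ((n.choose r : ℝ))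
  convert! h3 using 1
  · funext t; simp only [Pi.mul_apply]; ring
  unfold D
  have hcast : ((n-r : ℕ):ℝ) = (n:ℝ) - r := by
    rw [Nat.cast_sub (by omega)]
  have hexp : n - r - 1 = n - (r+1) := by omega
  rw [hcast, hexp]
  ring

lemma ftc_D {r n : ℕ} (hr : 1 ≤ r) (hn : r + 1 ≤ n) {a : ℝ} (ha : 0 ≤ a) :
    ∫ t in Set.Ioc (0:ℝ) a, D r n t = (n.choose r : ℝ) * a^r * (1-a)^(n-r) := by
  rw [← intervalIntegral.integral_of_le ha]
  rw [intervalIntegral.integral_eq_sub_of_hasDerivAt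
    (fun t _ => hasDerivAt_D hr hn t) ((continuous_D r n).intervalIntegrable 0 a)]
  have : (0:ℝ)^r = 0 := zero_pow (by omega)
  simp [this]

lemma abs_D_le {r n : ℕ} (hr : 1 ≤ r) (hn : r + 1 ≤ n) {x : ℝ} (hx : x ∈ Set.Icc (0:ℝ) 1) :
    |D r n x| ≤ (n.choose r : ℝ) * ((r:ℝ) + n) := by
  obtain ⟨h0, h1⟩ := hx
  have e1 : (0:ℝ) ≤ 1 - x := by linarith
  have b1 : (r:ℝ) * x^(r-1) * (1-x)^(n-r) ≤ (r:ℝ) := by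
    have : x^(r-1) * (1-x)^(n-r) ≤ 1 := by
      apply mul_le_one₀ (pow_le_one₀ h0 h1) (by positivity) (pow_le_one₀ e1 (by linarith))
    nlinarith [this, (by positivity : (0:ℝ) ≤ (r:ℝ))]
  have b2 : ((n:ℝ) - r) * x^r * (1-x)^(n-(r+1)) ≤ (n:ℝ) := by
    have h2 : x^r * (1-x)^(n-(r+1)) ≤ 1 := by
      apply mul_le_one₀ (pow_le_one₀ h0 h1) (by positivity) (pow_le_one₀ e1 (by linarith))
    have h3 : (0:ℝ) ≤ (n:ℝ) - r := by
      have : (r:ℝ) ≤ n := by exact_mod_cast (by omega : r ≤ n)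
      linarith
    nlinarith
  have nn1 : (0:ℝ) ≤ (r:ℝ) * x^(r-1) * (1-x)^(n-r) := by positivity
  have nn2 : (0:ℝ) ≤ ((n:ℝ) - r) * x^r * (1-x)^(n-(r+1)) := by
    have : (0:ℝ) ≤ (n:ℝ) - r := by
      have : (r:ℝ) ≤ n := by exact_mod_cast (by omega : r ≤ n)
      linarith
    positivity
  unfold D
  rw [abs_mul, Nat.abs_cast]
  apply mul_le_mul_of_nonneg_left _ (Nat.cast_nonneg _)
  rw [abs_sub_comm, abs_sub_le_iff]
  constructor <;> nlinarith


lemma tsum_if_eq_N {p : ℕ → ℝ} (hsum : Summable p) {x : ℝ} (hx : 0 < x) :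
    ∑' j, (if x ≤ p j then (1:ℝ) else 0) = N p x := by
  have hfin := finite_above hsum hx
  rw [tsum_eq_sum (s := hfin.toFinset)
    (fun j hj => by simp only [Set.Finite.mem_toFinset, Set.mem_setOf_eq] at hj; simp [hj])]
  have hcongr : ∀ j ∈ hfin.toFinset, (if x ≤ p j then (1:ℝ) else 0) = 1 := fun j hj => by
    simp only [Set.Finite.mem_toFinset, Set.mem_setOf_eq] at hj; simp [hj]
  rw [Finset.sum_congr rfl hcongr]
  simp only [Finset.sum_const, nsmul_eq_mul, mul_one, N]
  rw [Nat.card_eq_card_finite_toFinset hfin]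

lemma tsum_eq_integral {p : ℕ → ℝ} (hp : ∀ j, p j ∈ Set.Icc (0:ℝ) 1) (hsum : Summable p)
    {r n : ℕ} (hr : 1 ≤ r) (hn : r + 1 ≤ n) :
    ∑' j, (n.choose r : ℝ) * p j ^ r * (1 - p j) ^ (n - r)
      = ∫ x, D r n x * N p x := by
  set C : ℝ := (n.choose r : ℝ) * ((r:ℝ) + n) with hC
  have hC0 : 0 ≤ C := by positivity
  have hmeasj : ∀ j : ℕ, AEStronglyMeasurable
      ((Set.Ioc (0:ℝ) (p j)).indicator (D r n)) volume := fun j =>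
    ((continuous_D r n).stronglyMeasurable.indicator measurableSet_Ioc).aestronglyMeasurable
  have hbound : ∀ j : ℕ, (∫⁻ x, ‖(Set.Ioc (0:ℝ) (p j)).indicator (D r n) x‖₊ ∂volume)
      ≤ ENNReal.ofReal (C * p j) := by
    intro j
    have : ∀ x : ℝ, (‖(Set.Ioc (0:ℝ) (p j)).indicator (D r n) x‖₊ : ℝ≥0∞)
        ≤ (Set.Ioc (0:ℝ) (p j)).indicator (fun _ => ENNReal.ofReal C) x := by
      intro x
      by_cases hx : x ∈ Set.Ioc (0:ℝ) (p j)
      · rw [Set.indicator_of_mem hx, Set.indicator_of_mem hx, ← enorm_eq_nnnorm, ← ofReal_norm]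
        apply ENNReal.ofReal_le_ofReal
        rw [Real.norm_eq_abs]
        exact abs_D_le hr hn ⟨hx.1.le, hx.2.trans (hp j).2⟩
      · rw [Set.indicator_of_notMem hx, Set.indicator_of_notMem hx]; simp
    calc (∫⁻ x, ‖(Set.Ioc (0:ℝ) (p j)).indicator (D r n) x‖₊ ∂volume)
        ≤ ∫⁻ x, (Set.Ioc (0:ℝ) (p j)).indicator (fun _ => ENNReal.ofReal C) x ∂volume :=
          lintegral_mono this
      _ = ENNReal.ofReal C * volume (Set.Ioc (0:ℝ) (p j)) := by
          rw [lintegral_indicator measurableSet_Ioc]; simp [mul_comm]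
      _ ≤ ENNReal.ofReal (C * p j) := by
          rw [Real.volume_Ioc, ← ENNReal.ofReal_mul hC0]
          apply ENNReal.ofReal_le_ofReal
          nlinarith [(hp j).1]
  have hne : (∑' j : ℕ, ∫⁻ x, ‖(Set.Ioc (0:ℝ) (p j)).indicator (D r n) x‖₊ ∂volume) ≠ ⊤ := by
    apply ne_top_of_le_ne_top _ (ENNReal.tsum_le_tsum hbound)
    rw [← ENNReal.ofReal_tsum_of_nonneg (fun j => by nlinarith [(hp j).1]) (hsum.mul_left C)]
    exact ENNReal.ofReal_ne_top
  have key := MeasureTheory.integral_tsum hmeasj hne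
  have hlhs : ∀ x : ℝ, (∑' j, (Set.Ioc (0:ℝ) (p j)).indicator (D r n) x)
      = D r n x * N p x := by
    intro x
    have : ∀ j : ℕ, (Set.Ioc (0:ℝ) (p j)).indicator (D r n) x
        = D r n x * (if x ∈ Set.Ioc (0:ℝ) (p j) then (1:ℝ) else 0) := by
      intro j; by_cases hx : x ∈ Set.Ioc (0:ℝ) (p j) <;> simp [hx]
    rw [tsum_congr this, tsum_mul_left]
    congr 1
    rcases le_or_gt x 0 with hx | hx
    · rw [N_zero_of_nonpos hp hx]
      have : ∀ j : ℕ, (if x ∈ Set.Ioc (0:ℝ) (p j) then (1:ℝ) else 0) = 0 := by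
        intro j
        simp only [Set.mem_Ioc, ite_eq_right_iff, and_imp]
        intro h; exact absurd h (not_lt.2 hx)
      rw [tsum_congr this]; exact tsum_zero
    · rw [← tsum_if_eq_N hsum hx]
      apply tsum_congr
      intro j
      congr 1
      simp only [Set.mem_Ioc, eq_iff_iff, and_iff_right_iff_imp]
      intro _; exact hx
  have hrhs : ∀ j : ℕ, (∫ x, (Set.Ioc (0:ℝ) (p j)).indicator (D r n) x)
      = (n.choose r : ℝ) * p j ^ r * (1 - p j) ^ (n - r) := by
    intro j
    rw [MeasureTheory.integral_indicator measurableSet_Ioc]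
    exact ftc_D hr hn (hp j).1
  rw [← funext hlhs, key, tsum_congr hrhs]


lemma choose_cast_eq {r n : ℕ} (hrn : r ≤ n) :
    (n.choose r : ℝ) * (r.factorial : ℝ) = ∏ i ∈ Finset.range r, ((n:ℝ) - i) := by
  have h1 : r.factorial * n.choose r = n.descFactorial r :=
    (Nat.descFactorial_eq_factorial_mul_choose n r).symm
  have h2 : ((n.descFactorial r : ℕ) : ℝ) = ∏ i ∈ Finset.range r, ((n:ℝ) - i) := by
    rw [Nat.descFactorial_eq_prod_range, Nat.cast_prod]
    apply Finset.prod_congr rfl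
    intro i hi
    rw [Finset.mem_range] at hi
    rw [Nat.cast_sub (by omega)]
  rw [← h2, ← h1]
  push_cast
  ring

lemma tendsto_choose_div_pow (r : ℕ) :
    Tendsto (fun n : ℕ => (n.choose r : ℝ) / (n:ℝ)^r) atTop (𝓝 (1 / r.factorial)) := by
  have hprod : Tendsto (fun n : ℕ => ∏ i ∈ Finset.range r, (1 - (i:ℝ)/n)) atTop (𝓝 1) := by
    have : Tendsto (fun n : ℕ => ∏ i ∈ Finset.range r, (1 - (i:ℝ)/n)) atTop
        (𝓝 (∏ i ∈ Finset.range r, 1)) := by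
      apply tendsto_finset_prod
      intro i _
      have := tendsto_const_div_atTop_nhds_zero_nat (i:ℝ)
      have h2 := (tendsto_const_nhds (x := (1:ℝ)) (f := atTop)).sub this
      simpa using h2
    simpa using this
  have hmain := hprod.div_const (r.factorial : ℝ)
  rw [show (1:ℝ)/r.factorial = 1/r.factorial from rfl]
  apply hmain.congr'
  filter_upwards [eventually_ge_atTop (max r 1)] with n hn
  have hrn : r ≤ n := le_trans (le_max_left _ _) hn
  have hn1 : 1 ≤ n := le_trans (le_max_right _ _) hn
  have hn0 : (0:ℝ) < n := by exact_mod_cast hn1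
  have hfact : (0:ℝ) < r.factorial := by exact_mod_cast r.factorial_pos
  have hch : (n.choose r : ℝ) = (∏ i ∈ Finset.range r, ((n:ℝ) - i)) / r.factorial := by
    rw [eq_div_iff (ne_of_gt hfact)]; exact choose_cast_eq hrn
  have hpe : ∏ i ∈ Finset.range r, (1 - (i:ℝ)/n)
      = (∏ i ∈ Finset.range r, ((n:ℝ) - i)) / (n:ℝ)^r := by
    rw [show ((n:ℝ))^r = ∏ _i ∈ Finset.range r, (n:ℝ) by
      rw [Finset.prod_const, Finset.card_range], ← Finset.prod_div_distrib]
    apply Finset.prod_congr rfl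
    intro i _
    field_simp
  rw [hpe, hch]
  ring

lemma tendsto_pow_sub (y : ℝ) (m : ℕ) :
    Tendsto (fun n : ℕ => (1 - y/n)^(n - m)) atTop (𝓝 (Real.exp (-y))) := by
  have hnum : Tendsto (fun n : ℕ => (1 + (-y)/n)^n) atTop (𝓝 (Real.exp (-y))) :=
    Real.tendsto_one_add_div_pow_exp (-y)
  have hbase : Tendsto (fun n : ℕ => (1 + (-y)/n)) atTop (𝓝 1) := by
    have := tendsto_const_div_atTop_nhds_zero_nat (-y)
    have h2 := (tendsto_const_nhds (x := (1:ℝ)) (f := atTop)).add this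
    simpa using h2
  have hden : Tendsto (fun n : ℕ => (1 + (-y)/n)^m) atTop (𝓝 1) := by
    have := hbase.pow m
    simpa using this
  have hq := hnum.div hden one_ne_zero
  rw [div_one] at hq
  apply hq.congr'
  filter_upwards [eventually_gt_atTop (max m ⌈|y|⌉₊)] with n hn
  have hnm : m ≤ n := le_of_lt (lt_of_le_of_lt (le_max_left _ _) hn)
  have hny : |y| < n := by
    have h1 : (⌈|y|⌉₊ : ℝ) < n := by exact_mod_cast lt_of_le_of_lt (le_max_right _ _) hn
    exact lt_of_le_of_lt (Nat.le_ceil _) h1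
  have hne : (1 + (-y)/n) ≠ 0 := by
    have hn0 : (0:ℝ) < n := lt_of_le_of_lt (abs_nonneg y) hny
    have : |y|/n < 1 := by rw [div_lt_one hn0]; exact hny
    have h2 : -y/n ≥ -(|y|/n) := by
      rw [neg_div]
      apply neg_le_neg
      rw [div_le_div_iff_of_pos_right hn0]  -- guess
      exact le_abs_self y
    intro h0
    nlinarith [abs_nonneg y]
  simp only [Pi.div_apply]
  rw [div_eq_mul_inv, ← pow_sub₀ _ hne hnm]
  congr 1
  ring


lemma tendsto_D_div {r : ℕ} (hr : 1 ≤ r) (y : ℝ) :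
    Tendsto (fun n : ℕ => D r n (y/(n:ℝ)) / n) atTop
      (𝓝 (((r:ℝ) * y^(r-1) - y^r) * Real.exp (-y) / r.factorial)) := by
  obtain ⟨s, rfl⟩ : ∃ s, r = s + 1 := ⟨r - 1, by omega⟩
  have hc := tendsto_choose_div_pow (s+1)
  have hd : Tendsto (fun n : ℕ => ((n:ℝ) - ((s:ℝ)+1))/n) atTop (𝓝 1) := by
    have h1 := tendsto_const_div_atTop_nhds_zero_nat ((s:ℝ)+1)
    have h2 := (tendsto_const_nhds (x := (1:ℝ)) (f := (atTop : Filter ℕ))).sub h1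
    rw [sub_zero] at h2
    apply h2.congr'
    filter_upwards [eventually_ge_atTop 1] with n hn
    have hn0 : (0:ℝ) < n := by exact_mod_cast hn
    field_simp
  have he1 := tendsto_pow_sub y (s+1)
  have he2 := tendsto_pow_sub y (s+2)
  have hc1 : Tendsto (fun n : ℕ => (((s:ℝ)+1) * y^s) * (1 - y/n)^(n-(s+1)))
      atTop (𝓝 ((((s:ℝ)+1) * y^s) * Real.exp (-y))) := tendsto_const_nhds.mul he1
  have hc2 : Tendsto (fun n : ℕ => (y^(s+1)) * (1 - y/n)^(n-(s+2)))
      atTop (𝓝 ((y^(s+1)) * Real.exp (-y))) := tendsto_const_nhds.mul he2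
  have H := (hc.mul hc1).sub ((hc.mul hd).mul hc2)
  have hval : (((s+1:ℕ):ℝ) * y^(s+1-1) - y^(s+1)) * Real.exp (-y) / (s+1).factorial
      = 1 / ((s+1).factorial : ℝ) * (((s:ℝ)+1) * y^s * Real.exp (-y))
        - 1 / ((s+1).factorial : ℝ) * 1 * (y^(s+1) * Real.exp (-y)) := by
    push_cast
    ring
  rw [hval]
  apply H.congr'
  filter_upwards [eventually_ge_atTop 1] with n hn
  have hn0 : (0:ℝ) < n := by exact_mod_cast hn
  unfold D
  simp only [Nat.add_sub_cancel]
  have hexp : n - (s + 1 + 1) = n - (s+2) := by omega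
  rw [hexp, div_pow, div_pow]
  push_cast
  field_simp
  ring


lemma D_div_bound {r n : ℕ} (hr : 1 ≤ r) (hn : 2*(r+1) ≤ n) {y : ℝ} (hy : 0 < y)
    (hyn : y ≤ n) :
    |D r n (y/(n:ℝ))| / n ≤ ((r:ℝ)*y^(r-1) + y^r) * Real.exp (-(1/2)*y) / r.factorial := by
  obtain ⟨s, rfl⟩ : ∃ s, r = s + 1 := ⟨r - 1, by omega⟩
  have hn0 : (0:ℝ) < n := by
    have : 0 < n := by omega
    exact_mod_cast this
  set x := y/(n:ℝ) with hxdef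
  have hx0 : 0 < x := by positivity
  have hx1 : x ≤ 1 := by rw [hxdef, div_le_one hn0]; exact hyn
  have h1x : 0 ≤ 1 - x := by linarith
  have hfact : (0:ℝ) < (s+1).factorial := by exact_mod_cast (s+1).factorial_pos
  have hC : (n.choose (s+1) : ℝ) ≤ (n:ℝ)^(s+1) / (s+1).factorial := by
    rw [le_div_iff₀ hfact]
    have h1 := Nat.descFactorial_le_pow n (s+1)
    have h2 := Nat.descFactorial_eq_factorial_mul_choose n (s+1)
    calc (n.choose (s+1):ℝ) * (s+1).factorial = (((s+1).factorial * n.choose (s+1) : ℕ):ℝ) := by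
          push_cast; ring
      _ = ((n.descFactorial (s+1) : ℕ):ℝ) := by rw [← h2]
      _ ≤ ((n^(s+1) : ℕ):ℝ) := by exact_mod_cast h1
      _ = (n:ℝ)^(s+1) := by push_cast; ring
  set E := Real.exp (-(1/2)*y) with hE
  have hE0 : 0 < E := Real.exp_pos _
  have hexp : ∀ k : ℕ, (n:ℝ)/2 ≤ k → (1-x)^k ≤ E := by
    intro k hk
    have e1 : 1 - x ≤ Real.exp (-x) := by nlinarith [Real.add_one_le_exp (-x)]
    calc (1-x)^k ≤ (Real.exp (-x))^k := pow_le_pow_left₀ h1x e1 k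
      _ = Real.exp ((-x) * k) := by rw [← Real.exp_nat_mul]; ring_nf
      _ ≤ E := by
          rw [hE]
          apply Real.exp_le_exp.2
          have hh : (1/2:ℝ)*y ≤ (y/(n:ℝ))*(k:ℝ) := by
            rw [div_mul_eq_mul_div y (n:ℝ) (k:ℝ), le_div_iff₀ hn0]
            nlinarith
          rw [hxdef]; linarith
  have hcast : (2*((s:ℝ)+1+1)) ≤ (n:ℝ) := by exact_mod_cast hn
  have hP1 : (1-x)^(n-(s+1)) ≤ E := by
    apply hexp
    have h : ((n - (s+1) : ℕ):ℝ) = (n:ℝ) - ((s:ℝ)+1) := by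
      rw [Nat.cast_sub (by omega)]; push_cast; ring
    rw [h]; linarith
  have hP2 : (1-x)^(n-(s+1+1)) ≤ E := by
    apply hexp
    have h : ((n - (s+1+1) : ℕ):ℝ) = (n:ℝ) - ((s:ℝ)+1+1) := by
      rw [Nat.cast_sub (by omega)]; push_cast; ring
    rw [h]; linarith
  have hxs : x^s = y^s / (n:ℝ)^s := by rw [hxdef, div_pow]
  have hxs1 : x^(s+1) = y^(s+1) / (n:ℝ)^(s+1) := by rw [hxdef, div_pow]
  have hnr : (0:ℝ) ≤ (n:ℝ) - (((s+1:ℕ)):ℝ) := by push_cast; linarith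
  have hinner1 : (((s+1:ℕ)):ℝ) * x^(s+1-1) * (1-x)^(n-(s+1))
      ≤ (((s:ℝ)+1) * (y^s/(n:ℝ)^s)) * E := by
    simp only [Nat.add_sub_cancel]
    rw [hxs]
    push_cast
    exact mul_le_mul_of_nonneg_left hP1 (by positivity)
  have hinner2 : ((n:ℝ) - (((s+1:ℕ)):ℝ)) * x^(s+1) * (1-x)^(n-(s+1+1))
      ≤ ((n:ℝ) * (y^(s+1)/(n:ℝ)^(s+1))) * E := by
    rw [hxs1]
    have step1 : ((n:ℝ) - (((s+1:ℕ)):ℝ)) * (y^(s+1)/(n:ℝ)^(s+1)) * (1-x)^(n-(s+1+1))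
        ≤ ((n:ℝ) * (y^(s+1)/(n:ℝ)^(s+1))) * (1-x)^(n-(s+1+1)) := by
      apply mul_le_mul_of_nonneg_right _ (by positivity)
      apply mul_le_mul_of_nonneg_right _ (by positivity)
      push_cast; linarith
    exact step1.trans (mul_le_mul_of_nonneg_left hP2 (by positivity))
  have hA := mul_le_mul hC hinner1 (by positivity) (by positivity)
  have hB := mul_le_mul hC hinner2
    (mul_nonneg (mul_nonneg hnr (by positivity)) (by positivity)) (by positivity)
  have habs : |D (s+1) n x| ≤
      (n.choose (s+1):ℝ) * ((((s+1:ℕ)):ℝ) * x^(s+1-1) * (1-x)^(n-(s+1)))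
      + (n.choose (s+1):ℝ) * (((n:ℝ) - (((s+1:ℕ)):ℝ)) * x^(s+1) * (1-x)^(n-(s+1+1))) := by
    unfold D
    rw [mul_sub]
    refine (abs_sub _ _).trans ?_
    push_cast
    rw [abs_of_nonneg (by positivity), abs_of_nonneg
      (mul_nonneg (Nat.cast_nonneg _) (mul_nonneg (mul_nonneg (by push_cast at hnr ⊢; linarith)
        (by positivity)) (by positivity)))]
  have hsum := add_le_add hA hB
  calc |D (s+1) n x| / n ≤
      (((n:ℝ)^(s+1) / (s+1).factorial) * ((((s:ℝ)+1) * (y^s/(n:ℝ)^s)) * E)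
        + ((n:ℝ)^(s+1) / (s+1).factorial) * (((n:ℝ) * (y^(s+1)/(n:ℝ)^(s+1))) * E)) / n := by
        gcongr
        exact habs.trans hsum
    _ = ((((s+1:ℕ)):ℝ)*y^(s+1-1) + y^(s+1)) * E / (s+1).factorial := by
        simp only [Nat.add_sub_cancel]
        push_cast
        field_simp
        ring


lemma int_aux {s : ℝ} (hs : -1 < s) :
    IntegrableOn (fun y : ℝ => y ^ s * Real.exp (-(1/2)*y)) (Set.Ioi 0) := by
  have h := integrableOn_rpow_mul_exp_neg_mul_rpow (p := 1) hs one_pos (by norm_num : (0:ℝ) < 1/2)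
  apply h.congr_fun _ measurableSet_Ioi
  intro y hy
  simp [Real.rpow_one]

noncomputable def bound (r : ℕ) (β : ℝ) (y : ℝ) : ℝ :=
  ((r:ℝ)*y^(r-1) + y^r) * Real.exp (-(1/2)*y) * ((2:ℝ)^β * y^(-β) + 1) / r.factorial

lemma bound_integrable {r : ℕ} (hr : 1 ≤ r) {β : ℝ} (hβ0 : 0 < β) (hβ1 : β < 1) :
    IntegrableOn (bound r β) (Set.Ioi 0) := by
  have h1 : (-1:ℝ) < (r:ℝ)-1-β := by
    have : (1:ℝ) ≤ r := by exact_mod_cast hr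
    linarith
  have h2 : (-1:ℝ) < (r:ℝ)-1 := by
    have : (1:ℝ) ≤ r := by exact_mod_cast hr
    linarith
  have h3 : (-1:ℝ) < (r:ℝ)-β := by linarith
  have h4 : (-1:ℝ) < (r:ℝ) := by linarith
  have hg : IntegrableOn (fun y : ℝ =>
      (r:ℝ)*(2:ℝ)^β/r.factorial * (y ^ ((r:ℝ)-1-β) * Real.exp (-(1/2)*y))
      + (r:ℝ)/r.factorial * (y ^ ((r:ℝ)-1) * Real.exp (-(1/2)*y))
      + (2:ℝ)^β/r.factorial * (y ^ ((r:ℝ)-β) * Real.exp (-(1/2)*y))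
      + 1/r.factorial * (y ^ ((r:ℝ)) * Real.exp (-(1/2)*y))) (Set.Ioi 0) := by
    exact (((((int_aux h1).const_mul _).add ((int_aux h2).const_mul _)).add
      ((int_aux h3).const_mul _)).add ((int_aux h4).const_mul _))
  apply hg.congr_fun _ measurableSet_Ioi
  intro y hy
  have hy0 : (0:ℝ) < y := hy
  have e1 : (y:ℝ)^(r-1) = y ^ ((r:ℝ)-1) := by
    rw [← Real.rpow_natCast y (r-1), Nat.cast_sub hr]; norm_num
  have e2 : (y:ℝ)^r = y ^ ((r:ℝ)) := by rw [← Real.rpow_natCast]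
  have e3 : y ^ ((r:ℝ)-1) * y^(-β) = y ^ ((r:ℝ)-1-β) := by
    rw [← Real.rpow_add hy0]; ring_nf
  have e4 : y ^ ((r:ℝ)) * y^(-β) = y ^ ((r:ℝ)-β) := by
    rw [← Real.rpow_add hy0]; ring_nf
  simp only [bound]
  rw [e1, e2, ← e3, ← e4]
  ring

lemma integral_limit {r : ℕ} (hr : 1 ≤ r) {α : ℝ} (hα0 : 0 < α) (hα1 : α < 1) :
    ∫ y in Set.Ioi (0:ℝ), (((r:ℝ)*y^(r-1) - y^r) * Real.exp (-y) / r.factorial) * y^(-α)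
      = α * Real.Gamma ((r:ℝ) - α) / r.factorial := by
  have hr1 : (1:ℝ) ≤ (r:ℝ) := by exact_mod_cast hr
  have hs1 : 0 < (r:ℝ) - α := by linarith
  have hs2 : 0 < (r:ℝ) + 1 - α := by linarith
  have hI1 : IntegrableOn (fun y:ℝ => Real.exp (-y) * y ^ ((r:ℝ)-α-1)) (Set.Ioi 0) :=
    Real.GammaIntegral_convergent hs1
  have hI2 : IntegrableOn (fun y:ℝ => Real.exp (-y) * y ^ ((r:ℝ)+1-α-1)) (Set.Ioi 0) :=
    Real.GammaIntegral_convergent hs2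
  have heq : EqOn (fun y : ℝ => (((r:ℝ)*y^(r-1) - y^r) * Real.exp (-y) / r.factorial) * y^(-α))
      (fun y : ℝ => (r:ℝ)/r.factorial * (Real.exp (-y) * y ^ ((r:ℝ)-α-1))
        - 1/r.factorial * (Real.exp (-y) * y ^ ((r:ℝ)+1-α-1))) (Set.Ioi 0) := by
    intro y hy
    have hy0 : (0:ℝ) < y := hy
    have e1 : (y:ℝ)^(r-1) = y ^ ((r:ℝ)-1) := by
      rw [← Real.rpow_natCast y (r-1), Nat.cast_sub hr]; norm_num
    have e2 : (y:ℝ)^r = y ^ ((r:ℝ)) := by rw [← Real.rpow_natCast]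
    have e3 : y ^ ((r:ℝ)-1) * y^(-α) = y ^ ((r:ℝ)-α-1) := by
      rw [← Real.rpow_add hy0]; ring_nf
    have e4 : y ^ ((r:ℝ)) * y^(-α) = y ^ ((r:ℝ)+1-α-1) := by
      rw [← Real.rpow_add hy0]; ring_nf
    beta_reduce
    rw [e1, e2, ← e3, ← e4]
    ring
  rw [setIntegral_congr_fun measurableSet_Ioi heq]
  rw [integral_sub (hI1.const_mul _) (hI2.const_mul _), MeasureTheory.integral_const_mul, MeasureTheory.integral_const_mul]
  rw [← Real.Gamma_eq_integral hs1, ← Real.Gamma_eq_integral hs2]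
  have hadd : Real.Gamma ((r:ℝ) + 1 - α) = ((r:ℝ) - α) * Real.Gamma ((r:ℝ) - α) := by
    rw [show (r:ℝ)+1-α = ((r:ℝ)-α)+1 by ring, Real.Gamma_add_one (ne_of_gt hs1)]
  rw [hadd]
  field_simp
  ring


lemma main_tendsto {p : ℕ → ℝ} (hp : ∀ j, p j ∈ Set.Icc (0:ℝ) 1) (hsum : Summable p)
    {α : ℝ} (hα : α ∈ Set.Ioo (0:ℝ) 1) {L : ℝ → ℝ}
    (hL : ∀ c : ℝ, 0 < c → Tendsto (fun t : ℝ => L (c * t) / L t) atTop (𝓝 1))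
    (hreg : Tendsto (fun x : ℝ => N p x / (x ^ (-α) * L (1/x))) (𝓝[>] (0:ℝ)) (𝓝 1))
    {r : ℕ} (hr : 1 ≤ r) :
    Tendsto (fun n : ℕ =>
        (∑' j, (n.choose r : ℝ) * p j ^ r * (1 - p j) ^ (n - r)) / N p (1/(n:ℝ)))
      atTop (𝓝 (α * Real.Gamma ((r:ℝ) - α) / r.factorial)) := by
  obtain ⟨hα0, hα1⟩ := hα
  set β : ℝ := (1+α)/2 with hβdef
  have hβ0 : 0 < β := by rw [hβdef]; linarith
  have hαβ : α < β := by rw [hβdef]; linarith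
  have hβ1 : β < 1 := by rw [hβdef]; linarith
  obtain ⟨δ₀, hδ₀, hpos⟩ := exists_delta_pos hreg
  have hhalf_t := tendsto_ratio hL hreg (by norm_num : (0:ℝ) < 1/2)
  have hlt : ((1:ℝ)/2) ^ (-α) < (2:ℝ) ^ β := by
    have h1 : ((1:ℝ)/2) ^ (-α) = (2:ℝ) ^ α := by
      rw [one_div, Real.inv_rpow (by norm_num), ← Real.rpow_neg (by norm_num), neg_neg]
    rw [h1]
    exact (Real.rpow_lt_rpow_left_iff (by norm_num)).2 hαβ
  have hev := hhalf_t.eventually (eventually_lt_nhds hlt)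
  rw [(nhdsGT_basis (0:ℝ)).eventually_iff] at hev
  obtain ⟨δ₁, hδ₁, hδ₁'⟩ := hev
  set δ : ℝ := min δ₀ δ₁ with hδdef
  have hδ : 0 < δ := lt_min hδ₀ hδ₁
  have hN0 : ∀ x : ℝ, 0 < x → x < δ → 0 < N p x := fun x hx hxδ =>
    (hpos x hx (lt_of_lt_of_le hxδ (min_le_left _ _))).1
  have hhalf : ∀ x : ℝ, 0 < x → x < δ → N p ((1/2)*x) ≤ 2 ^ β * N p x := by
    intro x hx hxδ
    have h1 := hδ₁' ⟨hx, lt_of_lt_of_le hxδ (min_le_right _ _)⟩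
    have hNx : 0 < N p x := hN0 x hx hxδ
    rw [div_lt_iff₀ hNx] at h1
    linarith [h1]
  have hanti : ∀ x y : ℝ, 0 < x → x ≤ y → N p y ≤ N p x :=
    fun x y hx hxy => N_antitone hsum hx hxy
  have hpotter := potter_aux hβ0 hhalf hN0 hanti
  set f : ℝ → ℝ := Set.indicator (Set.Ioi 0)
    (fun y => (((r:ℝ)*y^(r-1) - y^r) * Real.exp (-y) / r.factorial) * y^(-α)) with hfdef
  set G : ℕ → ℝ → ℝ :=
    fun n y => D r n (y/(n:ℝ)) * N p (y/(n:ℝ)) / ((n:ℝ) * N p (1/(n:ℝ))) with hGdef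
  have hbound_nonneg : ∀ y : ℝ, 0 < y → 0 ≤ bound r β y := by
    intro y hy
    unfold bound
    have h1 : (0:ℝ) ≤ (r:ℝ)*y^(r-1) + y^r := by positivity
    positivity
  have hDCT : Tendsto (fun n : ℕ => ∫ y, G n y) atTop (𝓝 (∫ y, f y)) := by
    apply tendsto_integral_filter_of_dominated_convergence
      (Set.indicator (Set.Ioi 0) (bound r β))
    · apply Eventually.of_forall
      intro n
      apply Measurable.aestronglyMeasurable
      exact (((continuous_D r n).measurable.comp (measurable_id.div_const _)).mul
        ((measurable_N hp hsum).comp (measurable_id.div_const _))).div_const _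
    · -- eventual bound
      have hev1 : ∀ᶠ n : ℕ in atTop, 1/(n:ℝ) < δ :=
        tendsto_one_div_atTop_nhds_zero_nat.eventually (eventually_lt_nhds hδ)
      filter_upwards [hev1, eventually_ge_atTop (2*(r+1))] with n hnδ hn2
      apply Eventually.of_forall
      intro y
      have hn1 : 1 ≤ n := by omega
      have hn0 : (0:ℝ) < n := by exact_mod_cast (by omega : 0 < n)
      have h1n : 0 < 1/(n:ℝ) := by positivity
      have hN1n : 0 < N p (1/(n:ℝ)) := hN0 _ h1n hnδ
      rcases le_or_gt y 0 with hy | hy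
      · have hyn : y/(n:ℝ) ≤ 0 := div_nonpos_of_nonpos_of_nonneg hy hn0.le
        have : N p (y/(n:ℝ)) = 0 := N_zero_of_nonpos hp hyn
        rw [hGdef]
        simp only [this, mul_zero, zero_div, norm_zero]
        apply Set.indicator_nonneg
        intro z hz
        exact hbound_nonneg z hz
      · rw [Set.indicator_of_mem (Set.mem_Ioi.2 hy)]
        rcases lt_or_ge (n:ℝ) y with hyn | hyn
        · have hgt : 1 < y/(n:ℝ) := by rw [lt_div_iff₀ hn0]; linarith
          have : N p (y/(n:ℝ)) = 0 := N_zero_of_gt_one hp hgt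
          rw [hGdef]
          simp only [this, mul_zero, zero_div, norm_zero]
          exact hbound_nonneg y hy
        · have hGeq : G n y = (D r n (y/(n:ℝ))/(n:ℝ)) * (N p (y/(n:ℝ))/N p (1/(n:ℝ))) := by
            rw [hGdef, div_mul_div_comm]
          have hDb := D_div_bound hr hn2 hy hyn
          have hratio : N p (y/(n:ℝ))/N p (1/(n:ℝ)) ≤ (2:ℝ)^β * y^(-β) + 1 := by
            rcases le_or_gt y 1 with hy1 | hy1
            · have hpb := hpotter (1/(n:ℝ)) h1n hnδ y hy hy1
              rw [div_le_iff₀ hN1n]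
              calc N p (y/(n:ℝ)) = N p (y * (1/(n:ℝ))) := by rw [mul_one_div]
                _ ≤ 2^β * y^(-β) * N p (1/(n:ℝ)) := hpb
                _ ≤ (2^β * y^(-β) + 1) * N p (1/(n:ℝ)) := by nlinarith
            · have hle : N p (y/(n:ℝ)) ≤ N p (1/(n:ℝ)) := by
                apply hanti _ _ h1n
                rw [div_le_div_iff₀ hn0 hn0]
                nlinarith
              have h2 : N p (y/(n:ℝ))/N p (1/(n:ℝ)) ≤ 1 := by
                rw [div_le_one hN1n]; exact hle
              have h3 : (0:ℝ) ≤ 2^β * y^(-β) := by positivity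
              linarith
          have hratio0 : 0 ≤ N p (y/(n:ℝ))/N p (1/(n:ℝ)) :=
            div_nonneg (N_nonneg p _) hN1n.le
          rw [hGeq, Real.norm_eq_abs, abs_mul, abs_div, abs_of_pos hn0,
            abs_of_nonneg hratio0]
          have hT1 : (0:ℝ) ≤ ((r:ℝ)*y^(r-1) + y^r) * Real.exp (-(1/2)*y) / r.factorial := by
            have h1 : (0:ℝ) ≤ (r:ℝ)*y^(r-1) + y^r := by positivity
            positivity
          calc |D r n (y/(n:ℝ))|/(n:ℝ) * (N p (y/(n:ℝ))/N p (1/(n:ℝ)))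
              ≤ (((r:ℝ)*y^(r-1) + y^r) * Real.exp (-(1/2)*y) / r.factorial)
                * ((2:ℝ)^β * y^(-β) + 1) := by
                apply mul_le_mul hDb hratio hratio0 hT1
            _ = bound r β y := by unfold bound; ring
    · exact (bound_integrable hr hβ0 hβ1).integrable_indicator measurableSet_Ioi
    · -- pointwise limit
      have hae : ∀ᵐ y : ℝ, y ≠ 0 := by
        rw [MeasureTheory.ae_iff]
        have : {y : ℝ | ¬ y ≠ 0} = {0} := by ext z; simp
        rw [this]
        exact Real.volume_singleton
      filter_upwards [hae] with y hy
      rcases lt_or_gt_of_ne hy with hy | hy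
      · have hGy : ∀ n : ℕ, G n y = 0 := by
          intro n
          rcases Nat.eq_zero_or_pos n with rfl | hn
          · show D r 0 (y/((0:ℕ):ℝ)) * N p (y/((0:ℕ):ℝ))
                / (((0:ℕ):ℝ) * N p (1/((0:ℕ):ℝ))) = 0
            norm_num
          · have hn0 : (0:ℝ) < n := by exact_mod_cast hn
            have : N p (y/(n:ℝ)) = 0 :=
              N_zero_of_nonpos hp (div_nonpos_of_nonpos_of_nonneg hy.le hn0.le)
            rw [hGdef]
            simp only [this, mul_zero, zero_div]
        have hfy : f y = 0 := by
          rw [hfdef, Set.indicator_of_notMem (by simp [not_lt.2 hy.le])]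
        rw [hfy]
        exact tendsto_const_nhds.congr (fun n => (hGy n).symm)
      · have h1n : Tendsto (fun n : ℕ => 1/(n:ℝ)) atTop (𝓝[>] (0:ℝ)) := by
          rw [tendsto_nhdsWithin_iff]
          constructor
          · exact tendsto_one_div_atTop_nhds_zero_nat
          · filter_upwards [eventually_ge_atTop 1] with n hn
            have : (0:ℝ) < n := by exact_mod_cast hn
            exact Set.mem_Ioi.2 (one_div_pos.2 this)
        have hNr : Tendsto (fun n : ℕ => N p (y*(1/(n:ℝ))) / N p (1/(n:ℝ))) atTop
            (𝓝 (y^(-α))) := (tendsto_ratio hL hreg hy).comp h1n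
        have hprod := (tendsto_D_div hr y).mul hNr
        have hfy : f y = (((r:ℝ)*y^(r-1) - y^r) * Real.exp (-y) / r.factorial) * y^(-α) := by
          rw [hfdef, Set.indicator_of_mem (Set.mem_Ioi.2 hy)]
        rw [hfy]
        apply hprod.congr
        intro n
        show D r n (y/(n:ℝ))/(n:ℝ) * (N p (y*(1/(n:ℝ)))/N p (1/(n:ℝ)))
            = D r n (y/(n:ℝ)) * N p (y/(n:ℝ)) / ((n:ℝ) * N p (1/(n:ℝ)))
        rw [mul_one_div, div_mul_div_comm]
  have hval : ∫ y, f y = α * Real.Gamma ((r:ℝ) - α) / r.factorial := by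
    rw [hfdef, MeasureTheory.integral_indicator measurableSet_Ioi]
    exact integral_limit hr hα0 hα1
  rw [← hval]
  apply hDCT.congr'
  have hev1 : ∀ᶠ n : ℕ in atTop, 1/(n:ℝ) < δ :=
    tendsto_one_div_atTop_nhds_zero_nat.eventually (eventually_lt_nhds hδ)
  filter_upwards [hev1, eventually_ge_atTop (2*(r+1))] with n hnδ hn2
  have hn0 : (0:ℝ) < n := by exact_mod_cast (by omega : 0 < n)
  have h1n : 0 < 1/(n:ℝ) := by positivity
  have hN1n : 0 < N p (1/(n:ℝ)) := hN0 _ h1n hnδ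
  have hEeq := tsum_eq_integral hp hsum hr (by omega : r + 1 ≤ n)
  have hint : ∫ y, G n y
      = ((n:ℝ) * ∫ x, D r n x * N p x) / ((n:ℝ) * N p (1/(n:ℝ))) := by
    show (∫ y, D r n (y/(n:ℝ)) * N p (y/(n:ℝ)) / ((n:ℝ) * N p (1/(n:ℝ))))
        = ((n:ℝ) * ∫ x, D r n x * N p x) / ((n:ℝ) * N p (1/(n:ℝ)))
    rw [MeasureTheory.integral_div]
    congr 1
    have := MeasureTheory.Measure.integral_comp_div (fun x => D r n x * N p x) (n:ℝ)
    rw [this, abs_of_pos hn0, smul_eq_mul]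
  rw [hint, ← hEeq, mul_div_mul_left _ _ (ne_of_gt hn0)]

end RV16

open Filter Topology

/-- If `(p_j)` is regularly varying with index `α ∈ (0,1)`, then for every
`r ≥ 1` the expected number of features observed exactly `r` times,
`E[K_{n,r}] = Σ_j C(n,r) p_j^r (1-p_j)^{n-r}`, satisfies
`E[K_{n,r}] ≃ (α Γ(r-α)/r!) n^α ℓ(n)` as `n → ∞`. -/
theorem expected_K_nr_regular_variation_asymptotics
    (p : ℕ → ℝ) (hp : ∀ j, p j ∈ Set.Icc (0 : ℝ) 1) (hsum : Summable p)
    (α : ℝ) (hα : α ∈ Set.Ioo (0 : ℝ) 1)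
    (L : ℝ → ℝ)
    (hL : ∀ c : ℝ, 0 < c → Tendsto (fun t : ℝ => L (c * t) / L t) atTop (𝓝 1))
    (hreg : Tendsto (fun x : ℝ => (Nat.card {j | x ≤ p j} : ℝ) / (x ^ (-α) * L (1 / x)))
      (𝓝[>] (0 : ℝ)) (𝓝 1)) :
    ∀ r : ℕ, 1 ≤ r →
      Tendsto (fun n : ℕ =>
          (∑' j, (n.choose r : ℝ) * p j ^ r * (1 - p j) ^ (n - r)) /
            (α * Real.Gamma ((r : ℝ) - α) / (Nat.factorial r) * (n : ℝ) ^ α * L n))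
        atTop (𝓝 1) := by
  intro r hr
  have hreg' : Tendsto (fun x : ℝ => RV16.N p x / (x ^ (-α) * L (1/x)))
      (𝓝[>] (0:ℝ)) (𝓝 1) := hreg
  have hmain := RV16.main_tendsto hp hsum hα hL hreg' hr
  obtain ⟨hα0, hα1⟩ := hα
  have hr1 : (1:ℝ) ≤ (r:ℝ) := by exact_mod_cast hr
  set c : ℝ := α * Real.Gamma ((r:ℝ) - α) / (r.factorial : ℝ) with hc
  have hc0 : 0 < c := by
    apply div_pos (mul_pos hα0 (Real.Gamma_pos_of_pos (by linarith)))
    exact_mod_cast r.factorial_pos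
  have h1n : Tendsto (fun n : ℕ => 1/(n:ℝ)) atTop (𝓝[>] (0:ℝ)) := by
    rw [tendsto_nhdsWithin_iff]
    constructor
    · exact tendsto_one_div_atTop_nhds_zero_nat
    · filter_upwards [eventually_ge_atTop 1] with n hn
      have : (0:ℝ) < n := by exact_mod_cast hn
      exact Set.mem_Ioi.2 (one_div_pos.2 this)
  have h2 := hreg'.comp h1n
  have h2' : Tendsto (fun n : ℕ => RV16.N p (1/(n:ℝ)) / ((n:ℝ)^α * L n)) atTop (𝓝 1) := by
    apply h2.congr'
    filter_upwards [eventually_ge_atTop 1] with n hn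
    have hn0 : (0:ℝ) < n := by exact_mod_cast hn
    have e1 : (1/(n:ℝ)) ^ (-α) = (n:ℝ)^α := by
      rw [one_div, Real.inv_rpow hn0.le, ← Real.rpow_neg hn0.le, neg_neg]
    show RV16.N p (1/(n:ℝ)) / ((1/(n:ℝ)) ^ (-α) * L (1/(1/(n:ℝ))))
        = RV16.N p (1/(n:ℝ)) / ((n:ℝ)^α * L n)
    rw [e1, one_div_one_div]
  obtain ⟨δ₀, hδ₀, hpos⟩ := RV16.exists_delta_pos hreg'
  have hcinv : Tendsto (fun _ : ℕ => c⁻¹) atTop (𝓝 c⁻¹) := tendsto_const_nhds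
  have hprod := (hmain.mul h2').mul hcinv
  rw [mul_one, mul_inv_cancel₀ (ne_of_gt hc0)] at hprod
  apply hprod.congr'
  have hev1 : ∀ᶠ n : ℕ in atTop, 1/(n:ℝ) < δ₀ :=
    tendsto_one_div_atTop_nhds_zero_nat.eventually (eventually_lt_nhds hδ₀)
  filter_upwards [hev1, eventually_ge_atTop 1] with n hnδ hn1
  have hn0 : (0:ℝ) < n := by exact_mod_cast hn1
  have hN : RV16.N p (1/(n:ℝ)) ≠ 0 :=
    ne_of_gt (hpos _ (one_div_pos.2 hn0) hnδ).1
  set En : ℝ := ∑' j, (n.choose r : ℝ) * p j ^ r * (1 - p j) ^ (n - r) with hEn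
  set Nv : ℝ := RV16.N p (1/(n:ℝ)) with hNv
  set M : ℝ := (n:ℝ)^α * L n with hM
  show En/Nv * (Nv/M) * c⁻¹ = En / (α * Real.Gamma ((r:ℝ) - α) / (r.factorial : ℝ) * (n:ℝ)^α * L n)
  have hden : α * Real.Gamma ((r:ℝ) - α) / (r.factorial : ℝ) * (n:ℝ)^α * L n = c * M := by
    rw [hc, hM]; ring
  rw [hden]
  calc En/Nv * (Nv/M) * c⁻¹ = En*(Nv⁻¹*Nv)*(M⁻¹*c⁻¹) := by
        rw [div_eq_mul_inv, div_eq_mul_inv]; ring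
    _ = En*(M⁻¹*c⁻¹) := by rw [inv_mul_cancel₀ hN, mul_one]
    _ = En/(c*M) := by rw [div_eq_mul_inv, mul_inv]; ring
end
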